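/- arXiv:2109.02397 — 10 statements merged into one kernel-verified Lean document; each statement's English description precedes it below -/
import Mathlib

section
/- Let 0 < ε < 1 and f ∈ C¹([ε,1]) with f′ > 0, and define the radial transformation Φ(x) = exp(f(|x|))·x/|x| on the annulus {ε ≤ |x| ≤ 1}. Then for every x in the annulus, trace Φ⋆[I](Φ(x)) = 1/(|x| f′(|x|)) + |x| f′(|x|). -/
open Matrix Set MeasureTheory Real
noncomputable section

abbrev E2 := EuclideanSpace ℝ (Fin 2)

/-- The Jacobian matrix of a map `f : ℝ² → ℝ²` at a point `x`. -/
noncomputable def jacM (f : E2 → E2) (x : E2) : Matrix (Fin 2) (Fin 2) ℝ :=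
  Matrix.of fun i j => fderiv ℝ f x (EuclideanSpace.single j 1) i

lemma hasFDerivAt_norm_E2 (x : E2) (hx : x ≠ 0) :
    HasFDerivAt (fun y : E2 => ‖y‖) (‖x‖⁻¹ • innerSL ℝ x) x := by
  have h1 : HasFDerivAt (fun y : E2 => (inner ℝ y y : ℝ))
      ((fderivInnerCLM ℝ (x, x)).comp ((ContinuousLinearMap.id ℝ E2).prod
        (ContinuousLinearMap.id ℝ E2))) x :=
    (hasFDerivAt_id x).inner ℝ (hasFDerivAt_id x)
  have hxx : (inner ℝ x x : ℝ) ≠ 0 := by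
    rw [real_inner_self_eq_norm_sq]
    exact pow_ne_zero 2 (norm_ne_zero_iff.mpr hx)
  have h2 := HasDerivAt.comp_hasFDerivAt (f := fun y : E2 => (inner ℝ y y : ℝ)) x
    (Real.hasDerivAt_sqrt hxx) h1
  have heq : (fun y : E2 => Real.sqrt (inner ℝ y y : ℝ)) = fun y : E2 => ‖y‖ := by
    funext y
    rw [real_inner_self_eq_norm_sq, Real.sqrt_sq (norm_nonneg y)]
  rw [Function.comp_def] at h2
  rw [heq] at h2
  refine h2.congr_fderiv ?_
  ext v
  simp [fderivInnerCLM_apply, real_inner_self_eq_norm_sq,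
    Real.sqrt_sq (norm_nonneg x), real_inner_comm x v, EuclideanSpace.norm_eq,
    Real.norm_eq_abs, sq_abs, Fin.sum_univ_two]
  ring

/-- for the radial transformation `Φ(x) = exp(f(|x|))·x/|x|` with
`f ∈ C¹([ε,1])`, `f' > 0`, one has, for every `x` with `ε ≤ |x| ≤ 1`,
`trace Φ⋆[I](Φ(x)) = 1/(|x| f'(|x|)) + |x| f'(|x|)`, where
`trace Φ⋆[I](Φ(x)) = trace(DΦᵀDΦ)/|det DΦ|`. -/
theorem statement4 (ε : ℝ) (hε : 0 < ε) (hε1 : ε < 1)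
    (f f' : ℝ → ℝ)
    (hf : ∀ r ∈ Set.Icc ε 1, HasDerivAt f (f' r) r)
    (hf'c : ContinuousOn f' (Set.Icc ε 1))
    (hf'pos : ∀ r ∈ Set.Icc ε 1, 0 < f' r)
    (Φ : E2 → E2) (hΦ : ∀ x, Φ x = Real.exp (f ‖x‖) • (‖x‖⁻¹ • x)) :
    ∀ x : E2, ε ≤ ‖x‖ → ‖x‖ ≤ 1 →
      Matrix.trace ((jacM Φ x)ᵀ * jacM Φ x) / |(jacM Φ x).det| =
        1 / (‖x‖ * f' ‖x‖) + ‖x‖ * f' ‖x‖ := by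
  intro x hx1 hx2
  set r : ℝ := ‖x‖ with hr
  have hrpos : 0 < r := lt_of_lt_of_le hε hx1
  have hrne : r ≠ 0 := hrpos.ne'
  have hxne : x ≠ 0 := fun h => hrne (by rw [hr, h, norm_zero])
  have hrmem : r ∈ Set.Icc ε 1 := ⟨hx1, hx2⟩
  -- scalar function
  set E : ℝ := Real.exp (f r) with hE
  have hEpos : 0 < E := Real.exp_pos _
  set k : ℝ := f' r with hk
  have hkpos : 0 < k := hf'pos r hrmem
  -- derivative of u t = exp (f t) * t⁻¹ at r
  have hu : HasDerivAt (fun t : ℝ => Real.exp (f t) * t⁻¹)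
      (E * k * r⁻¹ + E * (-(r ^ 2)⁻¹)) r := by
    exact ((hf r hrmem).exp).mul (hasDerivAt_inv hrne)
  -- derivative of the norm
  have hn := hasFDerivAt_norm_E2 x hxne
  -- scalar field s y = exp (f ‖y‖) * ‖y‖⁻¹
  have hs : HasFDerivAt (fun y : E2 => Real.exp (f ‖y‖) * ‖y‖⁻¹)
      ((E * k * r⁻¹ + E * (-(r ^ 2)⁻¹)) • (r⁻¹ • innerSL ℝ x)) x :=
    by have := hu.comp_hasFDerivAt x hn; exact this
  -- Φ as s • id
  have hΦ' : Φ = fun y : E2 => (Real.exp (f ‖y‖) * ‖y‖⁻¹) • y := by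
    funext y; rw [hΦ y, smul_smul]
  set a : ℝ := (E * k * r⁻¹ + E * (-(r ^ 2)⁻¹)) * r⁻¹ with ha
  set b : ℝ := E * r⁻¹ with hb
  have hD : HasFDerivAt Φ
      ((E * r⁻¹) • ContinuousLinearMap.id ℝ E2 +
        ((E * k * r⁻¹ + E * (-(r ^ 2)⁻¹)) • (r⁻¹ • innerSL ℝ x)).smulRight x) x := by
    rw [hΦ']
    exact hs.smul (hasFDerivAt_id x)
  have hfd := hD.fderiv
  -- entries of the Jacobian
  have hent : ∀ i j, jacM Φ x i j = b * (if i = j then 1 else 0) + a * (x j * x i) := by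
    intro i j
    simp only [jacM, Matrix.of_apply, hfd]
    simp only [ContinuousLinearMap.add_apply, ContinuousLinearMap.smul_apply,
      ContinuousLinearMap.id_apply, ContinuousLinearMap.smulRight_apply, innerSL_apply_apply]
    have hinner : (inner ℝ x (EuclideanSpace.single j (1:ℝ)) : ℝ) = x j := by
      simp [EuclideanSpace.inner_single_right]
    rw [PiLp.add_apply, PiLp.smul_apply, PiLp.smul_apply, hinner]
    simp only [EuclideanSpace.single_apply, smul_eq_mul, ha, hb]
    ring_nf
  have hsum : x 0 ^ 2 + x 1 ^ 2 = r ^ 2 := by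
    have := EuclideanSpace.norm_eq x
    rw [Fin.sum_univ_two] at this
    rw [hr, this, Real.sq_sqrt (by positivity)]
    simp [Real.norm_eq_abs, sq_abs]
  -- compute trace and det
  have htr : Matrix.trace ((jacM Φ x)ᵀ * jacM Φ x) =
      2 * b ^ 2 + 2 * a * b * r ^ 2 + a ^ 2 * r ^ 4 := by
    rw [Matrix.trace_fin_two]
    simp only [Matrix.mul_apply, Fin.sum_univ_two, Matrix.transpose_apply]
    rw [hent 0 0, hent 0 1, hent 1 0, hent 1 1]
    simp only [if_pos rfl]
    norm_num
    linear_combination (2*a*b + a^2*((x 0)^2 + (x 1)^2 + r^2)) * hsum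
  have hdet : (jacM Φ x).det = b ^ 2 + a * b * r ^ 2 := by
    rw [Matrix.det_fin_two]
    rw [hent 0 0, hent 0 1, hent 1 0, hent 1 1]
    norm_num
    linear_combination (a*b) * hsum
  -- simplify a, b
  have hb' : b = E / r := by rw [hb]; ring
  have habr : b + a * r ^ 2 = E * k := by
    rw [hb, ha]; field_simp; ring
  have hdetval : (jacM Φ x).det = E ^ 2 * k / r := by
    rw [hdet]
    have : b ^ 2 + a * b * r ^ 2 = b * (b + a * r ^ 2) := by ring
    rw [this, habr, hb']; field_simp
  have htrval : Matrix.trace ((jacM Φ x)ᵀ * jacM Φ x) = E ^ 2 / r ^ 2 + E ^ 2 * k ^ 2 := by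
    rw [htr]
    have : 2 * b ^ 2 + 2 * a * b * r ^ 2 + a ^ 2 * r ^ 4 = b ^ 2 + (b + a * r ^ 2) ^ 2 := by ring
    rw [this, habr, hb']; field_simp
  have hdetpos : 0 < (jacM Φ x).det := by rw [hdetval]; positivity
  rw [htrval, abs_of_pos hdetpos, hdetval]
  field_simp
end
end

section
/- Let 0 < ε < 1/2 and 1 ≤ p < ∞. Consider the energy I_p(f) = 2π ∫_ε^1 (1/(r f′(r)) + r f′(r))^p · r dr on the convex set 𝒞 = {f ∈ C¹([ε,1]) : f′ > 0, f(ε) = −log 2, f(1) = 0}. Then I_p has a unique minimizer f_p in 𝒞; f_p belongs to C^∞([ε,1]); and f_p is the unique solution in 𝒞 of the Euler–Lagrange equation ((1/(r f′(r)) + r f′(r))^{p−1}·(−1/(f′(r))² + r²))′ = 0 on [ε,1]. -/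
open Set MeasureTheory intervalIntegral Real
noncomputable section

/-- The (one-sided, within `[ε,1]`) derivative of `g`. -/
noncomputable def dW (ε : ℝ) (g : ℝ → ℝ) : ℝ → ℝ :=
  fun r => derivWithin g (Set.Icc ε 1) r

/-- The convex set `𝒞 = {f ∈ C¹([ε,1]) : f' > 0, f(ε) = -log 2, f(1) = 0}`. -/
def memC (ε : ℝ) (g : ℝ → ℝ) : Prop :=
  ContDiffOn ℝ 1 g (Set.Icc ε 1) ∧ (∀ r ∈ Set.Icc ε 1, 0 < dW ε g r) ∧
    g ε = -Real.log 2 ∧ g 1 = 0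

/-- The radial energy `I_p(f) = 2π ∫_ε^1 (1/(r f') + r f')^p r dr`. -/
noncomputable def energy (ε p : ℝ) (g : ℝ → ℝ) : ℝ :=
  2 * π * ∫ r in ε..1, (1/(r * dW ε g r) + r * dW ε g r) ^ p * r

/-- The Euler--Lagrange equation:
`((1/(r f') + r f')^(p-1)·(-1/(f')² + r²))' = 0` on `[ε,1]`. -/
def satisfiesEL (ε p : ℝ) (g : ℝ → ℝ) : Prop :=
  ∀ r ∈ Set.Icc ε 1,
    HasDerivWithinAt
      (fun s => (1/(s * dW ε g s) + s * dW ε g s) ^ (p - 1) * (-(1/(dW ε g s)^2) + s^2))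
      0 (Set.Icc ε 1) r


namespace Stmt7

/-- `ψ(u) = (1/u+u)^(p-1) (1 - 1/u²)`, so that `h'(u) = p ψ(u)` where `h(u) = (1/u+u)^p`. -/
def psi (p u : ℝ) : ℝ := (u⁻¹ + u) ^ (p-1) * (1 - (u^2)⁻¹)

def hfun (p u : ℝ) : ℝ := (u⁻¹ + u) ^ p

def psiD (p u : ℝ) : ℝ :=
  ((1 - (u^2)⁻¹) * (p-1) * (u⁻¹ + u)^(p-1-1)) * (1 - (u^2)⁻¹) + (u⁻¹ + u)^(p-1) * (2/u^3)

lemma base_pos {u : ℝ} (hu : 0 < u) : 0 < u⁻¹ + u := by positivity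

lemma hasDerivAt_base {u : ℝ} (hu : 0 < u) :
    HasDerivAt (fun v : ℝ => v⁻¹ + v) (1 - (u^2)⁻¹) u := by
  have h := (hasDerivAt_inv hu.ne').add (hasDerivAt_id u)
  exact h.congr_deriv (by ring)

lemma hasDerivAt_sq_inv {u : ℝ} (hu : 0 < u) :
    HasDerivAt (fun v : ℝ => 1 - (v^2)⁻¹) (2/u^3) u := by
  have h1 : HasDerivAt (fun v : ℝ => v^2) (2*u) u := by simpa using hasDerivAt_pow 2 u
  have h2 := (h1.inv (pow_ne_zero 2 hu.ne')).const_sub 1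
  exact h2.congr_deriv (by field_simp)

lemma hasDerivAt_rpow_base {u : ℝ} (hu : 0 < u) (q : ℝ) :
    HasDerivAt (fun v : ℝ => (v⁻¹ + v) ^ q) ((1 - (u^2)⁻¹) * q * (u⁻¹ + u)^(q-1)) u :=
  (hasDerivAt_base hu).rpow_const (Or.inl (base_pos hu).ne')

lemma hasDerivAt_psi {p u : ℝ} (hu : 0 < u) : HasDerivAt (psi p) (psiD p u) u := by
  have h := (hasDerivAt_rpow_base hu (p-1)).mul (hasDerivAt_sq_inv hu)
  unfold psi psiD
  exact h

lemma hasDerivAt_hfun {p u : ℝ} (hu : 0 < u) : HasDerivAt (hfun p) (p * psi p u) u := by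
  have h := hasDerivAt_rpow_base hu p
  unfold hfun psi
  convert h using 1
  ring

lemma psiD_pos {p u : ℝ} (hp : 1 ≤ p) (hu : 0 < u) : 0 < psiD p u := by
  have hr1 : (0:ℝ) < (u⁻¹ + u)^(p-1-1) := Real.rpow_pos_of_pos (base_pos hu) _
  have hr2 : (0:ℝ) < (u⁻¹ + u)^(p-1) := Real.rpow_pos_of_pos (base_pos hu) _
  have h1 : 0 ≤ ((1 - (u^2)⁻¹) * (p-1) * (u⁻¹ + u)^(p-1-1)) * (1 - (u^2)⁻¹) := by
    calc (0:ℝ) ≤ ((1 - (u^2)⁻¹) * (1 - (u^2)⁻¹)) * ((p-1) * (u⁻¹ + u)^(p-1-1)) :=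
        mul_nonneg (mul_self_nonneg _) (mul_nonneg (by linarith) hr1.le)
      _ = _ := by ring
  have h3 : 0 < (u⁻¹ + u)^(p-1) * (2/u^3) := mul_pos hr2 (by positivity)
  unfold psiD
  linarith

lemma contDiffAt_psi {p u : ℝ} (hu : 0 < u) : ContDiffAt ℝ (⊤ : ℕ∞) (psi p) u := by
  have hb : ContDiffAt ℝ (⊤ : ℕ∞) (fun v : ℝ => v⁻¹ + v) u :=
    ((contDiffAt_id (x := u)).inv hu.ne').add contDiffAt_id
  have h1 : ContDiffAt ℝ (⊤ : ℕ∞) (fun v : ℝ => (v⁻¹ + v) ^ (p-1)) u :=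
    hb.rpow_const_of_ne (base_pos hu).ne'
  have h2 : ContDiffAt ℝ (⊤ : ℕ∞) (fun v : ℝ => 1 - (v^2)⁻¹) u :=
    contDiffAt_const.sub (((contDiffAt_id (x := u)).pow 2).inv (pow_ne_zero 2 hu.ne'))
  exact h1.mul h2

lemma continuousOn_psi {p : ℝ} {s : Set ℝ} (hs : s ⊆ Ioi 0) : ContinuousOn (psi p) s :=
  fun u hu => ((contDiffAt_psi (hs hu)).continuousAt).continuousWithinAt

lemma strictMonoOn_psi {p : ℝ} (hp : 1 ≤ p) : StrictMonoOn (psi p) (Ioi 0) := by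
  apply strictMonoOn_of_deriv_pos (convex_Ioi 0) (continuousOn_psi le_rfl)
  intro x hx
  rw [interior_Ioi] at hx
  rw [(hasDerivAt_psi hx).deriv]
  exact psiD_pos hp hx

lemma psi_one {p : ℝ} : psi p 1 = 0 := by simp [psi]

lemma psi_le {p u : ℝ} (hp : 1 ≤ p) (hu : 0 < u) (hu1 : u ≤ 1) : psi p u ≤ 1 - (u^2)⁻¹ := by
  have hA : (1:ℝ) ≤ (u⁻¹ + u)^(p-1) := by
    have h1u : (1:ℝ) ≤ u⁻¹ := by
      rw [le_inv_comm₀ one_pos hu]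
      simpa using hu1
    have hb1 : (1:ℝ) ≤ u⁻¹ + u := by linarith
    calc (1:ℝ) = (1:ℝ)^(p-1) := (Real.one_rpow _).symm
      _ ≤ (u⁻¹ + u)^(p-1) := Real.rpow_le_rpow zero_le_one hb1 (by linarith)
  have hB : 1 - (u^2)⁻¹ ≤ 0 := by
    have h1 : (1:ℝ) ≤ (u^2)⁻¹ := by
      rw [le_inv_comm₀ one_pos (by positivity)]
      nlinarith
    linarith
  calc psi p u = (u⁻¹ + u)^(p-1) * (1 - (u^2)⁻¹) := rfl
    _ ≤ 1 * (1 - (u^2)⁻¹) := mul_le_mul_of_nonpos_right hA hB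
    _ = 1 - (u^2)⁻¹ := one_mul _

open Filter Topology

lemma exists_sol {p C : ℝ} (hp : 1 ≤ p) (hC : C ≤ 0) : ∃ u, 0 < u ∧ u ≤ 1 ∧ psi p u = C := by
  set a : ℝ := 1/(2 - C) with ha
  have h2C : (0:ℝ) < 2 - C := by linarith
  have ha0 : 0 < a := by positivity
  have ha1 : a < 1 := by
    rw [ha, div_lt_one h2C]; linarith
  have hpsia : psi p a ≤ C := by
    have h1 := psi_le hp ha0 ha1.le
    have h2 : (a^2)⁻¹ = (2-C)^2 := by
      rw [ha]; field_simp
    have h3 : 1 - (a^2)⁻¹ ≤ C := by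
      rw [h2]; nlinarith
    linarith
  have hIVT := intermediate_value_Icc ha1.le
    (continuousOn_psi (p := p) (fun x hx => lt_of_lt_of_le ha0 hx.1))
  have hCmem : C ∈ Icc (psi p a) (psi p 1) := by
    rw [psi_one]; exact ⟨hpsia, hC⟩
  obtain ⟨u, hu, hpu⟩ := hIVT hCmem
  exact ⟨u, lt_of_lt_of_le ha0 hu.1, hu.2, hpu⟩

/-- the inverse of `ψ` on `(0,1]`, defined for `C ≤ 0`. -/
def sol (p C : ℝ) : ℝ :=
  @dite _ (∃ u, 0 < u ∧ u ≤ 1 ∧ psi p u = C) (Classical.dec _) (fun h => h.choose) (fun _ => 1)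

lemma sol_spec {p C : ℝ} (hp : 1 ≤ p) (hC : C ≤ 0) :
    0 < sol p C ∧ sol p C ≤ 1 ∧ psi p (sol p C) = C := by
  have h := exists_sol hp hC
  rw [sol]
  rw [dif_pos h]
  exact h.choose_spec

lemma sol_unique {p C v : ℝ} (hp : 1 ≤ p) (hC : C ≤ 0) (hv : 0 < v) (hpsi : psi p v = C) :
    v = sol p C := by
  obtain ⟨h1, _, h3⟩ := sol_spec hp hC
  exact (strictMonoOn_psi hp).injOn hv h1 (hpsi.trans h3.symm)

lemma sol_zero {p : ℝ} (hp : 1 ≤ p) : sol p 0 = 1 :=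
  (sol_unique hp le_rfl one_pos psi_one).symm

lemma sol_lt_sol {p C₁ C₂ : ℝ} (hp : 1 ≤ p) (h12 : C₁ < C₂) (hC2 : C₂ ≤ 0) :
    sol p C₁ < sol p C₂ := by
  obtain ⟨h1, _, h3⟩ := sol_spec hp (h12.le.trans hC2)
  obtain ⟨h1', _, h3'⟩ := sol_spec hp hC2
  by_contra hcon
  push_neg at hcon
  rcases eq_or_lt_of_le hcon with heq | hlt
  · rw [heq, h3] at h3'; exact absurd h3' (ne_of_lt h12)
  · have := (strictMonoOn_psi hp) h1' h1 hlt
    rw [h3, h3'] at this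
    linarith

/-- `phi` : continuous global version of `sol`, constant `1` on `[0, ∞)`. -/
def phi (p C : ℝ) : ℝ := sol p (min C 0)

lemma phi_eq {p C : ℝ} (hC : C ≤ 0) : phi p C = sol p C := by rw [phi, min_eq_left hC]

lemma phi_pos {p : ℝ} (hp : 1 ≤ p) (C : ℝ) : 0 < phi p C := (sol_spec hp (min_le_right C 0)).1

lemma phi_le_one {p : ℝ} (hp : 1 ≤ p) (C : ℝ) : phi p C ≤ 1 := (sol_spec hp (min_le_right C 0)).2.1

lemma psi_phi {p C : ℝ} (hp : 1 ≤ p) (hC : C ≤ 0) : psi p (phi p C) = C := by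
  rw [phi_eq hC]; exact (sol_spec hp hC).2.2

lemma contDiffAt_sol {p C : ℝ} (hp : 1 ≤ p) (hC : C < 0) :
    ContDiffAt ℝ (⊤ : ℕ∞) (sol p) C := by
  obtain ⟨hu0, hu1, hpsiu⟩ := sol_spec hp hC.le
  set u := sol p C with hudef
  have hne : psiD p u ≠ 0 := (psiD_pos hp hu0).ne'
  have hcd : ContDiffAt ℝ (⊤ : ℕ∞) (psi p) u := contDiffAt_psi hu0
  have hfd : HasFDerivAt (psi p)
      (ContinuousLinearEquiv.unitsEquivAut ℝ (Units.mk0 (psiD p u) hne) : ℝ →L[ℝ] ℝ) u :=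
    (hasDerivAt_psi hu0).hasFDerivAt_equiv hne
  have hn : ((⊤ : ℕ∞) : WithTop ℕ∞) ≠ 0 := by
    simp
  have hinv : ContDiffAt ℝ (⊤ : ℕ∞) (hcd.localInverse hfd hn) (psi p u) :=
    hcd.to_localInverse hfd hn
  rw [hpsiu] at hinv
  apply hinv.congr_of_eventuallyEq
  -- sol p =ᶠ[𝓝 C] localInverse
  have hstrict := hcd.hasStrictFDerivAt' hfd hn
  have hright : ∀ᶠ y in 𝓝 (psi p u), psi p ((hcd.localInverse hfd hn) y) = y :=
    hstrict.eventually_right_inverse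
  rw [hpsiu] at hright
  have hcont : ContinuousAt (hcd.localInverse hfd hn) C := by
    have := hstrict.localInverse_continuousAt
    rwa [hpsiu] at this
  have hval : (hcd.localInverse hfd hn) C = u := by
    have := hstrict.localInverse_apply_image
    rwa [hpsiu] at this
  have hposev : ∀ᶠ y in 𝓝 C, 0 < (hcd.localInverse hfd hn) y := by
    have : Ioi (0:ℝ) ∈ 𝓝 ((hcd.localInverse hfd hn) C) := by
      rw [hval]; exact Ioi_mem_nhds hu0
    exact hcont this
  have hnegev : ∀ᶠ y in 𝓝 C, y < 0 := eventually_lt_nhds hC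
  filter_upwards [hright, hposev, hnegev] with y h1 h2 h3
  exact (sol_unique hp h3.le h2 h1).symm

lemma contDiffAt_phi {p C : ℝ} (hp : 1 ≤ p) (hC : C < 0) :
    ContDiffAt ℝ (⊤ : ℕ∞) (phi p) C := by
  apply (contDiffAt_sol hp hC).congr_of_eventuallyEq
  filter_upwards [eventually_lt_nhds hC] with y hy
  rw [phi, min_eq_left hy.le]

lemma continuous_phi {p : ℝ} (hp : 1 ≤ p) : Continuous (phi p) := by
  rw [continuous_iff_continuousAt]
  intro C
  rcases lt_trichotomy C 0 with hC | hC | hC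
  · exact (contDiffAt_phi hp hC).continuousAt
  · -- continuity at 0
    subst hC
    rw [Metric.continuousAt_iff]
    intro δ hδ
    set η : ℝ := min δ 1 / 2 with hη
    have hη0 : 0 < η := by positivity
    have hη1 : η < 1 := by
      have : min δ 1 ≤ 1 := min_le_right _ _
      rw [hη]; linarith
    have hηδ : η < δ := by
      have : min δ 1 ≤ δ := min_le_left _ _
      rw [hη]
      rcases le_total δ 1 with h | h
      · rw [min_eq_left h]; linarith
      · rw [min_eq_right h]; linarith
    have hψη : psi p (1 - η) < 0 := by
      have := (strictMonoOn_psi hp) (show (1:ℝ) - η ∈ Ioi 0 by simp; linarith)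
        (show (1:ℝ) ∈ Ioi 0 by simp) (by linarith)
      rwa [psi_one] at this
    refine ⟨-psi p (1 - η), by linarith, ?_⟩
    intro y hy
    rw [Real.dist_eq] at hy ⊢
    have hylb : psi p (1 - η) < y := by
      rcases abs_lt.1 hy with ⟨h1, _⟩
      simpa using h1
    have hphi0 : phi p 0 = 1 := by rw [phi_eq le_rfl, sol_zero hp]
    have hb1 : 1 - η < phi p y := by
      rcases le_or_gt 0 y with h | h
      · rw [phi, min_eq_right h, sol_zero hp]; linarith
      · rw [phi_eq h.le]
        by_contra hcon
        push_neg at hcon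
        have := (strictMonoOn_psi hp).monotoneOn (sol_spec hp h.le).1
          (show (1:ℝ) - η ∈ Ioi 0 by simp; linarith) hcon
        rw [(sol_spec hp h.le).2.2] at this
        linarith
    have hb2 : phi p y ≤ 1 := phi_le_one hp y
    rw [hphi0, abs_lt]
    constructor <;> linarith
  · -- C > 0 : locally constant
    have : phi p =ᶠ[𝓝 C] (fun _ => sol p 0) := by
      filter_upwards [eventually_gt_nhds hC] with y hy
      rw [phi, min_eq_right hy.le]
    exact (continuousAt_const.congr this.symm)

/-! ### the candidate derivative `W` and the constraint function `F` -/

def Wf (p C r : ℝ) : ℝ := phi p (C / r^2) / r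

def Ff (p ε C : ℝ) : ℝ := ∫ r in ε..1, Wf p C r

lemma continuousAt_Wf {p C r : ℝ} (hp : 1 ≤ p) (hr : 0 < r) : ContinuousAt (Wf p C) r := by
  have h1 : ContinuousAt (fun s : ℝ => C / s^2) r :=
    continuousAt_const.div ((continuousAt_id (x := r)).pow 2) (pow_ne_zero 2 hr.ne')
  exact (((continuous_phi hp).continuousAt).comp h1).div continuousAt_id hr.ne'

lemma continuousOn_Wf_Icc {p C ε : ℝ} (hp : 1 ≤ p) (hε : 0 < ε) :
    ContinuousOn (Wf p C) (Icc ε 1) :=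
  fun r hr => (continuousAt_Wf hp (lt_of_lt_of_le hε hr.1)).continuousWithinAt

lemma intervalIntegrable_Wf {p C ε : ℝ} (hp : 1 ≤ p) (hε : 0 < ε) (hε1 : ε ≤ 1) :
    IntervalIntegrable (Wf p C) volume ε 1 := by
  have h := continuousOn_Wf_Icc (C := C) hp hε
  rw [← uIcc_of_le hε1] at h
  exact h.intervalIntegrable

lemma Wf_pos {p C r : ℝ} (hp : 1 ≤ p) (hr : 0 < r) : 0 < Wf p C r :=
  div_pos (phi_pos hp _) hr

lemma continuous_Ff {p ε : ℝ} (hp : 1 ≤ p) (hε : 0 < ε) (hε1 : ε ≤ 1) :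
    Continuous (Ff p ε) := by
  have key : Ff p ε = fun C => ∫ r in ε..1, phi p (C / (max r ε)^2) / (max r ε) := by
    funext C
    apply intervalIntegral.integral_congr
    intro r hr
    rw [uIcc_of_le hε1] at hr
    show Wf p C r = phi p (C / (max r ε)^2) / (max r ε)
    rw [Wf, max_eq_left hr.1]
  rw [key]
  apply intervalIntegral.continuous_parametric_intervalIntegral_of_continuous'
  apply Continuous.div
  · apply (continuous_phi hp).comp
    apply Continuous.div continuous_fst
    · exact ((continuous_snd.max continuous_const).pow 2)
    · intro q
      exact pow_ne_zero 2 (lt_of_lt_of_le hε (le_max_right _ _)).ne'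
  · exact continuous_snd.max continuous_const
  · intro q
    exact (lt_of_lt_of_le hε (le_max_right _ _)).ne'

lemma Wf_lt_Wf {p C₁ C₂ r : ℝ} (hp : 1 ≤ p) (h12 : C₁ < C₂) (hC2 : C₂ ≤ 0)
    (hr0 : 0 < r) (hr1 : r ≤ 1) : Wf p C₁ r < Wf p C₂ r := by
  have hrr : (0:ℝ) < r^2 := by positivity
  have h1 : C₁ / r^2 < C₂ / r^2 := by exact div_lt_div_of_pos_right h12 hrr
  have h2 : C₂ / r^2 ≤ 0 := div_nonpos_iff.2 (Or.inr ⟨hC2, hrr.le⟩)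
  unfold Wf
  rw [div_lt_div_iff_of_pos_right hr0, phi_eq (h1.le.trans h2), phi_eq h2]
  exact sol_lt_sol hp h1 h2

lemma Ff_lt_Ff {p ε C₁ C₂ : ℝ} (hp : 1 ≤ p) (hε : 0 < ε) (hε1 : ε < 1)
    (h12 : C₁ < C₂) (hC2 : C₂ ≤ 0) : Ff p ε C₁ < Ff p ε C₂ := by
  have hi1 := intervalIntegrable_Wf (C := C₁) hp hε hε1.le
  have hi2 := intervalIntegrable_Wf (C := C₂) hp hε hε1.le
  have hsub : 0 < ∫ r in ε..1, (Wf p C₂ r - Wf p C₁ r) := by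
    apply intervalIntegral.intervalIntegral_pos_of_pos_on (hi2.sub hi1)
    · intro x hx
      exact sub_pos.2 (Wf_lt_Wf hp h12 hC2 (hε.trans hx.1) hx.2.le)
    · exact hε1
  rw [intervalIntegral.integral_sub hi2 hi1] at hsub
  unfold Ff
  linarith

lemma integral_one_div_eps {ε : ℝ} (hε : 0 < ε) (hε1 : ε ≤ 1) :
    (∫ r in ε..1, 1 / r) = -Real.log ε := by
  rw [integral_one_div]
  · rw [one_div, Real.log_inv]
  · intro h
    rw [uIcc_of_le hε1] at h
    exact absurd h.1 (not_le.2 hε)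

lemma Ff_zero {p ε : ℝ} (hp : 1 ≤ p) (hε : 0 < ε) (hε1 : ε ≤ 1) :
    Ff p ε 0 = -Real.log ε := by
  rw [Ff, show (∫ r in ε..1, Wf p 0 r) = ∫ r in ε..1, 1/r from ?_, integral_one_div_eps hε hε1]
  apply intervalIntegral.integral_congr
  intro r hr
  rw [uIcc_of_le hε1] at hr
  have hr0 : 0 < r := lt_of_lt_of_le hε hr.1
  rw [Wf, zero_div, show phi p 0 = 1 from by rw [phi_eq le_rfl, sol_zero hp]]

lemma log_two_lt {ε : ℝ} (hε : 0 < ε) (hε2 : ε < 1/2) : Real.log 2 < -Real.log ε := by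
  have h := Real.log_lt_log hε hε2
  rw [show (1:ℝ)/2 = 2⁻¹ by norm_num, Real.log_inv] at h
  linarith

/-- Existence of the Lagrange-type constant `C*` with `F(C*) = log 2`. -/
lemma exists_Cs {p ε : ℝ} (hp : 1 ≤ p) (hε : 0 < ε) (hε2 : ε < 1/2) :
    ∃ Cs : ℝ, Cs < 0 ∧ Ff p ε Cs = Real.log 2 := by
  have hε1 : ε < 1 := by linarith
  have hlog2 : 0 < Real.log 2 := Real.log_pos one_lt_two
  have hloge : Real.log 2 < -Real.log ε := log_two_lt hε hε2
  set u₀ : ℝ := Real.log 2 / (2 * (-Real.log ε)) with hu₀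
  have hu₀0 : 0 < u₀ := by
    apply div_pos hlog2; linarith
  have hu₀1 : u₀ < 1 := by
    rw [hu₀, div_lt_one (by linarith)]
    linarith
  set Cm : ℝ := psi p u₀ with hCm
  have hCm0 : Cm < 0 := by
    have := (strictMonoOn_psi hp) (show u₀ ∈ Ioi 0 from hu₀0)
      (show (1:ℝ) ∈ Ioi 0 by norm_num) hu₀1
    rwa [psi_one] at this
  have hFCm : Ff p ε Cm < Real.log 2 := by
    have hle : ∀ r ∈ Icc ε 1, Wf p Cm r ≤ u₀ * (1/r) := by
      intro r hr
      have hr0 : 0 < r := lt_of_lt_of_le hε hr.1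
      have hCMr : Cm / r^2 ≤ Cm := by
        rw [div_le_iff₀ (by positivity : (0:ℝ) < r^2)]
        have hr21 : r^2 ≤ 1 := by nlinarith [hr.2, hr0.le]
        nlinarith [mul_nonneg (neg_nonneg.2 hCm0.le) (sub_nonneg.2 hr21)]
      have hphi : phi p (Cm / r^2) ≤ u₀ := by
        have h2 : Cm / r^2 ≤ 0 := hCMr.trans hCm0.le
        have hmono : sol p (Cm / r^2) ≤ sol p Cm := by
          rcases eq_or_lt_of_le hCMr with h | h
          · rw [h]
          · exact (sol_lt_sol hp h hCm0.le).le
        have hsolCm : sol p Cm = u₀ := (sol_unique hp hCm0.le hu₀0 rfl).symm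
        rw [phi_eq h2]
        rw [hsolCm] at hmono
        exact hmono
      rw [Wf, div_le_iff₀ hr0]
      calc phi p (Cm / r^2) ≤ u₀ := hphi
        _ = u₀ * (1/r) * r := by field_simp
    have hint : (∫ r in ε..1, u₀ * (1/r)) = u₀ * (-Real.log ε) := by
      rw [intervalIntegral.integral_const_mul, integral_one_div_eps hε hε1.le]
    have hmono := intervalIntegral.integral_mono_on hε1.le
      (intervalIntegrable_Wf hp hε hε1.le)
      (by apply ContinuousOn.intervalIntegrable;
          rw [uIcc_of_le hε1.le]
          exact (continuousOn_const.mul ((continuousOn_const.div continuousOn_id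
            (fun x hx => (lt_of_lt_of_le hε hx.1).ne')))))
      hle
    have hlogene : Real.log ε ≠ 0 := by
      intro h; rw [h] at hloge; simp at hloge; linarith
    have : u₀ * (-Real.log ε) = Real.log 2 / 2 := by
      rw [hu₀]; field_simp
    rw [hint, this] at hmono
    calc Ff p ε Cm ≤ Real.log 2 / 2 := hmono
      _ < Real.log 2 := by linarith
  have hF0 : Real.log 2 ≤ Ff p ε 0 := by rw [Ff_zero hp hε hε1.le]; linarith
  have hIVT := intermediate_value_Icc (le_of_lt hCm0)
    ((continuous_Ff hp hε hε1.le).continuousOn (s := Icc Cm 0))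
  obtain ⟨Cs, hCsmem, hCs⟩ := hIVT ⟨hFCm.le, hF0⟩
  refine ⟨Cs, ?_, hCs⟩
  rcases eq_or_lt_of_le hCsmem.2 with h | h
  · exfalso
    rw [h] at hCs
    rw [Ff_zero hp hε hε1.le] at hCs
    linarith
  · exact h

/-! ### the candidate minimizer -/

def fpf (p ε C : ℝ) (r : ℝ) : ℝ := -Real.log 2 + ∫ s in ε..r, Wf p C s

lemma hasDerivAt_fpf {p ε C r : ℝ} (hp : 1 ≤ p) (hε : 0 < ε) (hr : 0 < r) :
    HasDerivAt (fpf p ε C) (Wf p C r) r := by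
  have hsub : ∀ x ∈ uIcc ε r, 0 < x := by
    intro x hx
    have : min ε r ≤ x := by
      rcases mem_uIcc.1 hx with h | h
      · exact le_trans (min_le_left _ _) h.1
      · exact le_trans (min_le_right _ _) h.1
    exact lt_of_lt_of_le (lt_min hε hr) this
  have hconW : ContinuousOn (Wf p C) (uIcc ε r) :=
    fun x hx => (continuousAt_Wf hp (hsub x hx)).continuousWithinAt
  have hint : IntervalIntegrable (Wf p C) volume ε r := hconW.intervalIntegrable
  have hmeas : StronglyMeasurableAtFilter (Wf p C) (nhds r) :=
    ContinuousOn.stronglyMeasurableAtFilter isOpen_Ioi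
      (fun x hx => (continuousAt_Wf hp hx).continuousWithinAt) r hr
  have h := intervalIntegral.integral_hasDerivAt_right hint hmeas (continuousAt_Wf hp hr)
  exact h.const_add _

lemma dW_fpf {p ε C : ℝ} (hp : 1 ≤ p) (hε : 0 < ε) (hε1 : ε < 1) :
    ∀ r ∈ Icc ε 1, dW ε (fpf p ε C) r = Wf p C r := by
  intro r hr
  exact ((hasDerivAt_fpf hp hε (lt_of_lt_of_le hε hr.1)).hasDerivWithinAt).derivWithin
    ((uniqueDiffOn_Icc hε1) r hr)

lemma contDiffOn_Wf {p ε C : ℝ} (hp : 1 ≤ p) (hε : 0 < ε) (hC : C < 0) :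
    ContDiffOn ℝ (⊤ : ℕ∞) (Wf p C) (Icc ε 1) := by
  intro r hr
  have hr0 : 0 < r := lt_of_lt_of_le hε hr.1
  apply ContDiffAt.contDiffWithinAt
  have h1 : ContDiffAt ℝ (⊤ : ℕ∞) (fun s : ℝ => C / s^2) r :=
    contDiffAt_const.div ((contDiffAt_id (x := r)).pow 2) (pow_ne_zero 2 hr0.ne')
  have h2 : ContDiffAt ℝ (⊤ : ℕ∞) (phi p) (C / r^2) :=
    contDiffAt_phi hp (div_neg_of_neg_of_pos hC (by positivity))
  exact ((h2.comp r h1).div (contDiffAt_id (x := r)) hr0.ne')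

lemma contDiffOn_fpf {p ε C : ℝ} (hp : 1 ≤ p) (hε : 0 < ε) (hε1 : ε < 1) (hC : C < 0) :
    ContDiffOn ℝ (⊤ : ℕ∞) (fpf p ε C) (Icc ε 1) := by
  rw [contDiffOn_infty_iff_derivWithin (uniqueDiffOn_Icc hε1)]
  constructor
  · intro r hr
    exact (hasDerivAt_fpf hp hε (lt_of_lt_of_le hε hr.1)).differentiableAt.differentiableWithinAt
  · exact (contDiffOn_Wf hp hε hC).congr (fun r hr => dW_fpf hp hε hε1 r hr)

lemma fpf_left {p ε C : ℝ} : fpf p ε C ε = -Real.log 2 := by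
  simp [fpf]

lemma fpf_right {p ε C : ℝ} : fpf p ε C 1 = -Real.log 2 + Ff p ε C := rfl

/-! ### basic consequences of membership in `𝒞` -/

lemma memC.continuousOn_dW {ε : ℝ} {g : ℝ → ℝ} (hε1 : ε < 1) (hg : memC ε g) :
    ContinuousOn (dW ε g) (Icc ε 1) :=
  hg.1.continuousOn_derivWithin (uniqueDiffOn_Icc hε1) le_rfl

lemma memC.hasDerivWithinAt {ε : ℝ} {g : ℝ → ℝ} (hg : memC ε g) {r : ℝ} (hr : r ∈ Icc ε 1) :
    HasDerivWithinAt g (dW ε g r) (Icc ε 1) r :=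
  ((hg.1.differentiableOn one_ne_zero) r hr).hasDerivWithinAt

lemma memC.integral_dW {ε : ℝ} {g : ℝ → ℝ} (hε : 0 < ε) (hε1 : ε < 1) (hg : memC ε g) :
    ∫ r in ε..1, dW ε g r = Real.log 2 := by
  have hderiv : ∀ x ∈ Ioo ε 1, HasDerivWithinAt g (dW ε g x) (Ioi x) x := by
    intro x hx
    exact (memC.hasDerivWithinAt hg ⟨hx.1.le, hx.2.le⟩).mono_of_mem_nhdsWithin
      (Icc_mem_nhdsGT_of_mem ⟨hx.1.le, hx.2⟩)
  have hint : IntervalIntegrable (dW ε g) volume ε 1 := by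
    have h := memC.continuousOn_dW hε1 hg
    rw [← uIcc_of_le hε1.le] at h
    exact h.intervalIntegrable
  rw [intervalIntegral.integral_eq_sub_of_hasDeriv_right_of_le hε1.le
    (hg.1.continuousOn) hderiv hint, hg.2.2.2, hg.2.2.1]
  ring

/-! ### the energy as an integral of `hfun` -/

def Ei (p ε : ℝ) (g : ℝ → ℝ) (r : ℝ) : ℝ := hfun p (r * dW ε g r) * r

lemma energy_eq {p ε : ℝ} (g : ℝ → ℝ) (hε1 : ε ≤ 1) :
    energy ε p g = 2 * π * ∫ r in ε..1, Ei p ε g r := by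
  rw [energy]
  congr 1
  apply intervalIntegral.integral_congr
  intro r _
  simp only [Ei, hfun, one_div]

lemma continuousOn_Ei {p ε : ℝ} {g : ℝ → ℝ} (hε : 0 < ε) (hε1 : ε < 1) (hg : memC ε g) :
    ContinuousOn (Ei p ε g) (Icc ε 1) := by
  have h1 : ContinuousOn (fun r => r * dW ε g r) (Icc ε 1) :=
    continuousOn_id.mul (memC.continuousOn_dW hε1 hg)
  have h2 : ∀ r ∈ Icc ε 1, 0 < r * dW ε g r := by
    intro r hr
    exact mul_pos (lt_of_lt_of_le hε hr.1) (hg.2.1 r hr)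
  apply ContinuousOn.mul _ continuousOn_id
  intro r hr
  exact ContinuousAt.comp_continuousWithinAt (g := hfun p) (f := fun s => s * dW ε g s)
    ((hasDerivAt_hfun (h2 r hr)).continuousAt) (h1 r hr)

lemma intervalIntegrable_Ei {p ε : ℝ} {g : ℝ → ℝ} (hε : 0 < ε) (hε1 : ε < 1) (hg : memC ε g) :
    IntervalIntegrable (Ei p ε g) volume ε 1 := by
  have h := continuousOn_Ei (p := p) hε hε1 hg
  rw [← uIcc_of_le hε1.le] at h
  exact h.intervalIntegrable

/-! ### convexity of `hfun` -/

lemma hfun_convex_lt {p u t : ℝ} (hp : 1 ≤ p) (hu : 0 < u) (ht : 0 < t) (hne : u ≠ t) :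
    hfun p u + p * psi p u * (t - u) < hfun p t := by
  have hp0 : (0:ℝ) < p := by linarith
  rcases lt_or_gt_of_ne hne with hlt | hgt
  · obtain ⟨c, hc, heq⟩ := exists_hasDerivAt_eq_slope (hfun p) (fun x => p * psi p x) hlt
      (fun x hx => (hasDerivAt_hfun (lt_of_lt_of_le hu hx.1)).continuousAt.continuousWithinAt)
      (fun x hx => hasDerivAt_hfun (lt_of_lt_of_le hu hx.1.le))
    have hmono : psi p u < psi p c := (strictMonoOn_psi hp) hu (hu.trans hc.1) hc.1
    have h2 : hfun p t - hfun p u = p * psi p c * (t - u) := by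
      rw [heq, div_mul_cancel₀ _ (sub_ne_zero.2 (ne_of_gt hlt))]
    nlinarith [mul_lt_mul_of_pos_right (mul_lt_mul_of_pos_left hmono hp0) (sub_pos.2 hlt)]
  · obtain ⟨c, hc, heq⟩ := exists_hasDerivAt_eq_slope (hfun p) (fun x => p * psi p x) hgt
      (fun x hx => (hasDerivAt_hfun (lt_of_lt_of_le ht hx.1)).continuousAt.continuousWithinAt)
      (fun x hx => hasDerivAt_hfun (lt_of_lt_of_le ht hx.1.le))
    have hmono : psi p c < psi p u := (strictMonoOn_psi hp) (ht.trans hc.1) hu hc.2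
    have h2 : hfun p u - hfun p t = p * psi p c * (u - t) := by
      rw [heq, div_mul_cancel₀ _ (sub_ne_zero.2 (ne_of_gt hgt))]
    nlinarith [mul_lt_mul_of_pos_right (mul_lt_mul_of_pos_left hmono hp0) (sub_pos.2 hgt)]

lemma hfun_convex_le {p u t : ℝ} (hp : 1 ≤ p) (hu : 0 < u) (ht : 0 < t) :
    hfun p u + p * psi p u * (t - u) ≤ hfun p t := by
  rcases eq_or_ne u t with h | h
  · subst h; simp
  · exact (hfun_convex_lt hp hu ht h).le

/-! ### key identities -/

lemma EL_expr_eq {p r v : ℝ} (hr : 0 < r) (hv : 0 < v) :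
    (1/(r*v) + r*v)^(p-1) * (-(1/v^2) + r^2) = r^2 * psi p (r*v) := by
  rw [psi, one_div]
  have h1 : -(1/v^2) + r^2 = r^2 * (1 - ((r*v)^2)⁻¹) := by
    field_simp
    ring
  rw [h1]; ring

lemma mul_Wf {p ε C r : ℝ} (hr : 0 < r) : r * Wf p C r = phi p (C / r^2) := by
  rw [Wf]; field_simp

lemma psi_mul_Wf {p ε C r : ℝ} (hp : 1 ≤ p) (hC : C ≤ 0) (hr : 0 < r) :
    r^2 * psi p (r * Wf p C r) = C := by
  rw [mul_Wf (p := p) (ε := ε) hr, psi_phi hp (div_nonpos_iff.2 (Or.inr ⟨hC, by positivity⟩))]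
  field_simp

/-! ### the pointwise convexity inequality -/

lemma key_ineq_le {p C r v w : ℝ} (hp : 1 ≤ p) (hr : 0 < r) (hv : 0 < v) (hw : 0 < w)
    (hC : r^2 * psi p (r*v) = C) :
    hfun p (r*v) * r + p * C * (w - v) ≤ hfun p (r*w) * r := by
  have h := hfun_convex_le hp (mul_pos hr hv) (mul_pos hr hw)
  have h2 := mul_le_mul_of_nonneg_right h hr.le
  calc hfun p (r*v) * r + p * C * (w - v)
      = (hfun p (r*v) + p * psi p (r*v) * (r*w - r*v)) * r := by rw [← hC]; ring
    _ ≤ hfun p (r*w) * r := h2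

lemma key_ineq_lt {p C r v w : ℝ} (hp : 1 ≤ p) (hr : 0 < r) (hv : 0 < v) (hw : 0 < w)
    (hvw : v ≠ w) (hC : r^2 * psi p (r*v) = C) :
    hfun p (r*v) * r + p * C * (w - v) < hfun p (r*w) * r := by
  have hne : r*v ≠ r*w := fun h => hvw (mul_left_cancel₀ hr.ne' h)
  have h := hfun_convex_lt hp (mul_pos hr hv) (mul_pos hr hw) hne
  have h2 := mul_lt_mul_of_pos_right h hr
  calc hfun p (r*v) * r + p * C * (w - v)
      = (hfun p (r*v) + p * psi p (r*v) * (r*w - r*v)) * r := by rw [← hC]; ring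
    _ < hfun p (r*w) * r := h2

/-! ### a nonnegative continuous function with zero integral vanishes -/

lemma zero_of_integral_zero {ε : ℝ} {q : ℝ → ℝ} (hε : 0 < ε) (hε1 : ε < 1)
    (hcont : ContinuousOn q (Icc ε 1)) (hnn : ∀ r ∈ Icc ε 1, 0 ≤ q r)
    (hzero : (∫ r in ε..1, q r) = 0) : ∀ r ∈ Icc ε 1, q r = 0 := by
  intro r0 hr0
  by_contra hne
  have hq0 : 0 < q r0 := lt_of_le_of_ne (hnn r0 hr0) (Ne.symm hne)
  have hcw := hcont r0 hr0
  rw [Metric.continuousWithinAt_iff] at hcw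
  obtain ⟨δ, hδ0, hδ⟩ := hcw (q r0 / 2) (by linarith)
  set a := max ε (r0 - δ/3) with ha
  set b := min 1 (r0 + δ/3) with hb
  have hεa : ε ≤ a := le_max_left _ _
  have hb1 : b ≤ 1 := min_le_left _ _
  have hab : a < b := by
    apply max_lt
    · exact lt_min hε1 (by linarith [hr0.1])
    · exact lt_min (by linarith [hr0.2]) (by linarith)
  have ha1 : a ≤ 1 := le_trans hab.le hb1
  have hεb : ε ≤ b := le_trans hεa hab.le
  have hsub : Icc a b ⊆ Icc ε 1 := fun x hx => ⟨le_trans hεa hx.1, le_trans hx.2 hb1⟩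
  have hlow : ∀ x ∈ Icc a b, q r0 / 2 ≤ q x := by
    intro x hx
    have hxl : r0 - δ/3 ≤ x := le_trans (le_max_right _ _) hx.1
    have hxr : x ≤ r0 + δ/3 := le_trans hx.2 (min_le_right _ _)
    have hd : dist x r0 < δ := by
      rw [Real.dist_eq, abs_lt]
      constructor <;> linarith
    have h2 := hδ (hsub hx) hd
    rw [Real.dist_eq, abs_lt] at h2
    linarith [h2.1]
  have hint : ∀ x y, ε ≤ x → x ≤ y → y ≤ 1 → IntervalIntegrable q volume x y := by
    intro x y h1 h2 h3
    have hc : ContinuousOn q (uIcc x y) := by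
      apply hcont.mono
      rw [uIcc_of_le h2]
      exact fun z hz => ⟨le_trans h1 hz.1, le_trans hz.2 h3⟩
    exact hc.intervalIntegrable
  have e1 := intervalIntegral.integral_add_adjacent_intervals
    (hint ε a le_rfl hεa ha1) (hint a b hεa hab.le hb1)
  have e2 := intervalIntegral.integral_add_adjacent_intervals
    (hint ε b le_rfl hεb hb1) (hint b 1 hεb hb1 le_rfl)
  have n1 : 0 ≤ ∫ r in ε..a, q r :=
    intervalIntegral.integral_nonneg hεa (fun u hu => hnn u ⟨hu.1, le_trans hu.2 ha1⟩)
  have n3 : 0 ≤ ∫ r in b..1, q r :=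
    intervalIntegral.integral_nonneg hb1 (fun u hu => hnn u ⟨le_trans hεb hu.1, hu.2⟩)
  have n2 : (b - a) * (q r0 / 2) ≤ ∫ r in a..b, q r := by
    have hm := intervalIntegral.integral_mono_on hab.le intervalIntegrable_const
      (hint a b hεa hab.le hb1) hlow
    rw [intervalIntegral.integral_const] at hm
    simpa [smul_eq_mul] using hm
  have hpos : 0 < (b - a) * (q r0 / 2) := mul_pos (sub_pos.2 hab) (by linarith)
  have : (∫ r in ε..1, q r) = (∫ r in ε..a, q r) + (∫ r in a..b, q r) + (∫ r in b..1, q r) := by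
    rw [e1, e2]
  rw [hzero] at this
  linarith

/-! ### equal derivatives give equal functions -/

lemma eqOn_of_dW_eq {ε : ℝ} {f g : ℝ → ℝ} (hε1 : ε < 1) (hf : memC ε f) (hg : memC ε g)
    (heq : ∀ r ∈ Icc ε 1, dW ε g r = dW ε f r) : EqOn g f (Icc ε 1) := by
  have key := constant_of_has_deriv_right_zero (f := fun x => g x - f x) (a := ε) (b := 1)
    (hg.1.continuousOn.sub hf.1.continuousOn) ?_
  · intro x hx
    have h1 := key x hx
    have h2 : g ε - f ε = 0 := by rw [hg.2.2.1, hf.2.2.1]; ring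
    rw [h2] at h1
    exact sub_eq_zero.1 h1
  · intro x hx
    have h1 := (memC.hasDerivWithinAt hg ⟨hx.1, hx.2.le⟩).sub
      (memC.hasDerivWithinAt hf ⟨hx.1, hx.2.le⟩)
    rw [heq x ⟨hx.1, hx.2.le⟩, sub_self] at h1
    exact h1.mono_of_mem_nhdsWithin (Icc_mem_nhdsGE_of_mem hx)

/-! ### the Euler–Lagrange equation for the candidate -/

lemma satisfiesEL_fpf {p ε C : ℝ} (hp : 1 ≤ p) (hε : 0 < ε) (hε1 : ε < 1) (hC : C < 0) :
    satisfiesEL ε p (fpf p ε C) := by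
  have hEq : ∀ s ∈ Icc ε 1,
      (1/(s * dW ε (fpf p ε C) s) + s * dW ε (fpf p ε C) s) ^ (p - 1) *
        (-(1/(dW ε (fpf p ε C) s)^2) + s^2) = C := by
    intro s hs
    have hs0 : 0 < s := lt_of_lt_of_le hε hs.1
    rw [dW_fpf hp hε hε1 s hs, EL_expr_eq hs0 (Wf_pos hp hs0), psi_mul_Wf (ε := ε) hp hC.le hs0]
  intro r hr
  exact (hasDerivWithinAt_const r _ C).congr (fun s hs => hEq s hs) (hEq r hr)

/-- for a function in `𝒞` satisfying the EL equation, the quantity `r²ψ(r g'(r))`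
is constant on `[ε,1]`. -/
lemma EL_const {p ε : ℝ} {g : ℝ → ℝ} (hp : 1 ≤ p) (hε : 0 < ε) (hε1 : ε < 1)
    (hg : memC ε g) (hEL : satisfiesEL ε p g) :
    ∃ C', ∀ x ∈ Icc ε 1, x^2 * psi p (x * dW ε g x) = C' := by
  set E : ℝ → ℝ := fun s => (1/(s * dW ε g s) + s * dW ε g s) ^ (p - 1) *
    (-(1/(dW ε g s)^2) + s^2) with hE
  have hEeq : ∀ s ∈ Icc ε 1, E s = s^2 * psi p (s * dW ε g s) := by
    intro s hs
    exact EL_expr_eq (lt_of_lt_of_le hε hs.1) (hg.2.1 s hs)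
  have hcontE : ContinuousOn E (Icc ε 1) := by
    apply ContinuousOn.congr _ (fun s hs => hEeq s hs)
    apply ContinuousOn.mul (continuousOn_pow 2)
    have h1 : ContinuousOn (fun s => s * dW ε g s) (Icc ε 1) :=
      continuousOn_id.mul (memC.continuousOn_dW hε1 hg)
    intro s hs
    have hpos : 0 < s * dW ε g s := mul_pos (lt_of_lt_of_le hε hs.1) (hg.2.1 s hs)
    exact ContinuousAt.comp_continuousWithinAt (g := psi p) (f := fun s => s * dW ε g s)
      ((contDiffAt_psi hpos).continuousAt) (h1 s hs)
  have key := constant_of_has_deriv_right_zero (f := E) (a := ε) (b := 1) hcontE ?_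
  · refine ⟨E ε, fun x hx => ?_⟩
    rw [← hEeq x hx]
    exact key x hx
  · intro x hx
    exact (hEL x ⟨hx.1, hx.2.le⟩).mono_of_mem_nhdsWithin (Icc_mem_nhdsGE_of_mem hx)

/-! ### energy comparison -/

lemma compare_main {p ε Cs : ℝ} {g : ℝ → ℝ} (hp : 1 ≤ p) (hε : 0 < ε) (hε1 : ε < 1)
    (hCs : Cs < 0) (hg : memC ε g) (hfp : memC ε (fpf p ε Cs)) :
    energy ε p (fpf p ε Cs) ≤ energy ε p g ∧
      (energy ε p g ≤ energy ε p (fpf p ε Cs) → EqOn g (fpf p ε Cs) (Icc ε 1)) := by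
  have hpi : (0:ℝ) < 2 * π := by positivity
  have hC : ∀ r ∈ Icc ε 1, r^2 * psi p (r * dW ε (fpf p ε Cs) r) = Cs := by
    intro r hr
    rw [dW_fpf hp hε hε1 r hr]
    exact psi_mul_Wf (ε := ε) hp hCs.le (lt_of_lt_of_le hε hr.1)
  set q : ℝ → ℝ :=
    fun r => Ei p ε g r - Ei p ε (fpf p ε Cs) r - p * Cs * (dW ε g r - dW ε (fpf p ε Cs) r)
    with hqdef
  have hq_nonneg : ∀ r ∈ Icc ε 1, 0 ≤ q r := by
    intro r hr
    have h := key_ineq_le hp (lt_of_lt_of_le hε hr.1) (hfp.2.1 r hr) (hg.2.1 r hr) (hC r hr)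
    rw [hqdef]
    dsimp only
    rw [Ei, Ei]
    linarith
  have hq_cont : ContinuousOn q (Icc ε 1) := by
    apply ContinuousOn.sub
    · exact (continuousOn_Ei hε hε1 hg).sub (continuousOn_Ei hε hε1 hfp)
    · exact continuousOn_const.mul ((memC.continuousOn_dW hε1 hg).sub
        (memC.continuousOn_dW hε1 hfp))
  have hq_int : IntervalIntegrable q volume ε 1 := by
    have h := hq_cont
    rw [← uIcc_of_le hε1.le] at h
    exact h.intervalIntegrable
  have hidWg : IntervalIntegrable (dW ε g) volume ε 1 := by
    have h := memC.continuousOn_dW hε1 hg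
    rw [← uIcc_of_le hε1.le] at h
    exact h.intervalIntegrable
  have hidWfp : IntervalIntegrable (dW ε (fpf p ε Cs)) volume ε 1 := by
    have h := memC.continuousOn_dW hε1 hfp
    rw [← uIcc_of_le hε1.le] at h
    exact h.intervalIntegrable
  have hq_integral : (∫ r in ε..1, q r) =
      (∫ r in ε..1, Ei p ε g r) - ∫ r in ε..1, Ei p ε (fpf p ε Cs) r := by
    have h3 : (∫ r in ε..1, p * Cs * (dW ε g r - dW ε (fpf p ε Cs) r)) = 0 := by
      rw [intervalIntegral.integral_const_mul, intervalIntegral.integral_sub hidWg hidWfp,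
        memC.integral_dW hε hε1 hg, memC.integral_dW hε hε1 hfp]
      ring
    have h4 : IntervalIntegrable
        (fun r => Ei p ε g r - Ei p ε (fpf p ε Cs) r) volume ε 1 :=
      (intervalIntegrable_Ei hε hε1 hg).sub (intervalIntegrable_Ei hε hε1 hfp)
    have h5 : IntervalIntegrable
        (fun r => p * Cs * (dW ε g r - dW ε (fpf p ε Cs) r)) volume ε 1 :=
      (hidWg.sub hidWfp).const_mul _
    rw [hqdef]
    rw [intervalIntegral.integral_sub h4 h5, h3,
      intervalIntegral.integral_sub (intervalIntegrable_Ei hε hε1 hg)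
        (intervalIntegrable_Ei hε hε1 hfp)]
    ring
  have hq_nn_int : 0 ≤ ∫ r in ε..1, q r :=
    intervalIntegral.integral_nonneg hε1.le hq_nonneg
  have hEi_le : (∫ r in ε..1, Ei p ε (fpf p ε Cs) r) ≤ ∫ r in ε..1, Ei p ε g r := by
    rw [hq_integral] at hq_nn_int; linarith
  constructor
  · rw [energy_eq _ hε1.le, energy_eq _ hε1.le]
    exact mul_le_mul_of_nonneg_left hEi_le hpi.le
  · intro hle
    have hEi_ge : (∫ r in ε..1, Ei p ε g r) ≤ ∫ r in ε..1, Ei p ε (fpf p ε Cs) r := by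
      rw [energy_eq _ hε1.le, energy_eq _ hε1.le] at hle
      exact le_of_mul_le_mul_left hle hpi
    have hq0 : (∫ r in ε..1, q r) = 0 := by rw [hq_integral]; linarith
    have hqzero := zero_of_integral_zero hε hε1 hq_cont hq_nonneg hq0
    apply eqOn_of_dW_eq hε1 hfp hg
    intro r hr
    by_contra hne
    have h := key_ineq_lt hp (lt_of_lt_of_le hε hr.1) (hfp.2.1 r hr) (hg.2.1 r hr)
      (fun hh => hne hh.symm) (hC r hr)
    have h2 := hqzero r hr
    rw [hqdef] at h2
    dsimp only at h2
    rw [Ei, Ei] at h2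
    linarith

/-! ### uniqueness for the Euler–Lagrange equation -/

lemma EL_unique {p ε Cs : ℝ} {g : ℝ → ℝ} (hp : 1 ≤ p) (hε : 0 < ε) (hε2 : ε < 1/2)
    (hCs : Cs < 0) (hFCs : Ff p ε Cs = Real.log 2) (hg : memC ε g)
    (hEL : satisfiesEL ε p g) (hfp : memC ε (fpf p ε Cs)) :
    EqOn g (fpf p ε Cs) (Icc ε 1) := by
  have hε1 : ε < 1 := by linarith
  obtain ⟨C', hC'⟩ := EL_const hp hε hε1 hg hEL
  have hpsiEq : ∀ x ∈ Icc ε 1, psi p (x * dW ε g x) = C' / x^2 := by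
    intro x hx
    have hx0 : 0 < x := lt_of_lt_of_le hε hx.1
    rw [← hC' x hx]
    field_simp
  by_cases hsign : 0 ≤ C'
  · exfalso
    have hge : ∀ x ∈ Icc ε 1, 1/x ≤ dW ε g x := by
      intro x hx
      have hx0 : 0 < x := lt_of_lt_of_le hε hx.1
      have hvg := hg.2.1 x hx
      have h1 : (1:ℝ) ≤ x * dW ε g x := by
        by_contra hcon
        push_neg at hcon
        have hlt := (strictMonoOn_psi hp) (mem_Ioi.2 (mul_pos hx0 hvg))
          (mem_Ioi.2 one_pos) hcon
        rw [psi_one, hpsiEq x hx] at hlt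
        have : 0 ≤ C'/x^2 := div_nonneg hsign (by positivity)
        linarith
      rw [div_le_iff₀ hx0]
      linarith [h1, mul_comm x (dW ε g x)]
    have hint1 : (∫ x in ε..1, 1/x) ≤ ∫ x in ε..1, dW ε g x := by
      apply intervalIntegral.integral_mono_on hε1.le _ _ hge
      · apply ContinuousOn.intervalIntegrable
        rw [uIcc_of_le hε1.le]
        exact continuousOn_const.div continuousOn_id
          (fun x hx => (lt_of_lt_of_le hε hx.1).ne')
      · have h := memC.continuousOn_dW hε1 hg
        rw [← uIcc_of_le hε1.le] at h
        exact h.intervalIntegrable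
    rw [integral_one_div_eps hε hε1.le, memC.integral_dW hε hε1 hg] at hint1
    have := log_two_lt hε hε2
    linarith
  · push_neg at hsign
    have hdWeq : ∀ x ∈ Icc ε 1, dW ε g x = Wf p C' x := by
      intro x hx
      have hx0 : 0 < x := lt_of_lt_of_le hε hx.1
      have hvg := hg.2.1 x hx
      have hCx : C' / x^2 ≤ 0 := div_nonpos_iff.2 (Or.inr ⟨hsign.le, by positivity⟩)
      have husol : x * dW ε g x = sol p (C'/x^2) :=
        sol_unique hp hCx (mul_pos hx0 hvg) (hpsiEq x hx)
      have hWf : Wf p C' x = sol p (C'/x^2) / x := by rw [Wf, phi_eq hCx]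
      rw [hWf, ← husol]
      field_simp
    have hFC' : Ff p ε C' = Real.log 2 := by
      rw [← memC.integral_dW hε hε1 hg]
      apply intervalIntegral.integral_congr
      intro x hx
      rw [uIcc_of_le hε1.le] at hx
      exact (hdWeq x hx).symm
    have hC'Cs : C' = Cs := by
      rcases lt_trichotomy C' Cs with h | h | h
      · have := Ff_lt_Ff hp hε hε1 h hCs.le
        rw [hFC', hFCs] at this; linarith
      · exact h
      · have := Ff_lt_Ff hp hε hε1 h hsign.le
        rw [hFC', hFCs] at this; linarith
    apply eqOn_of_dW_eq hε1 hfp hg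
    intro r hr
    rw [hdWeq r hr, hC'Cs, dW_fpf hp hε hε1 r hr]

end Stmt7

open Stmt7 in
theorem statement7 (ε p : ℝ) (hε : 0 < ε) (hε2 : ε < 1/2) (hp : 1 ≤ p) :
    ∃ fp : ℝ → ℝ, memC ε fp ∧
      ContDiffOn ℝ (⊤ : ℕ∞) fp (Set.Icc ε 1) ∧
      (∀ g, memC ε g → energy ε p fp ≤ energy ε p g) ∧
      (∀ g, memC ε g → (∀ h, memC ε h → energy ε p g ≤ energy ε p h) →
        Set.EqOn g fp (Set.Icc ε 1)) ∧
      satisfiesEL ε p fp ∧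
      (∀ g, memC ε g → satisfiesEL ε p g → Set.EqOn g fp (Set.Icc ε 1)) := by
  have hε1 : ε < 1 := by linarith
  obtain ⟨Cs, hCs0, hFCs⟩ := exists_Cs hp hε hε2
  have hmem : memC ε (fpf p ε Cs) := by
    refine ⟨(contDiffOn_fpf hp hε hε1 hCs0).of_le ?_, ?_, fpf_left, ?_⟩
    · exact_mod_cast le_top
    · intro r hr
      rw [dW_fpf hp hε hε1 r hr]
      exact Wf_pos hp (lt_of_lt_of_le hε hr.1)
    · rw [fpf_right, hFCs]; ring
  refine ⟨fpf p ε Cs, hmem, contDiffOn_fpf hp hε hε1 hCs0, ?_, ?_,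
    satisfiesEL_fpf hp hε hε1 hCs0, ?_⟩
  · intro g hg
    exact (compare_main hp hε hε1 hCs0 hg hmem).1
  · intro g hg hmin
    exact (compare_main hp hε hε1 hCs0 hg hmem).2 (hmin _ hmem)
  · intro g hg hEL
    exact EL_unique hp hε hε2 hCs0 hFCs hg hEL hmem
end
end

section
/- Let 0 < ε < 1/2. The function f₁(r) = log( (3r + √(9r² + 16(2−ε)(1/2−ε)))/(4(2−ε)) ) belongs to the set 𝒞 = {f ∈ C¹([ε,1]) : f′ > 0, f(ε) = −log 2, f(1) = 0} and is the unique minimizer over 𝒞 of the energy I₁(f) = 2π ∫_ε^1 (1/(r f′(r)) + r f′(r)) · r dr. -/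
open Set MeasureTheory intervalIntegral Real
noncomputable section

/-- The radial energy for `p = 1`: `I₁(f) = 2π ∫_ε^1 (1/(r f') + r f') r dr`. -/
noncomputable def energy1 (ε : ℝ) (g : ℝ → ℝ) : ℝ :=
  2 * π * ∫ r in ε..1, (1/(r * dW ε g r) + r * dW ε g r) * r

namespace S8

variable {ε : ℝ}

def kk (ε : ℝ) : ℝ := 16*(2 - ε)*(1/2 - ε)
def ss (ε r : ℝ) : ℝ := Real.sqrt (9*r^2 + kk ε)
def F1 (ε : ℝ) : ℝ → ℝ := fun r => Real.log ((3*r + ss ε r) / (4*(2 - ε)))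
def vv (ε : ℝ) : ℝ → ℝ := fun r => 3 / ss ε r

lemma kk_pos (hε : 0 < ε) (hε2 : ε < 1/2) : 0 < kk ε := by
  have h1 : 0 < 2 - ε := by linarith
  have h2 : 0 < 1/2 - ε := by linarith
  unfold kk; nlinarith

lemma arg_pos (hk : 0 < kk ε) (r : ℝ) : 0 < 9*r^2 + kk ε := by nlinarith [sq_nonneg r]

lemma ss_pos (hk : 0 < kk ε) (r : ℝ) : 0 < ss ε r := Real.sqrt_pos.mpr (arg_pos hk r)

lemma ss_sq (hk : 0 < kk ε) (r : ℝ) : (ss ε r)^2 = 9*r^2 + kk ε :=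
  Real.sq_sqrt (arg_pos hk r).le

lemma inner_pos (hk : 0 < kk ε) (r : ℝ) : 0 < 3*r + ss ε r := by
  have h1 : Real.sqrt (9*r^2) < ss ε r :=
    Real.sqrt_lt_sqrt (by positivity) (by linarith)
  have h2 : Real.sqrt (9*r^2) = |3*r| := by
    rw [show 9*r^2 = (3*r)^2 by ring, Real.sqrt_sq_eq_abs]
  have := neg_abs_le (3*r)
  rw [h2] at h1; linarith

lemma vv_pos (hk : 0 < kk ε) (r : ℝ) : 0 < vv ε r := by
  exact div_pos (by norm_num) (ss_pos hk r)

lemma hasDerivAt_ss (hk : 0 < kk ε) (r : ℝ) : HasDerivAt (ss ε) (9*r / ss ε r) r := by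
  have h1 : HasDerivAt (fun x : ℝ => 9*x^2 + kk ε) (18*r) r := by
    have := ((hasDerivAt_pow 2 r).const_mul (9:ℝ)).add_const (kk ε)
    exact this.congr_deriv (by norm_num; ring)
  have h2 := h1.sqrt (arg_pos hk r).ne'
  convert h2 using 1
  · rfl
  rw [show ss ε r = Real.sqrt (9*r^2 + kk ε) from rfl]
  field_simp [(ss_pos hk r).ne']
  ring

lemma hasDerivAt_F1 (hk : 0 < kk ε) (hε2 : ε < 1/2) (r : ℝ) :
    HasDerivAt (F1 ε) (vv ε r) r := by
  have h2ε : (0:ℝ) < 2 - ε := by linarith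
  have hsp := ss_pos hk r
  have hip := inner_pos hk r
  have h1 : HasDerivAt (fun x : ℝ => (3*x + ss ε x) / (4*(2-ε)))
      ((3 + 9*r / ss ε r) / (4*(2-ε))) r := by
    exact (((hasDerivAt_id r).const_mul (3:ℝ)).add (hasDerivAt_ss hk r)).div_const _ |>.congr_deriv (by ring)
  have h2 : ((3*r + ss ε r) / (4*(2-ε))) ≠ 0 := by positivity
  have h3 := h1.log h2
  convert h3 using 1
  · rfl
  unfold vv
  rw [div_div_div_eq]
  field_simp
  ring

lemma continuous_vv (hk : 0 < kk ε) : Continuous (vv ε) := by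
  apply continuous_const.div
  · exact Real.continuous_sqrt.comp (by continuity)
  · exact fun r => (ss_pos hk r).ne'

lemma contDiff_F1 (hk : 0 < kk ε) (hε2 : ε < 1/2) : ContDiff ℝ 1 (F1 ε) := by
  rw [contDiff_one_iff_deriv]
  have hd : ∀ r, HasDerivAt (F1 ε) (vv ε r) r := hasDerivAt_F1 hk hε2
  refine ⟨fun r => (hd r).differentiableAt, ?_⟩
  have : deriv (F1 ε) = vv ε := funext fun r => (hd r).deriv
  rw [this]; exact continuous_vv hk

lemma dW_F1 (hk : 0 < kk ε) (hε2 : ε < 1/2) (hε1 : ε < 1) {r : ℝ} (hr : r ∈ Icc ε 1) :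
    derivWithin (F1 ε) (Icc ε 1) r = vv ε r :=
  (hasDerivAt_F1 hk hε2 r).hasDerivWithinAt.derivWithin ((uniqueDiffOn_Icc hε1) r hr)

lemma F1_one (hε : 0 < ε) (hε2 : ε < 1/2) : F1 ε 1 = 0 := by
  have h2ε : (0:ℝ) < 2 - ε := by linarith
  unfold F1 ss kk
  have h : 9*(1:ℝ)^2 + 16*(2-ε)*(1/2-ε) = (5-4*ε)^2 := by ring
  rw [h, Real.sqrt_sq (by linarith)]
  have : (3*1 + (5-4*ε)) / (4*(2-ε)) = 1 := by
    field_simp; ring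
  rw [this, Real.log_one]

lemma F1_eps (hε : 0 < ε) (hε2 : ε < 1/2) : F1 ε ε = -Real.log 2 := by
  have h2ε : (0:ℝ) < 2 - ε := by linarith
  unfold F1 ss kk
  have h : 9*ε^2 + 16*(2-ε)*(1/2-ε) = (4-5*ε)^2 := by ring
  rw [h, Real.sqrt_sq (by linarith)]
  have : (3*ε + (4-5*ε)) / (4*(2-ε)) = 2⁻¹ := by
    field_simp; ring
  rw [this, Real.log_inv]

lemma memC_F1 (hε : 0 < ε) (hε2 : ε < 1/2) : memC ε (F1 ε) := by
  have hk := kk_pos hε hε2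
  have hε1 : ε < 1 := by linarith
  refine ⟨(contDiff_F1 hk hε2).contDiffOn, fun r hr => ?_, F1_eps hε hε2, F1_one hε hε2⟩
  show 0 < derivWithin (F1 ε) (Icc ε 1) r
  rw [dW_F1 hk hε2 hε1 hr]
  exact vv_pos hk r

lemma dW_contOn (hε1 : ε < 1) {g : ℝ → ℝ} (hg : memC ε g) :
    ContinuousOn (dW ε g) (Icc ε 1) :=
  hg.1.continuousOn_derivWithin (uniqueDiffOn_Icc hε1) le_rfl

lemma ftc (hε1 : ε < 1) {g : ℝ → ℝ} (hg : memC ε g) {x : ℝ} (hx : x ∈ Icc ε 1) :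
    ∫ r in ε..x, dW ε g r = g x - g ε := by
  rcases eq_or_lt_of_le hx.1 with h | h
  · rw [← h]; simp
  · apply integral_eq_sub_of_hasDeriv_right_of_le h.le
    · exact hg.1.continuousOn.mono (Icc_subset_Icc le_rfl hx.2)
    · intro y hy
      have hy1 : y ∈ Icc ε 1 := ⟨hy.1.le, (hy.2.trans_le hx.2).le⟩
      have hmem : Icc ε 1 ∈ nhds y := Icc_mem_nhds hy.1 (hy.2.trans_le hx.2)
      have hd : HasDerivWithinAt g (dW ε g y) (Icc ε 1) y :=
        (hg.1.differentiableOn one_ne_zero y hy1).hasDerivWithinAt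
      exact (hd.hasDerivAt hmem).hasDerivWithinAt
    · exact ((dW_contOn hε1 hg).mono (Icc_subset_Icc le_rfl hx.2)).intervalIntegrable_of_Icc h.le

lemma ftc_vv (hε : 0 < ε) (hε2 : ε < 1/2) {x : ℝ} (hx : x ∈ Icc ε 1) :
    ∫ r in ε..x, vv ε r = F1 ε x - F1 ε ε := by
  have hk := kk_pos hε hε2
  apply integral_eq_sub_of_hasDerivAt (fun y _ => hasDerivAt_F1 hk hε2 y)
  exact ((continuous_vv hk).continuousOn).intervalIntegrable

/-- the energy integrand for a given derivative function -/
def Ig (g : ℝ → ℝ) : ℝ → ℝ := fun r => (1/(r * g r) + r * g r) * r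

lemma alg_id {r u v : ℝ} (hr : 0 < r) (hu : 0 < u) (hv : 0 < v) :
    (1/(r*u) + r*u)*r = (1/(r*v) + r*v)*r + (r^2 - 1/v^2)*(u - v) + (u - v)^2/(u*v^2) := by
  field_simp
  ring

lemma vv_val (hk : 0 < kk ε) (r : ℝ) : r^2 - 1/(vv ε r)^2 = -(kk ε / 9) := by
  have hs := ss_pos hk r
  have := ss_sq hk r
  unfold vv
  field_simp
  nlinarith

lemma Ig_contOn (hε : 0 < ε) (hε1 : ε < 1) {g : ℝ → ℝ}
    (hc : ContinuousOn g (Icc ε 1)) (hpos : ∀ r ∈ Icc ε 1, 0 < g r) :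
    ContinuousOn (Ig g) (Icc ε 1) := by
  unfold Ig
  have h1 : ∀ r ∈ Icc ε 1, r * g r ≠ 0 := fun r hr =>
    (mul_pos (lt_of_lt_of_le hε hr.1) (hpos r hr)).ne'
  exact (((continuousOn_const.div (continuousOn_id.mul hc) h1).add
    (continuousOn_id.mul hc)).mul continuousOn_id)

def Qf (ε : ℝ) (g : ℝ → ℝ) : ℝ → ℝ :=
  fun r => (dW ε g r - vv ε r)^2 / (dW ε g r * (vv ε r)^2)

lemma Qf_contOn (hk : 0 < kk ε) (hε1 : ε < 1) {g : ℝ → ℝ} (hg : memC ε g) :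
    ContinuousOn (Qf ε g) (Icc ε 1) := by
  unfold Qf
  have hu := dW_contOn hε1 hg
  have hv := (continuous_vv hk).continuousOn (s := Icc ε 1)
  exact ((hu.sub hv).pow 2).div (hu.mul (hv.pow 2))
    (fun r hr => (mul_pos (hg.2.1 r hr) (pow_pos (vv_pos hk r) 2)).ne')

lemma Qf_nonneg (hk : 0 < kk ε) {g : ℝ → ℝ} (hg : memC ε g) {r : ℝ} (hr : r ∈ Icc ε 1) :
    0 ≤ Qf ε g r :=
  div_nonneg (sq_nonneg _) (mul_pos (hg.2.1 r hr) (pow_pos (vv_pos hk r) 2)).le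

lemma energy_F1 (hε : 0 < ε) (hε2 : ε < 1/2) :
    energy1 ε (F1 ε) = 2 * π * ∫ r in ε..1, Ig (vv ε) r := by
  have hk := kk_pos hε hε2
  have hε1 : ε < 1 := by linarith
  unfold energy1
  congr 1
  apply integral_congr
  intro r hr
  rw [uIcc_of_le hε1.le] at hr
  show Ig (dW ε (F1 ε)) r = Ig (vv ε) r
  unfold Ig
  rw [show dW ε (F1 ε) r = vv ε r from dW_F1 hk hε2 hε1 hr]

lemma energy_eq (hε : 0 < ε) (hε2 : ε < 1/2) {g : ℝ → ℝ} (hg : memC ε g) :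
    energy1 ε g = energy1 ε (F1 ε) + 2 * π * ∫ r in ε..1, Qf ε g r := by
  have hk := kk_pos hε hε2
  have hε1 : ε < 1 := by linarith
  have hucont := dW_contOn hε1 hg
  have hvcont := (continuous_vv hk).continuousOn (s := Icc ε 1)
  have hu_int : IntervalIntegrable (dW ε g) volume ε 1 :=
    hucont.intervalIntegrable_of_Icc hε1.le
  have hv_int : IntervalIntegrable (vv ε) volume ε 1 :=
    hvcont.intervalIntegrable_of_Icc hε1.le
  have hIv : IntervalIntegrable (Ig (vv ε)) volume ε 1 :=
    (Ig_contOn hε hε1 hvcont (fun r _ => vv_pos hk r)).intervalIntegrable_of_Icc hε1.le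
  have huv : IntervalIntegrable (fun r => dW ε g r - vv ε r) volume ε 1 :=
    hu_int.sub hv_int
  have hQ : IntervalIntegrable (Qf ε g) volume ε 1 :=
    (Qf_contOn hk hε1 hg).intervalIntegrable_of_Icc hε1.le
  have step1 : energy1 ε g = 2 * π * ∫ r in ε..1,
      (Ig (vv ε) r + (-(kk ε / 9)) * (dW ε g r - vv ε r) + Qf ε g r) := by
    unfold energy1
    congr 1
    apply integral_congr
    intro r hr
    rw [uIcc_of_le hε1.le] at hr
    show Ig (dW ε g) r = _
    unfold Ig Qf
    rw [alg_id (lt_of_lt_of_le hε hr.1) (hg.2.1 r hr) (vv_pos hk r), vv_val hk r]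
  have step2 : (∫ r in ε..1, dW ε g r - vv ε r) = 0 := by
    rw [integral_sub hu_int hv_int, ftc hε1 hg ⟨hε1.le, le_rfl⟩,
      ftc_vv hε hε2 ⟨hε1.le, le_rfl⟩, hg.2.2.1, hg.2.2.2, F1_eps hε hε2, F1_one hε hε2]
    ring
  rw [step1, integral_add (hIv.add (huv.const_mul _)) hQ,
    integral_add hIv (huv.const_mul _), intervalIntegral.integral_const_mul, step2, energy_F1 hε hε2]
  ring

lemma zero_of_integral (hε1 : ε < 1) {Q : ℝ → ℝ} (hc : ContinuousOn Q (Icc ε 1))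
    (hnn : ∀ r ∈ Icc ε 1, 0 ≤ Q r) (hzero : (∫ r in ε..1, Q r) = 0) :
    ∀ r ∈ Ioo ε 1, Q r = 0 := by
  set Φ : ℝ → ℝ := fun x => ∫ t in ε..x, Q t with hΦ
  have hint : ∀ x ∈ Icc ε 1, IntervalIntegrable Q volume ε x := fun x hx =>
    (hc.mono (Icc_subset_Icc le_rfl hx.2)).intervalIntegrable_of_Icc hx.1
  have hΦ0 : ∀ x ∈ Icc ε 1, Φ x = 0 := by
    intro x hx
    have hx1int : IntervalIntegrable Q volume x 1 :=
      (hc.mono (Icc_subset_Icc hx.1 le_rfl)).intervalIntegrable_of_Icc hx.2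
    have hadd : Φ x + (∫ t in x..1, Q t) = ∫ t in ε..1, Q t :=
      integral_add_adjacent_intervals (hint x hx) hx1int
    have h1 : 0 ≤ Φ x := integral_nonneg hx.1 (fun r hr => hnn r ⟨hr.1, hr.2.trans hx.2⟩)
    have h2 : 0 ≤ ∫ t in x..1, Q t :=
      integral_nonneg hx.2 (fun r hr => hnn r ⟨hx.1.trans hr.1, hr.2⟩)
    rw [hzero] at hadd
    linarith
  intro x hx
  have hxI : x ∈ Icc ε 1 := Ioo_subset_Icc_self hx
  have hQx : ContinuousAt Q x := hc.continuousAt (Icc_mem_nhds hx.1 hx.2)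
  have hmeas : StronglyMeasurableAtFilter Q (nhds x) volume :=
    ContinuousOn.stronglyMeasurableAtFilter isOpen_Ioo (hc.mono Ioo_subset_Icc_self) x hx
  have hder : HasDerivAt Φ (Q x) x := integral_hasDerivAt_right (hint x hxI) hmeas hQx
  have hev : Φ =ᶠ[nhds x] fun _ => (0:ℝ) :=
    Filter.eventually_of_mem (Icc_mem_nhds hx.1 hx.2) (fun y hy => hΦ0 y hy)
  have hder0 : HasDerivAt Φ 0 x :=
    (hasDerivAt_const x (0:ℝ)).congr_of_eventuallyEq hev
  exact hder.unique hder0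

lemma unique_min (hε : 0 < ε) (hε2 : ε < 1/2) {g : ℝ → ℝ} (hg : memC ε g)
    (hE : energy1 ε g = energy1 ε (F1 ε)) : Set.EqOn g (F1 ε) (Icc ε 1) := by
  have hk := kk_pos hε hε2
  have hε1 : ε < 1 := by linarith
  have hπ : (0:ℝ) < 2 * π := by positivity
  have hQint : (∫ r in ε..1, Qf ε g r) = 0 := by
    have := energy_eq hε hε2 hg
    rw [hE] at this
    have h2 : 2 * π * ∫ r in ε..1, Qf ε g r = 0 := by linarith
    exact (mul_eq_zero.mp h2).resolve_left hπ.ne'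
  have hQ0 := zero_of_integral hε1 (Qf_contOn hk hε1 hg)
    (fun r hr => Qf_nonneg hk hg hr) hQint
  have huv : ∀ r ∈ Ioo ε 1, dW ε g r = vv ε r := by
    intro r hr
    have h := hQ0 r hr
    have hu := hg.2.1 r (Ioo_subset_Icc_self hr)
    have hv := vv_pos hk r
    unfold Qf at h
    rcases div_eq_zero_iff.mp h with h' | h'
    · have := pow_eq_zero_iff (n := 2) (by norm_num) |>.mp h'
      linarith [sub_eq_zero.mp this]
    · exact absurd h' (mul_pos hu (pow_pos hv 2)).ne'
  intro x hx
  have h2 : (∫ r in ε..x, dW ε g r) = ∫ r in ε..x, vv ε r := by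
    apply intervalIntegral.integral_congr_ae
    have hae : ∀ᵐ r : ℝ, r ≠ (1:ℝ) := by
      have h1 : volume ({(1:ℝ)} : Set ℝ) = 0 := Real.volume_singleton
      have := (MeasureTheory.measure_eq_zero_iff_ae_notMem (μ := volume)).mp h1
      filter_upwards [this] with r hr
      simpa using hr
    filter_upwards [hae] with r hr1 hrI
    rw [uIoc_of_le hx.1] at hrI
    exact huv r ⟨hrI.1, lt_of_le_of_ne (hrI.2.trans hx.2) hr1⟩
  have h3 := ftc hε1 hg hx
  rw [h2, ftc_vv hε hε2 hx] at h3
  have h4 := hg.2.2.1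
  have h5 := F1_eps hε hε2
  linarith

end S8

/-- for `0 < ε < 1/2`, the explicit function
`f₁(r) = log((3r + √(9r² + 16(2-ε)(1/2-ε)))/(4(2-ε)))` belongs to `𝒞` and is the unique
minimizer of `I₁` over `𝒞`. -/
theorem statement8 (ε : ℝ) (hε : 0 < ε) (hε2 : ε < 1/2)
    (f1 : ℝ → ℝ)
    (hf1 : ∀ r, f1 r =
      Real.log ((3*r + Real.sqrt (9*r^2 + 16*(2 - ε)*(1/2 - ε))) / (4*(2 - ε)))) :
    memC ε f1 ∧
    (∀ g, memC ε g → energy1 ε f1 ≤ energy1 ε g) ∧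
    (∀ g, memC ε g → (∀ h, memC ε h → energy1 ε g ≤ energy1 ε h) →
      Set.EqOn g f1 (Set.Icc ε 1)) := by
  have hk := S8.kk_pos hε hε2
  have hε1 : ε < 1 := by linarith
  have hfe : f1 = S8.F1 ε := funext fun r => by rw [hf1 r]; rfl
  subst hfe
  have hmin : ∀ g, memC ε g → energy1 ε (S8.F1 ε) ≤ energy1 ε g := by
    intro g hg
    rw [S8.energy_eq hε hε2 hg]
    have h0 : 0 ≤ ∫ r in ε..1, S8.Qf ε g r :=
      intervalIntegral.integral_nonneg hε1.le (fun r hr => S8.Qf_nonneg hk hg hr)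
    nlinarith [Real.pi_pos]
  refine ⟨S8.memC_F1 hε hε2, hmin, fun g hg hgmin => ?_⟩
  have h1 : energy1 ε g ≤ energy1 ε (S8.F1 ε) := hgmin _ (S8.memC_F1 hε hε2)
  exact S8.unique_min hε hε2 hg (le_antisymm h1 (hmin g hg))
end
end

section
/- Let 0 < ε < 1/2 and let f₁(r) = log( (3r + √(9r² + 16(2−ε)(1/2−ε)))/(4(2−ε)) ). Then 2π ∫_ε^1 (1/f₁′(r) + r² f₁′(r)) dr = 2π(1 − ε² + (2/3)(2ε − 1)²). -/
open Set MeasureTheory intervalIntegral Real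
noncomputable section

/-- for `0 < ε < 1/2` and
`f₁(r) = log((3r + √(9r² + 16(2-ε)(1/2-ε)))/(4(2-ε)))`, one has
`2π ∫_ε^1 (1/f₁'(r) + r² f₁'(r)) dr = 2π(1 - ε² + (2/3)(2ε - 1)²)`. -/
theorem statement9 (ε : ℝ) (hε : 0 < ε) (hε2 : ε < 1/2)
    (f1 : ℝ → ℝ)
    (hf1 : ∀ r, f1 r =
      Real.log ((3*r + Real.sqrt (9*r^2 + 16*(2 - ε)*(1/2 - ε))) / (4*(2 - ε)))) :
    2 * π * ∫ r in ε..1, (1 / deriv f1 r + r^2 * deriv f1 r) =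
      2 * π * (1 - ε^2 + (2/3) * (2*ε - 1)^2) := by
  set c : ℝ := 16*(2 - ε)*(1/2 - ε) with hcdef
  have hc : 0 < c := by
    have : (0:ℝ) < 2 - ε := by linarith
    have : (0:ℝ) < 1/2 - ε := by linarith
    positivity
  have hpos : ∀ r : ℝ, 0 < 9*r^2 + c := fun r => by positivity
  have hsq : ∀ r : ℝ, 0 < Real.sqrt (9*r^2 + c) := fun r => Real.sqrt_pos.2 (hpos r)
  have hnum : ∀ r : ℝ, 0 < 3*r + Real.sqrt (9*r^2 + c) := by
    intro r
    have h1 : 3*|r| ≤ Real.sqrt (9*r^2 + c) := by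
      have : (3*|r|)^2 ≤ 9*r^2 + c := by
        rw [mul_pow, sq_abs]; nlinarith
      calc 3*|r| = Real.sqrt ((3*|r|)^2) := (Real.sqrt_sq (by positivity)).symm
        _ ≤ Real.sqrt (9*r^2 + c) := Real.sqrt_le_sqrt this
    have h1' : 3*|r| < Real.sqrt (9*r^2 + c) := by
      have hlt : (3*|r|)^2 < 9*r^2 + c := by rw [mul_pow, sq_abs]; nlinarith
      calc 3*|r| = Real.sqrt ((3*|r|)^2) := (Real.sqrt_sq (by positivity)).symm
        _ < Real.sqrt (9*r^2 + c) := Real.sqrt_lt_sqrt (by positivity) hlt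
    have h2 : -r ≤ |r| := neg_le_abs r
    linarith
  have hk : (0:ℝ) < 4*(2 - ε) := by linarith
  -- derivative of f1
  have hderiv : deriv f1 = fun r => 3 / Real.sqrt (9*r^2 + c) := by
    funext r
    have hf1' : f1 = fun r => Real.log ((3*r + Real.sqrt (9*r^2 + c)) / (4*(2 - ε))) :=
      funext hf1
    have hs : HasDerivAt (fun r : ℝ => 9*r^2 + c) (18*r) r := by
      have := ((hasDerivAt_pow 2 r).const_mul 9).add_const c
      simpa using this.congr_deriv (by ring)
    have hsqrt : HasDerivAt (fun r : ℝ => Real.sqrt (9*r^2 + c))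
        (18*r / (2 * Real.sqrt (9*r^2 + c))) r := hs.sqrt (hpos r).ne'
    have hn : HasDerivAt (fun r : ℝ => 3*r + Real.sqrt (9*r^2 + c))
        (3 + 18*r / (2 * Real.sqrt (9*r^2 + c))) r := by
      have h3 : HasDerivAt (fun r : ℝ => 3*r) 3 r := by
        simpa using (hasDerivAt_id r).const_mul 3
      exact h3.add hsqrt
    have hu : HasDerivAt (fun r : ℝ => (3*r + Real.sqrt (9*r^2 + c)) / (4*(2 - ε)))
        ((3 + 18*r / (2 * Real.sqrt (9*r^2 + c))) / (4*(2 - ε))) r := hn.div_const _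
    have hune : (3*r + Real.sqrt (9*r^2 + c)) / (4*(2 - ε)) ≠ 0 :=
      ne_of_gt (div_pos (hnum r) hk)
    have hlog := hu.log hune
    rw [hf1', hlog.deriv]
    have hS := (hsq r).ne'
    have hN := (hnum r).ne'
    have hK := hk.ne'
    have h2e : (2:ℝ) - ε ≠ 0 := by linarith
    generalize Real.sqrt (9*r^2 + c) = S at hS hN ⊢
    field_simp
    ring
  rw [hderiv]
  have hintg : (fun r : ℝ => 1 / (3 / Real.sqrt (9*r^2 + c))
      + r^2 * (3 / Real.sqrt (9*r^2 + c)))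
      = fun r : ℝ => Real.sqrt (9*r^2 + c) / 3 + 3*r^2 / Real.sqrt (9*r^2 + c) := by
    funext r
    have hS := (hsq r).ne'
    field_simp
  simp only [hintg]
  have hcont : Continuous fun r : ℝ => Real.sqrt (9*r^2 + c) :=
    Real.continuous_sqrt.comp ((continuous_const.mul (continuous_pow 2)).add continuous_const)
  have hgc : Continuous fun r : ℝ =>
      Real.sqrt (9*r^2 + c) / 3 + 3*r^2 / Real.sqrt (9*r^2 + c) :=
    (hcont.div_const 3).add ((continuous_const.mul (continuous_pow 2)).div hcont
      (fun r => (hsq r).ne'))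
  have hder : ∀ r ∈ uIcc ε (1:ℝ), HasDerivAt (fun r : ℝ => r * Real.sqrt (9*r^2 + c) / 3)
      (Real.sqrt (9*r^2 + c) / 3 + 3*r^2 / Real.sqrt (9*r^2 + c)) r := by
    intro r hr
    have hsqrt : HasDerivAt (fun r : ℝ => Real.sqrt (9*r^2 + c))
        (18*r / (2 * Real.sqrt (9*r^2 + c))) r := by
      have hs : HasDerivAt (fun r : ℝ => 9*r^2 + c) (18*r) r := by
        have := ((hasDerivAt_pow 2 r).const_mul 9).add_const c
        simpa using this.congr_deriv (by ring)
      exact hs.sqrt (hpos r).ne'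
    have hF : HasDerivAt (fun r : ℝ => r * Real.sqrt (9*r^2 + c) / 3)
        ((1 * Real.sqrt (9*r^2 + c) + r * (18*r / (2 * Real.sqrt (9*r^2 + c)))) / 3) r :=
      ((hasDerivAt_id r).mul hsqrt).div_const 3
    convert hF using 1
    have hS := (hsq r).ne'
    generalize Real.sqrt (9*r^2 + c) = S at hS ⊢
    field_simp
    ring
  have hFTC := intervalIntegral.integral_eq_sub_of_hasDerivAt hder
      (hgc.intervalIntegrable ε 1)
  rw [hFTC]
  have h1 : Real.sqrt (9*(1:ℝ)^2 + c) = 5 - 4*ε := by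
    rw [show 9*(1:ℝ)^2 + c = (5 - 4*ε)^2 by rw [hcdef]; ring]
    exact Real.sqrt_sq (by linarith)
  have h2 : Real.sqrt (9*ε^2 + c) = 4 - 5*ε := by
    rw [show 9*ε^2 + c = (4 - 5*ε)^2 by rw [hcdef]; ring]
    exact Real.sqrt_sq (by linarith)
  rw [h1, h2]
  ring
end
end

section
/- Let 0 < ε < 1/2 and let f_ra(r) = log((r−1)/(2(1−ε)) + 1) be the logarithmic amplitude of the radial affine transformation. Then 2π ∫_ε^1 (1/f_ra′(r) + r² f_ra′(r)) dr = 2π(1 − ε² + (log 2)·(2ε − 1)²), and this value is greater than or equal to 2π(1 − ε² + (2/3)(2ε − 1)²), with equality only when ε = 1/2. -/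
open Set MeasureTheory intervalIntegral Real
noncomputable section

/-- for `0 < ε < 1/2` and the radial affine logarithmic amplitude
`f_ra(r) = log((r-1)/(2(1-ε)) + 1)`, one has
`2π ∫_ε^1 (1/f_ra'(r) + r² f_ra'(r)) dr = 2π(1 - ε² + log 2·(2ε - 1)²)`,
this value is `≥ 2π(1 - ε² + (2/3)(2ε - 1)²)`, and equality holds only when `ε = 1/2`. -/
theorem statement10 (ε : ℝ) (hε : 0 < ε) (hε2 : ε < 1/2)
    (fra : ℝ → ℝ)
    (hfra : ∀ r, fra r = Real.log ((r - 1) / (2*(1 - ε)) + 1)) :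
    (2 * π * ∫ r in ε..1, (1 / deriv fra r + r^2 * deriv fra r) =
      2 * π * (1 - ε^2 + Real.log 2 * (2*ε - 1)^2)) ∧
    2 * π * (1 - ε^2 + (2/3) * (2*ε - 1)^2) ≤
      2 * π * (1 - ε^2 + Real.log 2 * (2*ε - 1)^2) ∧
    (2 * π * (1 - ε^2 + (2/3) * (2*ε - 1)^2) =
        2 * π * (1 - ε^2 + Real.log 2 * (2*ε - 1)^2) → ε = 1/2) := by
  have hc : (0:ℝ) < 2*(1-ε) := by nlinarith
  have hfe : fra = fun r => Real.log ((r - 1) / (2*(1 - ε)) + 1) := funext hfra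
  have hle : ε ≤ (1:ℝ) := by linarith
  set a : ℝ := 1 - 2*ε with ha
  have hapos : 0 < a := by rw [ha]; linarith
  -- derivative of fra on the interval
  have hderiv : ∀ r ∈ Set.uIcc ε 1, deriv fra r = 1/(r+a) := by
    intro r hr
    rw [Set.uIcc_of_le hle] at hr
    have hpos : 0 < r + a := by have := hr.1; rw [ha]; linarith
    have hane : r + a ≠ 0 := ne_of_gt hpos
    have h1e : (1:ℝ) - ε ≠ 0 := by linarith
    have hu : (r - 1) / (2*(1 - ε)) + 1 = (r+a)/(2*(1-ε)) := by
      rw [ha]; field_simp; ring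
    have h1 : HasDerivAt (fun x : ℝ => (x - 1) / (2*(1 - ε)) + 1) (1/(2*(1-ε))) r := by
      simpa using (((hasDerivAt_id r).sub_const 1).div_const (2*(1-ε))).add_const 1
    have hne : (r - 1) / (2*(1 - ε)) + 1 ≠ 0 := by
      rw [hu]; positivity
    have h2 : HasDerivAt fra (((r - 1) / (2*(1 - ε)) + 1)⁻¹ * (1/(2*(1-ε)))) r := by
      rw [hfe]
      exact (Real.hasDerivAt_log hne).comp r h1
    rw [h2.deriv, hu]
    field_simp
  -- rewrite the integrand
  have hint : (∫ r in ε..1, (1 / deriv fra r + r^2 * deriv fra r)) =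
      ∫ r in ε..1, ((r+a) + r^2 * (1/(r+a))) := by
    apply intervalIntegral.integral_congr
    intro r hr
    simp only
    rw [hderiv r hr, one_div_one_div]
  -- FTC computation with antiderivative F x = x^2 + a^2 log (x + a)
  have hF : ∀ x ∈ Set.uIcc ε 1,
      HasDerivAt (fun x : ℝ => x^2 + a^2 * Real.log (x+a))
        ((x+a) + x^2 * (1/(x+a))) x := by
    intro x hx
    rw [Set.uIcc_of_le hle] at hx
    have hpos : 0 < x + a := by have := hx.1; rw [ha]; linarith
    have h1 : HasDerivAt (fun x : ℝ => x^2) (2*x) x := by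
      simpa using hasDerivAt_pow 2 x
    have hinner : HasDerivAt (fun x : ℝ => x + a) 1 x := by
      simpa using (hasDerivAt_id x).add_const a
    have h3 : HasDerivAt (fun x : ℝ => a^2 * Real.log (x+a)) (a^2 * (1/(x+a))) x := by
      have := ((Real.hasDerivAt_log (ne_of_gt hpos)).comp x hinner).const_mul (a^2)
      simpa using this
    have hsum := h1.add h3
    refine hsum.congr_deriv ?_
    field_simp
    ring
  have hcont : IntervalIntegrable (fun x : ℝ => (x+a) + x^2 * (1/(x+a)))
      MeasureTheory.volume ε 1 := by
    apply ContinuousOn.intervalIntegrable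
    apply ContinuousOn.add
    · fun_prop
    · apply ContinuousOn.mul (by fun_prop)
      apply ContinuousOn.div continuousOn_const (by fun_prop)
      intro x hx
      rw [Set.uIcc_of_le hle] at hx
      have := hx.1; rw [ha]; intro h; nlinarith
  have hval : (∫ r in ε..1, ((r+a) + r^2 * (1/(r+a)))) =
      ((1:ℝ)^2 + a^2 * Real.log (1+a)) - (ε^2 + a^2 * Real.log (ε+a)) :=
    intervalIntegral.integral_eq_sub_of_hasDerivAt hF hcont
  have hlog : Real.log (1+a) - Real.log (ε+a) = Real.log 2 := by
    have h1 : (1:ℝ)+a = 2*(1-ε) := by rw [ha]; ring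
    have h2 : ε+a = 1-ε := by rw [ha]; ring
    rw [h1, h2, Real.log_mul two_ne_zero (by linarith)]
    ring
  have key : (∫ r in ε..1, (1 / deriv fra r + r^2 * deriv fra r)) =
      1 - ε^2 + Real.log 2 * (2*ε - 1)^2 := by
    rw [hint, hval]
    have haa : a^2 = (2*ε-1)^2 := by rw [ha]; ring
    linear_combination a^2 * hlog + Real.log 2 * haa
  have hlog2 : (0.6931471803 : ℝ) < Real.log 2 := Real.log_two_gt_d9
  have hL : (0:ℝ) < Real.log 2 - 2/3 := by linarith
  have hs : 0 < (2*ε-1)^2 := by nlinarith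
  have hπ : 0 < π := Real.pi_pos
  refine ⟨by rw [key], ?_, ?_⟩
  · nlinarith [mul_nonneg (mul_nonneg hπ.le (sq_nonneg (2*ε-1))) hL.le]
  · intro h
    exfalso
    nlinarith [mul_pos (mul_pos hπ hs) hL]
end
end

section
/- Let 0 < ε < 1, K > 1, and f ∈ C¹([ε,1]) with f′ > 0, f(ε) = −log 2, f(1) = 0. If 1/(r f′(r)) + r f′(r) ≤ 1/K + K for all r ∈ (ε,1), then 1/(K r) ≤ f′(r) ≤ K/r for all r ∈ (ε,1), and consequently (1/K)|log r| ≤ |f(r)| ≤ K|log r| for all r ∈ (ε,1). In particular, taking r → ε, such an f can exist only if K ≥ |log ε|/log 2. -/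
open Set Real
noncomputable section

/-- if `f ∈ C¹([ε,1])` with `f' > 0`, `f(ε) = -log 2`, `f(1) = 0`, `K > 1`,
and `1/(r f'(r)) + r f'(r) ≤ 1/K + K` on `(ε,1)`, then `1/(Kr) ≤ f'(r) ≤ K/r` on `(ε,1)`,
hence `(1/K)|log r| ≤ |f(r)| ≤ K|log r|` on `(ε,1)`; in particular `K ≥ |log ε|/log 2`. -/
theorem statement11 (ε K : ℝ) (hε : 0 < ε) (hε1 : ε < 1) (hK : 1 < K)
    (f f' : ℝ → ℝ)
    (hf : ∀ r ∈ Set.Icc ε 1, HasDerivAt f (f' r) r)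
    (hf'c : ContinuousOn f' (Set.Icc ε 1))
    (hf'pos : ∀ r ∈ Set.Icc ε 1, 0 < f' r)
    (hfε : f ε = -Real.log 2) (hf1 : f 1 = 0)
    (hbound : ∀ r ∈ Set.Ioo ε 1, 1/(r * f' r) + r * f' r ≤ 1/K + K) :
    (∀ r ∈ Set.Ioo ε 1, 1/(K * r) ≤ f' r ∧ f' r ≤ K / r) ∧
    (∀ r ∈ Set.Ioo ε 1, (1/K) * |Real.log r| ≤ |f r| ∧ |f r| ≤ K * |Real.log r|) ∧
    |Real.log ε| / Real.log 2 ≤ K := by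
  have h2 : (0:ℝ) < Real.log 2 := Real.log_pos (by norm_num)
  have hK0 : (0:ℝ) < K := by linarith
  have eK : K * (1/K) = 1 := mul_one_div_cancel hK0.ne'
  -- pointwise derivative bounds
  have key : ∀ r ∈ Set.Ioo ε 1, 1/(K * r) ≤ f' r ∧ f' r ≤ K / r := by
    intro r hr
    have hr0 : 0 < r := lt_trans hε hr.1
    have hf'r : 0 < f' r := hf'pos r ⟨hr.1.le, hr.2.le⟩
    set t := r * f' r with htdef
    have ht : 0 < t := mul_pos hr0 hf'r
    have et : t * (1/t) = 1 := mul_one_div_cancel ht.ne'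
    have hb := hbound r hr
    rw [← htdef] at hb
    have et2 : K * (t * (1/t)) = K := by rw [et, mul_one]
    have eK2 : t * (K * (1/K)) = t := by rw [eK, mul_one]
    have hfact : (t - K) * (t * K - 1) ≤ 0 := by
      nlinarith [mul_le_mul_of_nonneg_left hb (mul_pos ht hK0).le, et2, eK2]
    have hhi : t ≤ K := by
      by_contra hc
      push_neg at hc
      have h1 : 0 < t - K := by linarith
      have h2' : 0 < t * K - 1 := by nlinarith
      nlinarith [mul_pos h1 h2']
    have hlo : 1/K ≤ t := by
      by_contra hc
      push_neg at hc
      have h1 : t - K < 0 := by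
        have : 1/K < K := by
          rw [div_lt_iff₀ hK0]; nlinarith
        linarith
      have h2' : t * K - 1 < 0 := by
        have := mul_lt_mul_of_pos_right hc hK0
        rw [one_div, inv_mul_cancel₀ hK0.ne'] at this
        linarith
      nlinarith [mul_pos_of_neg_of_neg h1 h2']
    constructor
    · rw [div_le_iff₀ (by positivity)]
      rw [div_le_iff₀ hK0] at hlo
      nlinarith
    · rw [le_div_iff₀ hr0]
      nlinarith
  refine ⟨key, ?_, ?_⟩
  all_goals {
    have hfc : ContinuousOn f (Icc ε 1) := fun r hr => (hf r hr).continuousAt.continuousWithinAt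
    have hlogc : ContinuousOn Real.log (Icc ε 1) :=
      Real.continuousOn_log.mono (fun x hx => by
        simp only [mem_compl_iff, mem_singleton_iff]
        exact ne_of_gt (lt_of_lt_of_le hε hx.1))
    have hgmono : MonotoneOn (fun r => K * Real.log r - f r) (Icc ε 1) := by
      apply monotoneOn_of_deriv_nonneg (convex_Icc ε 1)
        ((continuousOn_const.mul hlogc).sub hfc)
      · intro x hx
        rw [interior_Icc] at hx
        have hx0 : 0 < x := lt_trans hε hx.1
        exact (((Real.hasDerivAt_log hx0.ne').const_mul K).sub
          (hf x ⟨hx.1.le, hx.2.le⟩)).differentiableAt.differentiableWithinAt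
      · intro x hx
        rw [interior_Icc] at hx
        have hx0 : 0 < x := lt_trans hε hx.1
        have hd := (((Real.hasDerivAt_log hx0.ne').const_mul K).sub
          (hf x ⟨hx.1.le, hx.2.le⟩)).deriv
        rw [show deriv ((fun x => K) * Real.log - f) x = _ from hd]
        have := (key x hx).2
        rw [div_eq_mul_inv] at this
        linarith
    have hhmono : MonotoneOn (fun r => f r - (1/K) * Real.log r) (Icc ε 1) := by
      apply monotoneOn_of_deriv_nonneg (convex_Icc ε 1)
        (hfc.sub (continuousOn_const.mul hlogc))
      · intro x hx
        rw [interior_Icc] at hx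
        have hx0 : 0 < x := lt_trans hε hx.1
        exact ((hf x ⟨hx.1.le, hx.2.le⟩).sub
          ((Real.hasDerivAt_log hx0.ne').const_mul (1/K))).differentiableAt.differentiableWithinAt
      · intro x hx
        rw [interior_Icc] at hx
        have hx0 : 0 < x := lt_trans hε hx.1
        have hd := ((hf x ⟨hx.1.le, hx.2.le⟩).sub
          ((Real.hasDerivAt_log hx0.ne').const_mul (1/K))).deriv
        rw [show deriv (f - (fun x => 1 / K) * Real.log) x = _ from hd]
        have := (key x hx).1
        have heq : 1/(K * x) = 1/K * x⁻¹ := by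
          field_simp
        linarith [heq ▸ this]
    have h1mem : (1:ℝ) ∈ Icc ε 1 := ⟨hε1.le, le_refl 1⟩
    first
    | · intro r hr
        have hrm : r ∈ Icc ε 1 := ⟨hr.1.le, hr.2.le⟩
        have hg := hgmono hrm h1mem hr.2.le
        have hh := hhmono hrm h1mem hr.2.le
        simp only [Real.log_one, hf1, mul_zero, sub_zero, zero_sub, mul_zero] at hg hh
        -- hg : K * log r - f r ≤ 0 ; hh : f r - 1/K * log r ≤ 0
        have hr0 : 0 < r := lt_trans hε hr.1
        have hlogneg : Real.log r < 0 := Real.log_neg hr0 hr.2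
        have hfneg : f r < 0 := by nlinarith
        rw [abs_of_neg hlogneg, abs_of_neg hfneg]
        constructor <;> nlinarith
    | · have hh := hhmono (left_mem_Icc.mpr hε1.le) h1mem hε1.le
        simp only [Real.log_one, hf1, mul_zero, sub_zero, zero_sub] at hh
        rw [hfε] at hh
        have hlogneg : Real.log ε < 0 := Real.log_neg hε hε1
        rw [abs_of_neg hlogneg, div_le_iff₀ h2]
        nlinarith
  }
end
end

section
/- Let 0 < ε < 1/2. Then inf over f ∈ 𝒞 of sup_{r∈[ε,1]} (1/(r f′(r)) + r f′(r)) equals log 2/|log ε| + |log ε|/log 2, where 𝒞 = {f ∈ C¹([ε,1]) : f′ > 0, f(ε) = −log 2, f(1) = 0}; the infimum is attained by f_∞(r) = (log 2/|log ε|)·log r, for which 1/(r f_∞′(r)) + r f_∞′(r) is constantly equal to log 2/|log ε| + |log ε|/log 2. -/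
open Set MeasureTheory Real
noncomputable section

/-- elementary : 0 < t ≤ c ≤ 1 implies 1/c + c ≤ 1/t + t -/
lemma aux_phi {t c : ℝ} (ht : 0 < t) (htc : t ≤ c) (hc1 : c ≤ 1) :
    1/c + c ≤ 1/t + t := by
  have hc : 0 < c := lt_of_lt_of_le ht htc
  rw [div_add' _ _ _ hc.ne', div_add' _ _ _ ht.ne',
    div_le_div_iff₀ hc ht]
  have h1 : t * c ≤ 1 := by nlinarith
  nlinarith [mul_nonneg (sub_nonneg.2 htc) (sub_nonneg.2 h1)]

/-- for `0 < ε < 1/2`, the infimum over `f ∈ 𝒞` of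
`sup_{r ∈ [ε,1]}(1/(r f') + r f')` equals `log 2/|log ε| + |log ε|/log 2`, attained by
`f_∞(r) = (log 2/|log ε|) log r`, whose pointwise trace is constantly equal to that value:
`f_∞ ∈ 𝒞`; the quantity `1/(r f_∞') + r f_∞'` equals the optimal value for all
`r ∈ [ε,1]`; and for every `f ∈ 𝒞` there is a point of `[ε,1]` where
`1/(r f') + r f'` is at least the optimal value. -/
theorem statement12 (ε : ℝ) (hε : 0 < ε) (hε2 : ε < 1/2)
    (finf : ℝ → ℝ)
    (hfinf : ∀ r, finf r = (Real.log 2 / |Real.log ε|) * Real.log r) :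
    memC ε finf ∧
    (∀ r ∈ Set.Icc ε 1,
      1/(r * dW ε finf r) + r * dW ε finf r =
        Real.log 2 / |Real.log ε| + |Real.log ε| / Real.log 2) ∧
    (∀ g, memC ε g → ∃ r ∈ Set.Icc ε 1,
      Real.log 2 / |Real.log ε| + |Real.log ε| / Real.log 2 ≤
        1/(r * dW ε g r) + r * dW ε g r) := by
  have hε1 : ε < 1 := hε2.trans (by norm_num)
  have hlogε : Real.log ε < 0 := Real.log_neg hε hε1
  have habs : |Real.log ε| = -Real.log ε := abs_of_neg hlogε
  have hlog2 : 0 < Real.log 2 := Real.log_pos (by norm_num)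
  set c : ℝ := Real.log 2 / |Real.log ε| with hc
  have hcpos : 0 < c := div_pos hlog2 (by rw [habs]; linarith)
  have hc1 : c ≤ 1 := by
    rw [hc, habs, div_le_one (by linarith)]
    have := Real.log_le_log hε hε2.le
    rw [Real.log_div (by norm_num) (by norm_num), Real.log_one] at this
    linarith
  have hfeq : finf = fun r => c * Real.log r := funext hfinf
  have hudiff : UniqueDiffOn ℝ (Set.Icc ε 1) := uniqueDiffOn_Icc hε1
  -- derivative of finf
  have hderiv : ∀ r ∈ Set.Icc ε 1, dW ε finf r = c * r⁻¹ := by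
    intro r hr
    have hr0 : 0 < r := lt_of_lt_of_le hε hr.1
    have : HasDerivAt finf (c * r⁻¹) r := by
      rw [hfeq]
      simpa using (Real.hasDerivAt_log hr0.ne').const_mul c
    exact (this.hasDerivWithinAt).derivWithin (hudiff r hr)
  have hmem : memC ε finf := by
    refine ⟨?_, ?_, ?_, ?_⟩
    · rw [hfeq]
      exact contDiffOn_const.mul (fun x hx =>
        (Real.contDiffAt_log.2 (lt_of_lt_of_le hε hx.1).ne').contDiffWithinAt)
    · intro r hr
      rw [hderiv r hr]
      exact mul_pos hcpos (inv_pos.2 (lt_of_lt_of_le hε hr.1))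
    · rw [hfinf, hc, habs, div_neg, neg_mul, div_mul_cancel₀ _ hlogε.ne]
    · rw [hfinf, Real.log_one, mul_zero]
  refine ⟨hmem, ?_, ?_⟩
  · intro r hr
    have hr0 : 0 < r := lt_of_lt_of_le hε hr.1
    rw [hderiv r hr]
    have : r * (c * r⁻¹) = c := by field_simp
    rw [this, hc, one_div_div]
    ring
  · intro g hg
    by_contra hcon
    push_neg at hcon
    have hcon' : ∀ r ∈ Set.Icc ε 1, c < r * dW ε g r := by
      intro r hr
      have hr0 : 0 < r := lt_of_lt_of_le hε hr.1
      have ht : 0 < r * dW ε g r := mul_pos hr0 (hg.2.1 r hr)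
      by_contra hle
      push_neg at hle
      have := aux_phi ht hle hc1
      have h2 := hcon r hr
      have hrw : Real.log 2 / |Real.log ε| + |Real.log ε| / Real.log 2
          = c + 1/c := by rw [hc, one_div_div]
      rw [hrw] at h2
      linarith
    -- FTC: ∫_ε^1 dW g = g 1 - g ε = log 2
    have hcontg : ContinuousOn g (Set.Icc ε 1) := hg.1.continuousOn
    have hcontd : ContinuousOn (dW ε g) (Set.Icc ε 1) :=
      hg.1.continuousOn_derivWithin hudiff le_rfl
    have hftc : ∫ x in ε..1, dW ε g x = g 1 - g ε := by
      apply intervalIntegral.integral_eq_sub_of_hasDeriv_right_of_le hε1.le hcontg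
      · intro x hx
        have hmemnhds : Set.Icc ε 1 ∈ nhds x := Icc_mem_nhds hx.1 hx.2
        have hdiff : DifferentiableAt ℝ g x :=
          ((hg.1.differentiableOn one_ne_zero) x (Ioo_subset_Icc_self hx)).differentiableAt hmemnhds
        have : dW ε g x = deriv g x := derivWithin_of_mem_nhds hmemnhds
        rw [this]
        exact hdiff.hasDerivAt.hasDerivWithinAt
      · exact (hcontd.mono (by rw [Set.uIcc_of_le hε1.le])).intervalIntegrable
    have hval : ∫ x in ε..1, dW ε g x = Real.log 2 := by
      rw [hftc, hg.2.2.1, hg.2.2.2]; ring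
    have hftc2 : ∫ x in ε..1, c * x⁻¹ = Real.log 2 := by
      rw [intervalIntegral.integral_const_mul, integral_inv_of_pos hε one_pos, one_div,
        Real.log_inv, hc, habs, div_mul_cancel₀ _ (neg_ne_zero.2 hlogε.ne)]
    have hlt : (∫ x in ε..1, c * x⁻¹) < ∫ x in ε..1, dW ε g x := by
      apply intervalIntegral.integral_lt_integral_of_continuousOn_of_le_of_exists_lt hε1
      · exact continuousOn_const.mul (continuousOn_inv₀.mono
          (fun x hx => (lt_of_lt_of_le hε hx.1).ne'))
      · exact hcontd
      · intro x hx
        have hx' : x ∈ Set.Icc ε 1 := ⟨hx.1.le, hx.2⟩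
        have hx0 : 0 < x := lt_of_lt_of_le hε hx'.1
        have := hcon' x hx'
        rw [mul_comm, ← div_lt_iff₀ hx0] at this
        rw [mul_comm c x⁻¹, inv_mul_eq_div] at *
        linarith
      · refine ⟨ε, ⟨le_refl ε, hε1.le⟩, ?_⟩
        have := hcon' ε ⟨le_refl ε, hε1.le⟩
        rw [mul_comm, ← div_lt_iff₀ hε] at this
        rw [mul_comm c ε⁻¹, inv_mul_eq_div]
        linarith
    rw [hval, hftc2] at hlt
    exact lt_irrefl _ hlt
end
end

section
/- For 1 ≤ p < ∞ and A > 0, the Hessian D²G_p[A] of G_p[A](x,y) = (A/x + x/A + (1/A)(y²/x))^p on (0,∞) × ℝ is positive definite, and satisfies det(D²G_p[A])/trace(D²G_p[A]) > (4p/(p+1))·G_p[A](x,y)·A⁴/(A² + x² + y²)³ ≥ 4A⁴/(A² + x² + y²)³; consequently the smallest eigenvalue of D²G_p[A](x,y) is strictly greater than 4A⁴/(A² + x² + y²)³. -/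
open Set Real Matrix
noncomputable section

/-- The standard basis of `ℝ × ℝ`. -/
def e2basis : Fin 2 → ℝ × ℝ := ![(1, 0), (0, 1)]

/-- The Hessian matrix of a function `f : ℝ × ℝ → ℝ` at a point `q`. -/
noncomputable def hessM (f : ℝ × ℝ → ℝ) (q : ℝ × ℝ) : Matrix (Fin 2) (Fin 2) ℝ :=
  Matrix.of fun i j => fderiv ℝ (fun q' => fderiv ℝ f q' (e2basis j)) q (e2basis i)

namespace S14Aux

noncomputable def fstL : ℝ × ℝ →L[ℝ] ℝ := ContinuousLinearMap.fst ℝ ℝ ℝ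
noncomputable def sndL : ℝ × ℝ →L[ℝ] ℝ := ContinuousLinearMap.snd ℝ ℝ ℝ
noncomputable def lclm (a b : ℝ) : ℝ × ℝ →L[ℝ] ℝ := a • fstL + b • sndL

@[simp] lemma lclm_apply (a b : ℝ) (v : ℝ × ℝ) : lclm a b v = a * v.1 + b * v.2 := by
  simp [lclm, fstL, sndL]

lemma hasFDerivAt_fst' (q : ℝ × ℝ) : HasFDerivAt (fun q : ℝ × ℝ => q.1) fstL q :=
  hasFDerivAt_fst

lemma hasFDerivAt_snd' (q : ℝ × ℝ) : HasFDerivAt (fun q : ℝ × ℝ => q.2) sndL q :=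
  hasFDerivAt_snd

lemma hasFDerivAt_pinv (q : ℝ × ℝ) (hq : q.1 ≠ 0) :
    HasFDerivAt (fun q : ℝ × ℝ => (q.1)⁻¹) (-((q.1^2)⁻¹ • fstL)) q := by
  have h := (hasDerivAt_inv hq).comp_hasFDerivAt q (hasFDerivAt_fst' q)
  simpa [Function.comp_def, neg_smul] using h

lemma hasFDerivAt_psq (q : ℝ × ℝ) :
    HasFDerivAt (fun q : ℝ × ℝ => q.2^2) ((2*q.2) • sndL) q := by
  have h := (hasFDerivAt_snd' q).mul (hasFDerivAt_snd' q)
  have h2 : (fun q : ℝ × ℝ => q.2^2) = fun q : ℝ × ℝ => q.2 * q.2 := by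
    funext q; ring
  rw [h2]
  refine h.congr_fderiv ?_
  refine ContinuousLinearMap.ext fun v => ?_
  simp [sndL]; ring

lemma hasFDerivAt_u (A : ℝ) (hA : A ≠ 0) (x y : ℝ) (hq : x ≠ 0) :
    HasFDerivAt (fun q : ℝ × ℝ => A / q.1 + q.1 / A + (1/A) * (q.2^2 / q.1))
      (lclm ((x^2 - A^2 - y^2) / (A * x^2)) (2 * y / (A * x))) (x, y) := by
  have hfun : (fun q : ℝ × ℝ => A / q.1 + q.1 / A + (1/A) * (q.2^2 / q.1))
      = fun q : ℝ × ℝ => A * (q.1)⁻¹ + A⁻¹ * q.1 + A⁻¹ * (q.2^2 * (q.1)⁻¹) := by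
    funext q; ring
  rw [hfun]
  have h := (((hasFDerivAt_pinv (x,y) hq).const_mul A).add
      ((hasFDerivAt_fst' (x,y)).const_mul A⁻¹)).add
      (((hasFDerivAt_psq (x,y)).mul (hasFDerivAt_pinv (x,y) hq)).const_mul A⁻¹)
  refine h.congr_fderiv ?_
  refine ContinuousLinearMap.ext fun v => ?_
  simp [fstL, sndL, lclm]
  field_simp
  ring

lemma hasFDerivAt_ux (A : ℝ) (hA : A ≠ 0) (x y : ℝ) (hq : x ≠ 0) :
    HasFDerivAt (fun q : ℝ × ℝ => (q.1^2 - A^2 - q.2^2) / (A * q.1^2))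
      (lclm ((2*A^2 + 2*y^2) / (A * x^3)) (-(2*y) / (A * x^2))) (x, y) := by
  have hfun : (fun q : ℝ × ℝ => (q.1^2 - A^2 - q.2^2) / (A * q.1^2))
      = fun q : ℝ × ℝ => A⁻¹ * ((q.1^2 - A^2 - q.2^2) * ((q.1)⁻¹ * (q.1)⁻¹)) := by
    funext q; field_simp
  rw [hfun]
  have hx2 : HasFDerivAt (fun q : ℝ × ℝ => q.1^2) ((2*x) • fstL) (x, y) := by
    have h := (hasFDerivAt_fst' (x,y)).mul (hasFDerivAt_fst' (x,y))
    have h2 : (fun q : ℝ × ℝ => q.1^2) = fun q : ℝ × ℝ => q.1 * q.1 := by funext q; ring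
    rw [h2]; refine h.congr_fderiv ?_
    refine ContinuousLinearMap.ext fun v => ?_
    simp [fstL]; ring
  have hnum : HasFDerivAt (fun q : ℝ × ℝ => q.1^2 - A^2 - q.2^2)
      ((2*x) • fstL - (2*y) • sndL) (x, y) :=
    (hx2.sub_const (A^2)).sub (hasFDerivAt_psq (x,y))
  have h := ((hnum.mul ((hasFDerivAt_pinv (x,y) hq).mul (hasFDerivAt_pinv (x,y) hq))).const_mul A⁻¹)
  refine h.congr_fderiv ?_
  refine ContinuousLinearMap.ext fun v => ?_
  simp [fstL, sndL, lclm]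
  field_simp
  ring

lemma hasFDerivAt_uy (A : ℝ) (hA : A ≠ 0) (x y : ℝ) (hq : x ≠ 0) :
    HasFDerivAt (fun q : ℝ × ℝ => 2 * q.2 / (A * q.1))
      (lclm (-(2*y) / (A * x^2)) (2 / (A * x))) (x, y) := by
  have hfun : (fun q : ℝ × ℝ => 2 * q.2 / (A * q.1))
      = fun q : ℝ × ℝ => (2 * A⁻¹) * (q.2 * (q.1)⁻¹) := by
    funext q; ring
  rw [hfun]
  have h := (((hasFDerivAt_snd' (x,y)).mul (hasFDerivAt_pinv (x,y) hq)).const_mul (2 * A⁻¹))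
  refine h.congr_fderiv ?_
  refine ContinuousLinearMap.ext fun v => ?_
  simp [fstL, sndL, lclm]
  field_simp

lemma key_ineq (p A S Q : ℝ) (hp : 1 ≤ p) (hA : 0 < A) (hAS : A^2 < S) (hQ : 0 ≤ Q) :
    2*A^4*((p-1)*Q + 2*S^2) < (p+1)*S^2*((p-1)*Q + 2*A^2*S) := by
  have hS0 : 0 < S := lt_trans (by positivity) hAS
  have hA4 : A^4 < S^2 := by nlinarith
  have h1 : 0 ≤ (p-1)*Q * ((p+1)*S^2 - 2*A^4) := by
    apply mul_nonneg (mul_nonneg (by linarith) hQ)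
    nlinarith
  have h2 : 0 < 4*A^2*S^2*(S - A^2) :=
    mul_pos (by positivity) (sub_pos.2 hAS)
  have h3 : 0 ≤ (p-1)*(A^2*S^3) :=
    mul_nonneg (by linarith) (by positivity)
  nlinarith [h1, h2, h3]

lemma claims_core (p A X S Q C G : ℝ) (hp : 1 ≤ p) (hA : 0 < A) (hX : 0 < X) (hC : 0 < C)
    (hAS : A^2 < S) (hQ : 0 ≤ Q) (hG : G = C * S^2/(A^2*X^2)) (hpu : p + 1 ≤ p * G) :
    (4*p/(p + 1)) * G * A^4 / S^3 <
      (p^2*C^2*(2*S*((p-1)*Q + 2*A^2*S))/(A^4*X^6)) /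
        (p*C*((p-1)*Q + 2*S^2)/(A^2*X^4)) ∧
    4*A^4 / S^3 ≤ (4*p/(p + 1)) * G * A^4 / S^3 := by
  have hS0 : 0 < S := lt_trans (by positivity) hAS
  have hp0 : 0 < p := lt_of_lt_of_le one_pos hp
  have hp1 : 0 < p + 1 := by linarith
  have hqq : 0 ≤ (p-1)*Q := mul_nonneg (by linarith) hQ
  have hT : 0 < (p-1)*Q + 2*S^2 := by nlinarith [pow_pos hS0 2]
  have hD0 : 0 < (p-1)*Q + 2*A^2*S := by
    nlinarith [mul_pos (pow_pos hA 2) hS0]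
  constructor
  · have hR : (p^2*C^2*(2*S*((p-1)*Q + 2*A^2*S))/(A^4*X^6)) /
        (p*C*((p-1)*Q + 2*S^2)/(A^2*X^4))
        = (p*C*(2*S*((p-1)*Q + 2*A^2*S)))/((A^2*X^2)*((p-1)*Q + 2*S^2)) := by
      field_simp
    have hL : (4*p/(p + 1)) * G * A^4 / S^3
        = (4*p*C*A^4)/((p+1)*S*(A^2*X^2)) := by
      rw [hG]; field_simp
    rw [hR, hL, div_lt_div_iff₀ (by positivity) (by positivity)]
    have key := key_ineq p A S Q hp hA hAS hQ
    nlinarith [mul_pos (mul_pos hp0 hC) (mul_pos (mul_pos (pow_pos hA 2) (pow_pos hX 2)) hS0),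
      mul_lt_mul_of_pos_left key
        (by positivity : (0:ℝ) < 2 * (p*C*(A^2*X^2)))]
  · have hS3 : 0 < S^3 := by positivity
    rw [div_le_div_iff₀ hS3 hS3]
    have hG0 : 0 < G := by rw [hG]; positivity
    have h4 : 4*A^4 * (p+1) ≤ 4*p*G*A^4 := by
      nlinarith [mul_le_mul_of_nonneg_left hpu (by positivity : (0:ℝ) ≤ 4*A^4)]
    have h5 : 4*A^4 ≤ 4*p/(p+1)*G*A^4 := by
      rw [div_mul_eq_mul_div, div_mul_eq_mul_div, le_div_iff₀ hp1]
      nlinarith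
    nlinarith [mul_le_mul_of_nonneg_right h5 hS3.le]

lemma quad_core (a b c k v0 v1 : ℝ) (ht0 : 0 < a + c)
    (hk : k * (a + c) < a*c - b^2) (hv : 0 < v0^2 + v1^2) :
    k * (v0^2 + v1^2) < v0*a*v0 + v0*b*v1 + (v1*b*v0 + v1*c*v1) := by
  have hiden : (a + c) * (v0*a*v0 + v0*b*v1 + (v1*b*v0 + v1*c*v1))
      = (a*c - b^2)*(v0^2+v1^2) + (a*v0+b*v1)^2 + (b*v0+c*v1)^2 := by ring
  by_contra hcon
  push_neg at hcon
  nlinarith [mul_le_mul_of_nonneg_left hcon ht0.le, hiden,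
    mul_pos (sub_pos.2 hk) hv, sq_nonneg (a*v0+b*v1), sq_nonneg (b*v0+c*v1)]

end S14Aux

open S14Aux

set_option maxHeartbeats 1000000 in
/-- for `1 ≤ p < ∞`, `A > 0` and `G_p[A](x,y) = (A/x + x/A + (1/A)(y²/x))^p`
on `(0,∞) × ℝ`, the Hessian `D²G_p[A]` is positive definite and satisfies
`det(D²G_p[A])/trace(D²G_p[A]) > (4p/(p+1))·G_p[A]·A⁴/(A²+x²+y²)³ ≥ 4A⁴/(A²+x²+y²)³`;
consequently the smallest eigenvalue of the Hessian (expressed via the quadratic form)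
is strictly greater than `4A⁴/(A²+x²+y²)³`. -/
theorem statement14 (p A x y : ℝ) (hp : 1 ≤ p) (hA : 0 < A) (hx : 0 < x)
    (Gp : ℝ × ℝ → ℝ)
    (hG : ∀ q : ℝ × ℝ, Gp q = (A/q.1 + q.1/A + (1/A) * (q.2^2/q.1)) ^ p) :
    (hessM Gp (x, y)).PosDef ∧
    (4*p/(p + 1)) * Gp (x, y) * A^4 / (A^2 + x^2 + y^2)^3 <
      (hessM Gp (x, y)).det / (hessM Gp (x, y)).trace ∧
    4*A^4 / (A^2 + x^2 + y^2)^3 ≤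
      (4*p/(p + 1)) * Gp (x, y) * A^4 / (A^2 + x^2 + y^2)^3 ∧
    (∀ v : Fin 2 → ℝ, v ≠ 0 →
      (4*A^4 / (A^2 + x^2 + y^2)^3) * (v 0^2 + v 1^2) <
        ∑ i, ∑ j, v i * hessM Gp (x, y) i j * v j) := by
  have hA0 : A ≠ 0 := ne_of_gt hA
  have hx0 : x ≠ 0 := ne_of_gt hx
  have hp0 : 0 < p := lt_of_lt_of_le one_pos hp
  have hGfun : Gp = fun q : ℝ × ℝ => (A/q.1 + q.1/A + (1/A) * (q.2^2/q.1)) ^ p :=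
    funext hG
  have hB0 : 0 < A/x + x/A + 1/A * (y^2/x) := by positivity
  -- notation
  have hBx : A/x + x/A + 1/A * (y^2/x) = (A^2+x^2+y^2)/(A*x) := by
    field_simp
  have hC0 : (0:ℝ) < (A^2+x^2+y^2)/(A*x) := by positivity
  have hCpos : (0:ℝ) < ((A^2+x^2+y^2)/(A*x)) ^ (p-2) :=
    Real.rpow_pos_of_pos hC0 _
  have hpow1 : ((A^2+x^2+y^2)/(A*x)) ^ (p-1)
      = ((A^2+x^2+y^2)/(A*x)) ^ (p-2) * ((A^2+x^2+y^2)/(A*x)) := by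
    rw [show p-1 = (p-2)+1 by ring, Real.rpow_add_one (ne_of_gt hC0)]
  have hexp : p-1-1 = p-2 := by ring
  -- value of Gp at (x,y)
  have hG_eq : Gp (x,y) = ((A^2+x^2+y^2)/(A*x)) ^ p := by
    rw [hG (x,y), show A/(x,y).1 + (x,y).1/A + (1/A) * ((x,y).2^2/(x,y).1)
      = (A^2+x^2+y^2)/(A*x) from hBx]
  have hGxy2 : Gp (x,y) = ((A^2+x^2+y^2)/(A*x)) ^ (p-2) * (A^2+x^2+y^2)^2/(A^2*x^2) := by
    rw [hG_eq]
    have h2 : ((A^2+x^2+y^2)/(A*x)) ^ (2:ℝ) = ((A^2+x^2+y^2)/(A*x))^(2:ℕ) := by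
      rw [← Real.rpow_natCast]; norm_num
    conv_lhs => rw [show p = (p-2)+2 by ring]
    rw [Real.rpow_add hC0, h2]
    field_simp
  -- p + 1 ≤ p * Gp(x,y)
  have hpu : p + 1 ≤ p * Gp (x,y) := by
    have h2u : (2:ℝ) ≤ (A^2+x^2+y^2)/(A*x) := by
      rw [le_div_iff₀ (by positivity)]
      nlinarith [sq_nonneg (A-x), sq_nonneg y]
    have hup : (2:ℝ)^p ≤ ((A^2+x^2+y^2)/(A*x))^p :=
      Real.rpow_le_rpow (by norm_num) h2u (by linarith)
    have h2p : p + 1 ≤ (2:ℝ)^p := by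
      have h := one_add_mul_self_le_rpow_one_add (by norm_num : (-1:ℝ) ≤ 1) hp
      norm_num at h
      linarith
    rw [hG_eq]
    nlinarith [Real.rpow_pos_of_pos hC0 p, hup, h2p]
  have hAS : A^2 < A^2+x^2+y^2 := by nlinarith [sq_nonneg y, pow_pos hx 2]
  have hQ : (0:ℝ) ≤ (2*x^2-(A^2+x^2+y^2))^2+4*x^2*y^2 := by positivity
  have core := claims_core p A x (A^2+x^2+y^2) ((2*x^2-(A^2+x^2+y^2))^2+4*x^2*y^2)
    (((A^2+x^2+y^2)/(A*x)) ^ (p-2)) (Gp (x,y)) hp hA hx hCpos hAS hQ hGxy2 hpu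
  -- eventual positivity of first coordinate
  have hopen : ∀ᶠ q : ℝ × ℝ in nhds (x, y), 0 < q.1 := by
    have ho : IsOpen {q : ℝ × ℝ | 0 < q.1} := isOpen_lt continuous_const continuous_fst
    exact (ho.eventually_mem (show (x, y) ∈ {q : ℝ × ℝ | 0 < q.1} from hx)).mono
      fun q hq => hq
  -- first derivative
  have hfder : ∀ q : ℝ × ℝ, 0 < q.1 → HasFDerivAt Gp
      ((p * (A/q.1 + q.1/A + (1/A) * (q.2^2/q.1)) ^ (p-1)) •
        lclm ((q.1^2 - A^2 - q.2^2)/(A*q.1^2)) (2*q.2/(A*q.1))) q := by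
    intro q hq
    rw [hGfun]
    exact (hasFDerivAt_u A hA0 q.1 q.2 (ne_of_gt hq)).rpow_const (Or.inr hp)
  have he0 : e2basis 0 = ((1:ℝ), (0:ℝ)) := rfl
  have he1 : e2basis 1 = ((0:ℝ), (1:ℝ)) := rfl
  have hev0 : (fun q : ℝ × ℝ => fderiv ℝ Gp q (e2basis 0)) =ᶠ[nhds (x,y)]
      (fun q : ℝ × ℝ => p * (A/q.1 + q.1/A + (1/A) * (q.2^2/q.1)) ^ (p-1) *
        ((q.1^2 - A^2 - q.2^2)/(A*q.1^2))) := by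
    filter_upwards [hopen] with q hq
    rw [(hfder q hq).fderiv, he0]
    simp only [ContinuousLinearMap.coe_smul', Pi.smul_apply, lclm_apply, smul_eq_mul]
    ring
  have hev1 : (fun q : ℝ × ℝ => fderiv ℝ Gp q (e2basis 1)) =ᶠ[nhds (x,y)]
      (fun q : ℝ × ℝ => p * (A/q.1 + q.1/A + (1/A) * (q.2^2/q.1)) ^ (p-1) *
        (2*q.2/(A*q.1))) := by
    filter_upwards [hopen] with q hq
    rw [(hfder q hq).fderiv, he1]
    simp only [ContinuousLinearMap.coe_smul', Pi.smul_apply, lclm_apply, smul_eq_mul]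
    ring
  -- second derivatives
  have hu' := hasFDerivAt_u A hA0 x y hx0
  have hP1 : HasFDerivAt
      (fun q : ℝ × ℝ => (A/q.1 + q.1/A + (1/A) * (q.2^2/q.1)) ^ (p-1))
      (((p-1) * (A/x + x/A + 1/A * (y^2/x)) ^ (p-1-1)) •
        lclm ((x^2 - A^2 - y^2)/(A*x^2)) (2*y/(A*x))) (x, y) :=
    hu'.rpow_const (Or.inl (ne_of_gt hB0))
  have hgx := (hP1.const_mul p).mul (hasFDerivAt_ux A hA0 x y hx0)
  have hgy := (hP1.const_mul p).mul (hasFDerivAt_uy A hA0 x y hx0)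
  have E0 := hev0.fderiv_eq.trans hgx.fderiv
  have E1 := hev1.fderiv_eq.trans hgy.fderiv
  -- entries
  have e00 : hessM Gp (x,y) 0 0 =
      p * ((A^2+x^2+y^2)/(A*x)) ^ (p-2) *
        ((p-1)*(2*x^2 - (A^2+x^2+y^2))^2 +
          2*(A^2+x^2+y^2)*((A^2+x^2+y^2) - x^2)) / (A^2*x^4) := by
    show fderiv ℝ (fun q' => fderiv ℝ Gp q' (e2basis 0)) (x, y) (e2basis 0) = _
    rw [E0, he0]
    simp only [ContinuousLinearMap.add_apply, ContinuousLinearMap.coe_smul',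
      Pi.smul_apply, lclm_apply, smul_eq_mul]
    rw [hBx, hexp, hpow1]
    field_simp
    ring
  have e01 : hessM Gp (x,y) 0 1 =
      p * ((A^2+x^2+y^2)/(A*x)) ^ (p-2) *
        (2*y*((p-1)*(2*x^2 - (A^2+x^2+y^2)) - (A^2+x^2+y^2))) / (A^2*x^3) := by
    show fderiv ℝ (fun q' => fderiv ℝ Gp q' (e2basis 1)) (x, y) (e2basis 0) = _
    rw [E1, he0]
    simp only [ContinuousLinearMap.add_apply, ContinuousLinearMap.coe_smul',
      Pi.smul_apply, lclm_apply, smul_eq_mul]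
    rw [hBx, hexp, hpow1]
    field_simp
    ring
  have e10 : hessM Gp (x,y) 1 0 =
      p * ((A^2+x^2+y^2)/(A*x)) ^ (p-2) *
        (2*y*((p-1)*(2*x^2 - (A^2+x^2+y^2)) - (A^2+x^2+y^2))) / (A^2*x^3) := by
    show fderiv ℝ (fun q' => fderiv ℝ Gp q' (e2basis 0)) (x, y) (e2basis 1) = _
    rw [E0, he1]
    simp only [ContinuousLinearMap.add_apply, ContinuousLinearMap.coe_smul',
      Pi.smul_apply, lclm_apply, smul_eq_mul]
    rw [hBx, hexp, hpow1]
    field_simp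
    ring
  have e11 : hessM Gp (x,y) 1 1 =
      p * ((A^2+x^2+y^2)/(A*x)) ^ (p-2) *
        ((p-1)*4*y^2 + 2*(A^2+x^2+y^2)) / (A^2*x^2) := by
    show fderiv ℝ (fun q' => fderiv ℝ Gp q' (e2basis 1)) (x, y) (e2basis 1) = _
    rw [E1, he1]
    simp only [ContinuousLinearMap.add_apply, ContinuousLinearMap.coe_smul',
      Pi.smul_apply, lclm_apply, smul_eq_mul]
    rw [hBx, hexp, hpow1]
    field_simp
    ring
  -- det and trace
  have hdet : (hessM Gp (x,y)).det =
      p^2*(((A^2+x^2+y^2)/(A*x)) ^ (p-2))^2*(2*(A^2+x^2+y^2)*((p-1)*((2*x^2-(A^2+x^2+y^2))^2+4*x^2*y^2) + 2*A^2*(A^2+x^2+y^2)))/(A^4*x^6) := by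
    rw [Matrix.det_fin_two, e00, e01, e10, e11]
    field_simp
    ring
  have htr : (hessM Gp (x,y)).trace =
      p*(((A^2+x^2+y^2)/(A*x)) ^ (p-2))*((p-1)*((2*x^2-(A^2+x^2+y^2))^2+4*x^2*y^2) + 2*(A^2+x^2+y^2)^2)/(A^2*x^4) := by
    rw [Matrix.trace_fin_two, e00, e11]
    field_simp
    ring
  have claim2 : (4*p/(p + 1)) * Gp (x, y) * A^4 / (A^2 + x^2 + y^2)^3 <
      (hessM Gp (x, y)).det / (hessM Gp (x, y)).trace := by
    rw [hdet, htr]; exact core.1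
  have claim3 : 4*A^4 / (A^2 + x^2 + y^2)^3 ≤
      (4*p/(p + 1)) * Gp (x, y) * A^4 / (A^2 + x^2 + y^2)^3 := core.2
  -- trace positivity
  have hqq : (0:ℝ) ≤ (p-1)*((2*x^2-(A^2+x^2+y^2))^2+4*x^2*y^2) :=
    mul_nonneg (by linarith) hQ
  have hTpos : (0:ℝ) < (p-1)*((2*x^2-(A^2+x^2+y^2))^2+4*x^2*y^2) + 2*(A^2+x^2+y^2)^2 := by
    nlinarith [pow_pos (show (0:ℝ) < A^2+x^2+y^2 by positivity) 2]
  have htr_pos : 0 < (hessM Gp (x,y)).trace := by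
    rw [htr]
    exact div_pos (mul_pos (mul_pos hp0 hCpos) hTpos) (by positivity)
  -- simple forms
  have htr_simple : (hessM Gp (x,y)).trace =
      (p * ((A^2+x^2+y^2)/(A*x)) ^ (p-2) *
        ((p-1)*(2*x^2 - (A^2+x^2+y^2))^2 +
          2*(A^2+x^2+y^2)*((A^2+x^2+y^2) - x^2)) / (A^2*x^4)) +
      (p * ((A^2+x^2+y^2)/(A*x)) ^ (p-2) *
        ((p-1)*4*y^2 + 2*(A^2+x^2+y^2)) / (A^2*x^2)) := by
    rw [Matrix.trace_fin_two, e00, e11]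
  have hdet_simple : (hessM Gp (x,y)).det =
      (p * ((A^2+x^2+y^2)/(A*x)) ^ (p-2) *
        ((p-1)*(2*x^2 - (A^2+x^2+y^2))^2 +
          2*(A^2+x^2+y^2)*((A^2+x^2+y^2) - x^2)) / (A^2*x^4)) *
      (p * ((A^2+x^2+y^2)/(A*x)) ^ (p-2) *
        ((p-1)*4*y^2 + 2*(A^2+x^2+y^2)) / (A^2*x^2)) -
      (p * ((A^2+x^2+y^2)/(A*x)) ^ (p-2) *
        (2*y*((p-1)*(2*x^2 - (A^2+x^2+y^2)) - (A^2+x^2+y^2))) / (A^2*x^3))^2 := by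
    rw [Matrix.det_fin_two, e00, e01, e10, e11]
    ring
  have hdt : 4*A^4/(A^2+x^2+y^2)^3 < (hessM Gp (x,y)).det / (hessM Gp (x,y)).trace :=
    lt_of_le_of_lt claim3 claim2
  have hktd : 4*A^4/(A^2+x^2+y^2)^3 * (hessM Gp (x,y)).trace < (hessM Gp (x,y)).det :=
    (lt_div_iff₀ htr_pos).1 hdt
  rw [htr_simple, hdet_simple] at hktd
  rw [htr_simple] at htr_pos
  -- claim 4
  have claim4 : ∀ v : Fin 2 → ℝ, v ≠ 0 →
      (4*A^4 / (A^2 + x^2 + y^2)^3) * (v 0^2 + v 1^2) <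
        ∑ i, ∑ j, v i * hessM Gp (x, y) i j * v j := by
    intro v hv
    have hv01 : v 0 ≠ 0 ∨ v 1 ≠ 0 := by
      by_contra h
      push_neg at h
      apply hv
      funext i
      fin_cases i
      · exact h.1
      · exact h.2
    have hv2 : 0 < v 0^2 + v 1^2 := by
      rcases hv01 with h | h
      · have h0 : 0 < v 0^2 := by rw [sq]; exact mul_self_pos.mpr h
        linarith only [h0, sq_nonneg (v 1)]
      · have h0 : 0 < v 1^2 := by rw [sq]; exact mul_self_pos.mpr h
        linarith only [h0, sq_nonneg (v 0)]
    have hq := quad_core _ _ _ _ (v 0) (v 1) htr_pos hktd hv2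
    simp only [Fin.sum_univ_two]
    rw [e00, e01, e10, e11]
    exact hq
  -- positive definiteness
  have hk0 : (0:ℝ) < 4*A^4/(A^2+x^2+y^2)^3 := by positivity
  have hsym : hessM Gp (x,y) 0 1 = hessM Gp (x,y) 1 0 := by rw [e01, e10]
  have hposdef : (hessM Gp (x,y)).PosDef := by
    rw [Matrix.posDef_iff_dotProduct_mulVec]
    constructor
    · show (hessM Gp (x,y)).conjTranspose = hessM Gp (x,y)
      ext i j
      rw [Matrix.conjTranspose_apply, star_trivial]
      fin_cases i <;> fin_cases j
      · rfl
      · exact hsym.symm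
      · exact hsym
      · rfl
    · intro v hv
      have hk1 : (0:ℝ) ≤ 4*A^4/(A^2+x^2+y^2)^3 * (v 0^2 + v 1^2) := by positivity
      have hqf : dotProduct (star v) (hessM Gp (x,y) *ᵥ v)
          = ∑ i, ∑ j, v i * hessM Gp (x, y) i j * v j := by
        simp only [dotProduct, Matrix.mulVec, Fin.sum_univ_two, Pi.star_apply,
          star_trivial]
        ring
      rw [hqf]
      exact lt_of_le_of_lt hk1 (claim4 v hv)
  exact ⟨hposdef, claim2, claim3, claim4⟩
end
end

section
/- For 1 ≤ p < ∞, A > 0 and M > 0, the function (x,y) ↦ G_p[A](x,y) − (2A⁴/(A² + M²)³)·(x² + y²) is convex on the set {(x,y) ∈ (0,∞) × ℝ : x² + y² < M²}. -/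
open Set Real
noncomputable section

private lemma keyQ (A x1 y1 a b : ℝ) :
    A^2*x1^2*(a^2+b^2) ≤ (A^2+x1^2+y1^2)*(A^2*a^2+(b*x1-y1*a)^2) := by
  nlinarith [sq_nonneg (A^2*a - y1*(b*x1-y1*a)),
    mul_nonneg (sq_nonneg x1) (sq_nonneg (b*x1-y1*a))]

private lemma key_ord (A M x x1 y1 x2 y2 : ℝ) (hA : 0 < A) (hM : 0 < M)
    (hx : 0 < x) (hx2 : 0 < x2) (hxx1 : x ≤ x1) (h21 : x2 ≤ x1) (h2M : x2 ≤ M)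
    (h1M : x1^2 + y1^2 ≤ M^2) :
    2*A^5*(x*x1*x2)*((x1-x2)^2+(y1-y2)^2)
      ≤ (A^2+M^2)^3*(A^2*(x1-x2)^2+(y1*x2-y2*x1)^2) := by
  have hx1 : 0 < x1 := lt_of_lt_of_le hx2 h21
  have hkQ := keyQ A x1 y1 (x1-x2) (y1-y2)
  have hQid : ((y1-y2)*x1 - y1*(x1-x2))^2 = (y1*x2-y2*x1)^2 := by ring
  rw [hQid] at hkQ
  set s := (x1-x2)^2+(y1-y2)^2 with hsdef
  set Q := A^2*(x1-x2)^2+(y1*x2-y2*x1)^2 with hQdef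
  have hQ0 : 0 ≤ Q := by positivity
  have hs0 : 0 ≤ s := by positivity
  have hA2 : A^2*x1^2*s ≤ (A^2+M^2)*Q := by nlinarith
  have hxb : x*x1*x2 ≤ M*x1^2 := by
    have h := mul_le_mul_of_nonneg_left (mul_le_mul hxx1 h2M hx2.le hx1.le) hx1.le
    nlinarith [h]
  have t1 : 2*A^5*(x*x1*x2)*s ≤ 2*A^5*(M*x1^2)*s :=
    mul_le_mul_of_nonneg_right
      (mul_le_mul_of_nonneg_left hxb (by positivity : (0:ℝ) ≤ 2*A^5)) hs0
  have e1 : 2*A^5*(M*x1^2)*s = 2*A^3*M*(A^2*x1^2*s) := by ring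
  have t2 : 2*A^3*M*(A^2*x1^2*s) ≤ 2*A^3*M*((A^2+M^2)*Q) :=
    mul_le_mul_of_nonneg_left hA2 (by positivity)
  have h2AM : 2*A^3*M ≤ (A^2+M^2)^2 := by
    nlinarith [mul_nonneg (sq_nonneg (A-M)) (sq_nonneg A), sq_nonneg (A*M), sq_nonneg (M^2)]
  have t3 : 2*A^3*M*((A^2+M^2)*Q) ≤ (A^2+M^2)^2*((A^2+M^2)*Q) :=
    mul_le_mul_of_nonneg_right h2AM (mul_nonneg (by positivity) hQ0)
  have e2 : (A^2+M^2)^2*((A^2+M^2)*Q) = (A^2+M^2)^3*Q := by ring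
  linarith

private lemma key (A M x x1 y1 x2 y2 : ℝ) (hA : 0 < A) (hM : 0 < M)
    (hx : 0 < x) (hx1 : 0 < x1) (hx2 : 0 < x2) (hxmax : x ≤ max x1 x2)
    (h1M : x1^2 + y1^2 < M^2) (h2M : x2^2 + y2^2 < M^2) :
    2*A^5*(x*x1*x2)*((x1-x2)^2+(y1-y2)^2)
      ≤ (A^2+M^2)^3*(A^2*(x1-x2)^2+(y1*x2-y2*x1)^2) := by
  have hm1 : x1 ≤ M := by nlinarith [sq_nonneg y1]
  have hm2 : x2 ≤ M := by nlinarith [sq_nonneg y2]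
  rcases le_total x2 x1 with h | h
  · have hxx1 : x ≤ x1 := by rw [max_eq_left h] at hxmax; exact hxmax
    exact key_ord A M x x1 y1 x2 y2 hA hM hx hx2 hxx1 h hm2 h1M.le
  · have hxx2 : x ≤ x2 := by rw [max_eq_right h] at hxmax; exact hxmax
    have hk := key_ord A M x x2 y2 x1 y1 hA hM hx hx1 hxx2 h hm1 h2M.le
    nlinarith [hk]

private lemma S_convex (M : ℝ) :
    Convex ℝ {q : ℝ × ℝ | 0 < q.1 ∧ q.1^2 + q.2^2 < M^2} := by
  intro P hP Q hQ a b ha hb hab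
  obtain ⟨hP1, hP2⟩ := hP
  obtain ⟨hQ1, hQ2⟩ := hQ
  constructor
  · show 0 < (a • P + b • Q).1
    simp only [Prod.fst_add, Prod.smul_fst, smul_eq_mul]
    have h1 : min P.1 Q.1 ≤ P.1 := min_le_left _ _
    have h2 : min P.1 Q.1 ≤ Q.1 := min_le_right _ _
    have h3 : 0 < min P.1 Q.1 := lt_min hP1 hQ1
    nlinarith [mul_le_mul_of_nonneg_left h1 ha, mul_le_mul_of_nonneg_left h2 hb]
  · show (a • P + b • Q).1^2 + (a • P + b • Q).2^2 < M^2
    simp only [Prod.fst_add, Prod.smul_fst, Prod.snd_add, Prod.smul_snd, smul_eq_mul]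
    have hmix : a*(P.1^2+P.2^2) + b*(Q.1^2+Q.2^2) < M^2 := by
      rcases eq_or_lt_of_le ha with h | h
      · have hb1 : b = 1 := by linarith
        rw [← h, hb1]; linarith
      · nlinarith [mul_lt_mul_of_pos_left hP2 h, mul_le_mul_of_nonneg_left hQ2.le hb]
    nlinarith [mul_nonneg (mul_nonneg ha hb) (sq_nonneg (P.1-Q.1)),
      mul_nonneg (mul_nonneg ha hb) (sq_nonneg (P.2-Q.2))]

private lemma hu_convex (A M : ℝ) (hA : 0 < A) (hM : 0 < M) :
    ConvexOn ℝ {q : ℝ × ℝ | 0 < q.1 ∧ q.1^2 + q.2^2 < M^2}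
      (fun q : ℝ × ℝ =>
        A/q.1 + q.1/A + (1/A) * (q.2^2/q.1)
          - (2*A^4/(A^2 + M^2)^3) * (q.1^2 + q.2^2)) := by
  refine ⟨S_convex M, ?_⟩
  intro P hP Q hQ a b ha hb hab
  obtain ⟨hx1, hd1⟩ := hP
  obtain ⟨hx2, hd2⟩ := hQ
  have hcomb := S_convex M (mem_setOf.mpr ⟨hx1, hd1⟩) (mem_setOf.mpr ⟨hx2, hd2⟩) ha hb hab
  have hb' : b = 1 - a := by linarith
  subst hb'
  have hxc : 0 < a * P.1 + (1-a) * Q.1 := by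
    simpa only [Prod.fst_add, Prod.smul_fst, smul_eq_mul] using hcomb.1
  have hxmax : a*P.1+(1-a)*Q.1 ≤ max P.1 Q.1 := by
    have h1 : P.1 ≤ max P.1 Q.1 := le_max_left _ _
    have h2 : Q.1 ≤ max P.1 Q.1 := le_max_right _ _
    nlinarith [mul_le_mul_of_nonneg_left h1 ha, mul_le_mul_of_nonneg_left h2 hb]
  have hk := key A M (a*P.1+(1-a)*Q.1) P.1 P.2 Q.1 Q.2 hA hM hxc hx1 hx2 hxmax hd1 hd2
  simp only [Prod.fst_add, Prod.smul_fst, Prod.snd_add, Prod.smul_snd, smul_eq_mul]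
  rw [← sub_nonneg]
  have hid :
      a * (A/P.1 + P.1/A + (1/A) * (P.2^2/P.1)
            - (2*A^4/(A^2 + M^2)^3) * (P.1^2 + P.2^2))
        + (1-a) * (A/Q.1 + Q.1/A + (1/A) * (Q.2^2/Q.1)
            - (2*A^4/(A^2 + M^2)^3) * (Q.1^2 + Q.2^2))
        - (A/(a*P.1+(1-a)*Q.1) + (a*P.1+(1-a)*Q.1)/A
            + (1/A) * ((a*P.2+(1-a)*Q.2)^2/(a*P.1+(1-a)*Q.1))
            - (2*A^4/(A^2 + M^2)^3) * ((a*P.1+(1-a)*Q.1)^2 + (a*P.2+(1-a)*Q.2)^2))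
      = a * (1-a) *
          ((A^2*(P.1-Q.1)^2 + (P.2*Q.1-Q.2*P.1)^2)
              / (A*(a*P.1+(1-a)*Q.1)*P.1*Q.1)
            - (2*A^4/(A^2 + M^2)^3) * ((P.1-Q.1)^2 + (P.2-Q.2)^2)) := by
    field_simp
    ring
  rw [hid]
  apply mul_nonneg (mul_nonneg ha hb)
  clear hid
  rw [sub_nonneg, div_mul_eq_mul_div, le_div_iff₀ (by positivity),
    div_mul_eq_mul_div, div_le_iff₀ (by positivity)]
  calc 2 * A ^ 4 * ((P.1 - Q.1) ^ 2 + (P.2 - Q.2) ^ 2) * (A * (a * P.1 + (1 - a) * Q.1) * P.1 * Q.1)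
      = 2 * A ^ 5 * ((a * P.1 + (1 - a) * Q.1) * P.1 * Q.1) * ((P.1 - Q.1) ^ 2 + (P.2 - Q.2) ^ 2) := by
        ring
    _ ≤ (A ^ 2 + M ^ 2) ^ 3 * (A ^ 2 * (P.1 - Q.1) ^ 2 + (P.2 * Q.1 - Q.2 * P.1) ^ 2) := hk
    _ = (A ^ 2 * (P.1 - Q.1) ^ 2 + (P.2 * Q.1 - Q.2 * P.1) ^ 2) * (A ^ 2 + M ^ 2) ^ 3 := mul_comm _ _


private lemma comp_aux {S : Set (ℝ × ℝ)} {t : Set ℝ} {u : ℝ × ℝ → ℝ} {g : ℝ → ℝ}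
    (hg : ConvexOn ℝ t g) (hu : ConvexOn ℝ S u) (hmono : MonotoneOn g t)
    (hmem : ∀ q ∈ S, u q ∈ t) : ConvexOn ℝ S (fun q => g (u q)) :=
  ⟨hu.1, fun x hx y hy a b ha hb hab =>
    (hmono (hmem _ (hu.1 hx hy ha hb hab))
        (hg.1 (hmem _ hx) (hmem _ hy) ha hb hab)
        (hu.2 hx hy ha hb hab)).trans
      (hg.2 (hmem _ hx) (hmem _ hy) ha hb hab)⟩

private lemma phi_convex {p : ℝ} (hp : 1 ≤ p) :
    ConvexOn ℝ (Ici (2:ℝ)) (fun t : ℝ => t ^ p - t) := by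
  have h1 : ConvexOn ℝ (Ici (2:ℝ)) (fun t : ℝ => t ^ p) :=
    (convexOn_rpow hp).subset (Ici_subset_Ici.mpr (by norm_num)) (convex_Ici 2)
  exact h1.sub (concaveOn_id (convex_Ici 2))

private lemma phi_mono {p : ℝ} (hp : 1 ≤ p) :
    MonotoneOn (fun t : ℝ => t ^ p - t) (Ici (2:ℝ)) := by
  intro s hs t ht hst
  simp only [mem_Ici] at hs ht
  have hs1 : (1:ℝ) ≤ s := by linarith
  have ht1 : (1:ℝ) ≤ t := by linarith
  have hp1 : (0:ℝ) ≤ p - 1 := by linarith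
  have h1 : (1:ℝ) ≤ s ^ (p-1) := Real.one_le_rpow hs1 hp1
  have h2 : s ^ (p-1) ≤ t ^ (p-1) := Real.rpow_le_rpow (by linarith) hst hp1
  have h3 : s ^ p = s ^ (p-1) * s := by
    rw [← Real.rpow_add_one (by positivity : s ≠ 0)]; norm_num
  have h4 : t ^ p = t ^ (p-1) * t := by
    rw [← Real.rpow_add_one (by positivity : t ≠ 0)]; norm_num
  have e1 : 0 ≤ (t ^ (p-1) - s ^ (p-1)) * t := mul_nonneg (by linarith) (by linarith)
  have e2 : 0 ≤ (s ^ (p-1) - 1) * (t - s) := mul_nonneg (by linarith) (by linarith)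
  simp only
  nlinarith [e1, e2]

/-- for `1 ≤ p < ∞`, `A > 0` and `M > 0`, the function
`(x,y) ↦ G_p[A](x,y) - (2A⁴/(A² + M²)³)(x² + y²)`, with
`G_p[A](x,y) = (A/x + x/A + (1/A)(y²/x))^p`, is convex on
`{(x,y) : x > 0, x² + y² < M²}`. -/
theorem statement15 (p A M : ℝ) (hp : 1 ≤ p) (hA : 0 < A) (hM : 0 < M) :
    ConvexOn ℝ {q : ℝ × ℝ | 0 < q.1 ∧ q.1^2 + q.2^2 < M^2}
      (fun q : ℝ × ℝ =>
        (A/q.1 + q.1/A + (1/A) * (q.2^2/q.1)) ^ p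
          - (2*A^4/(A^2 + M^2)^3) * (q.1^2 + q.2^2)) := by
  set S := {q : ℝ × ℝ | 0 < q.1 ∧ q.1^2 + q.2^2 < M^2} with hS
  have hu := hu_convex A M hA hM
  -- convexity of the quadratic part
  have hsq : ConvexOn ℝ S (fun q : ℝ × ℝ => (2*A^4/(A^2 + M^2)^3) * (q.1^2 + q.2^2)) := by
    refine ⟨S_convex M, ?_⟩
    intro P hP Q hQ a b ha hb hab
    have hb' : b = 1 - a := by linarith
    subst hb'
    simp only [Prod.fst_add, Prod.smul_fst, Prod.snd_add, Prod.smul_snd, smul_eq_mul]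
    have hC : (0:ℝ) ≤ 2*A^4/(A^2 + M^2)^3 := by positivity
    nlinarith [mul_nonneg (mul_nonneg hC (mul_nonneg ha hb)) (sq_nonneg (P.1-Q.1)),
      mul_nonneg (mul_nonneg hC (mul_nonneg ha hb)) (sq_nonneg (P.2-Q.2)), sq_nonneg (P.1-Q.1), sq_nonneg (P.2-Q.2)]
  -- convexity of u alone
  have hu' : ConvexOn ℝ S (fun q : ℝ × ℝ => A/q.1 + q.1/A + (1/A) * (q.2^2/q.1)) := by
    have h := hu.add hsq
    have he : ((fun q : ℝ × ℝ =>
          A/q.1 + q.1/A + (1/A) * (q.2^2/q.1)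
            - (2*A^4/(A^2 + M^2)^3) * (q.1^2 + q.2^2))
        + (fun q : ℝ × ℝ => (2*A^4/(A^2 + M^2)^3) * (q.1^2 + q.2^2)))
        = fun q : ℝ × ℝ => A/q.1 + q.1/A + (1/A) * (q.2^2/q.1) := by
      funext q; simp only [Pi.add_apply]; ring
    rwa [he] at h
  -- u maps S into [2, ∞)
  have hmem : ∀ q ∈ S, (A/q.1 + q.1/A + (1/A) * (q.2^2/q.1)) ∈ Ici (2:ℝ) := by
    intro q hq
    obtain ⟨hx, _⟩ := hq
    have h2 : 2 ≤ A/q.1 + q.1/A := by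
      rw [div_add_div _ _ (ne_of_gt hx) (ne_of_gt hA), le_div_iff₀ (mul_pos hx hA)]
      nlinarith [sq_nonneg (A - q.1)]
    have h3 : 0 ≤ (1/A) * (q.2^2/q.1) := by positivity
    simp only [mem_Ici]; linarith
  have hcomp : ConvexOn ℝ S
      (fun q : ℝ × ℝ => (A/q.1 + q.1/A + (1/A) * (q.2^2/q.1)) ^ p
        - (A/q.1 + q.1/A + (1/A) * (q.2^2/q.1))) :=
    comp_aux (phi_convex hp) hu' (phi_mono hp) hmem
  have hfinal := hcomp.add hu
  have he2 : ((fun q : ℝ × ℝ => (A/q.1 + q.1/A + (1/A) * (q.2^2/q.1)) ^ p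
        - (A/q.1 + q.1/A + (1/A) * (q.2^2/q.1)))
      + (fun q : ℝ × ℝ =>
          A/q.1 + q.1/A + (1/A) * (q.2^2/q.1)
            - (2*A^4/(A^2 + M^2)^3) * (q.1^2 + q.2^2)))
      = fun q : ℝ × ℝ =>
          (A/q.1 + q.1/A + (1/A) * (q.2^2/q.1)) ^ p
            - (2*A^4/(A^2 + M^2)^3) * (q.1^2 + q.2^2) := by
    funext q; simp only [Pi.add_apply]; ring
  rwa [he2] at hfinal
end
end

section
/- Let 0 < ε < 1/2, 1 ≤ p < ∞, n ≥ 1, and let V be a continuous ℝ²-valued vector field on the closed annulus Ā = {ε ≤ |x| ≤ 1} with inf|V| > 0. For C¹ functions u on Ā satisfying Du·V ≥ 1/n and |Du| ≤ n pointwise, define F_p(u) = ∫_A ((|Du|² + |V|²)/(Du·V))^p dx. Then for any two such functions u, v and any τ ∈ [0,1], F_p(τu + (1−τ)v) ≤ τ F_p(u) + (1−τ) F_p(v) − τ(1−τ)·K·∫_A |D(u−v)|² dx, where K = 2(inf|V|)⁴/(n² + (sup|V|)²)³ > 0. In particular F_p is strictly convex on this set. -/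
open Set MeasureTheory Real
noncomputable section

/-- The gradient (as a `Fin 2`-indexed vector) of a scalar function on ℝ². -/
noncomputable def gradV (f : E2 → ℝ) (x : E2) : Fin 2 → ℝ :=
  fun j => fderiv ℝ f x (EuclideanSpace.single j 1)

/-- The Euclidean norm of a `Fin 2`-indexed vector. -/
noncomputable def vnorm (v : Fin 2 → ℝ) : ℝ := Real.sqrt (v 0 ^ 2 + v 1 ^ 2)

/-- The squared Euclidean norm of a `Fin 2`-indexed vector. -/
def sqv (v : Fin 2 → ℝ) : ℝ := v 0 ^ 2 + v 1 ^ 2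

/-- The Euclidean dot product of two `Fin 2`-indexed vectors. -/
def dotv (v w : Fin 2 → ℝ) : ℝ := v 0 * w 0 + v 1 * w 1

/-- The open annulus `{ε < |x| < 1}`. -/
def annO (ε : ℝ) : Set E2 := {x : E2 | ε < ‖x‖ ∧ ‖x‖ < 1}

/-- The closed annulus `{ε ≤ |x| ≤ 1}`. -/
def annC (ε : ℝ) : Set E2 := {x : E2 | ε ≤ ‖x‖ ∧ ‖x‖ ≤ 1}

/-- The anisotropy energy `F_p(u) = ∫_A ((|Du|² + |V|²)/(Du·V))^p dx`, expressed in
terms of the gradient `Du`. -/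
noncomputable def Fp (ε p : ℝ) (V : E2 → Fin 2 → ℝ) (u : E2 → ℝ) : ℝ :=
  ∫ x in annO ε, ((sqv (gradV u x) + sqv (V x)) / dotv (gradV u x) (V x)) ^ p

set_option maxHeartbeats 1000000

lemma sos_ineq (A D T2 d e : ℝ) (hd : 0 < d) :
    A^2*d^2*(D^2+T2^2) ≤ (A^2*D^2+(e*D-d*T2)^2)*(A^2+d^2+e^2) := by
  have hpos : 0 < d^2+e^2 := by positivity
  nlinarith [sq_nonneg (d*(d^2+e^2)*T2 - e*(A^2+d^2+e^2)*D), sq_nonneg (A^2*d*D)]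

lemma star_ineq (n m S A N sqD dprod dM : ℝ) (hn : 1 ≤ n) (hm0 : 0 < m) (hmS : m ≤ S)
    (hA1 : m^2 ≤ A) (hA2 : A ≤ S^2) (hNnn : 0 ≤ N) (hsqD : 0 ≤ sqD) (hdM : 0 < dM)
    (hdM2 : dM^2 ≤ n^2*A) (hdprod : dprod ≤ dM^3) (hdprodnn : 0 ≤ dprod)
    (heig : A*dM^2*sqD ≤ N*(A+n^2)) :
    2*m^4*dprod*sqD ≤ N*(n^2+S^2)^3 := by
  have hn0 : (0:ℝ) < n := by linarith
  have hApos : (0:ℝ) < A := lt_of_lt_of_le (by positivity) hA1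
  have h1 : 2*m^3*n ≤ (n^2+S^2)^2 := by
    nlinarith [sq_nonneg (S*(S-n)), sq_nonneg (S*n), mul_pos hm0 hn0,
      pow_le_pow_left₀ hm0.le hmS 3]
  have h2 : 4*m^6*n^2 ≤ (n^2+S^2)^4 := by
    nlinarith [mul_le_mul h1 h1 (by positivity) (by positivity)]
  have hb : 2*m^4*dM ≤ A*(n^2+S^2)^2 := by
    have hsq : (2*m^4*dM)^2 ≤ (A*(n^2+S^2)^2)^2 := by
      have e2 : 4*m^8*dM^2 ≤ 4*m^8*(n^2*A) := by nlinarith [pow_pos hm0 8]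
      have e3 : 4*m^8*(n^2*A) ≤ (m^2*(n^2+S^2)^4)*A := by
        nlinarith [mul_le_mul_of_nonneg_right (mul_le_mul_of_nonneg_left h2 (sq_nonneg m)) hApos.le]
      have e4 : (m^2*(n^2+S^2)^4)*A ≤ (A*(n^2+S^2)^2)^2 := by
        have : m^2*A ≤ A*A := by nlinarith
        nlinarith [pow_pos (show (0:ℝ) < n^2+S^2 by positivity) 4]
      nlinarith
    have hbn : (0:ℝ) ≤ 2*m^4*dM := by positivity
    have han : (0:ℝ) ≤ A*(n^2+S^2)^2 := by positivity
    exact (pow_le_pow_iff_left₀ hbn han two_ne_zero).mp hsq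
  calc 2*m^4*dprod*sqD ≤ 2*m^4*dM^3*sqD := by
        nlinarith [mul_le_mul_of_nonneg_left hdprod (show (0:ℝ) ≤ 2*m^4*sqD by positivity)]
    _ = (2*m^4*dM)*(dM^2*sqD) := by ring
    _ ≤ (A*(n^2+S^2)^2)*(dM^2*sqD) := mul_le_mul_of_nonneg_right hb (by positivity)
    _ = (n^2+S^2)^2*(A*dM^2*sqD) := by ring
    _ ≤ (n^2+S^2)^2*(N*(A+n^2)) := mul_le_mul_of_nonneg_left heig (by positivity)
    _ ≤ N*(n^2+S^2)^3 := by
        have hle : A + n^2 ≤ n^2+S^2 := by linarith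
        nlinarith [mul_le_mul_of_nonneg_left hle (show (0:ℝ) ≤ N*(n^2+S^2)^2 by positivity)]

lemma key_core (n m S τ : ℝ)
    (hn : 1 ≤ n) (hm0 : 0 < m) (hmS : m ≤ S)
    (t0 : 0 ≤ τ) (t1 : τ ≤ 1)
    (V0 V1 w10 w11 w20 w21 : ℝ)
    (hA1 : m^2 ≤ V0^2+V1^2) (hA2 : V0^2+V1^2 ≤ S^2)
    (hd1 : 1/n ≤ w10*V0+w11*V1) (hq1 : w10^2+w11^2 ≤ n^2)
    (hd2 : 1/n ≤ w20*V0+w21*V1) (hq2 : w20^2+w21^2 ≤ n^2) :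
    τ*(1-τ)*(2*m^4/(n^2+S^2)^3)*((w10-w20)^2+(w11-w21)^2)
      ≤ τ*((w10^2+w11^2+(V0^2+V1^2))/(w10*V0+w11*V1))
        + (1-τ)*((w20^2+w21^2+(V0^2+V1^2))/(w20*V0+w21*V1))
        - ((τ*w10+(1-τ)*w20)^2+(τ*w11+(1-τ)*w21)^2+(V0^2+V1^2))
            /((τ*w10+(1-τ)*w20)*V0+(τ*w11+(1-τ)*w21)*V1) := by
  have hn0 : (0:ℝ) < n := by linarith
  set A : ℝ := V0^2+V1^2 with hAdef
  set d1 : ℝ := w10*V0+w11*V1 with hd1def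
  set d2 : ℝ := w20*V0+w21*V1 with hd2def
  have hApos : 0 < A := lt_of_lt_of_le (by positivity) hA1
  have hd1pos : 0 < d1 := lt_of_lt_of_le (by positivity) hd1
  have hd2pos : 0 < d2 := lt_of_lt_of_le (by positivity) hd2
  have hdenom : (τ*w10+(1-τ)*w20)*V0+(τ*w11+(1-τ)*w21)*V1 = τ*d1+(1-τ)*d2 := by
    rw [hd1def, hd2def]; ring
  rw [hdenom]
  set dt : ℝ := τ*d1+(1-τ)*d2 with hdtdef
  have hdtpos : 0 < dt := by
    rcases eq_or_lt_of_le t0 with h|h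
    · rw [hdtdef, ← h]; simpa using hd2pos
    · rcases eq_or_lt_of_le t1 with h1|h1
      · rw [hdtdef, h1]; simpa using hd1pos
      · have p1 : 0 < τ*d1 := mul_pos h hd1pos
        have p2 : 0 < (1-τ)*d2 := mul_pos (by linarith) hd2pos
        rw [hdtdef]; linarith
  set sqD : ℝ := (w10-w20)^2+(w11-w21)^2 with hsqDdef
  set D : ℝ := (w10-w20)*V0+(w11-w21)*V1 with hDdef
  set T2 : ℝ := (w10-w20)*(-V1)+(w11-w21)*V0 with hT2def
  set q1 : ℝ := w10^2+w11^2 with hq1def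
  set q2 : ℝ := w20^2+w21^2 with hq2def
  set N : ℝ := (d2-d1)*((q1+A)*d2-(q2+A)*d1) + sqD*d1*d2 with hNdef
  have hsqDnn : 0 ≤ sqD := by rw [hsqDdef]; positivity
  -- identities with index 1 and 2
  have hK2 : A*N = A^2*D^2 + ((w20*(-V1)+w21*V0)*D-d2*T2)^2 := by
    rw [hNdef, hAdef, hd1def, hd2def, hDdef, hT2def, hsqDdef, hq1def, hq2def]; ring
  have hK1' : A*N = A^2*D^2 + ((w10*(-V1)+w11*V0)*D-d1*T2)^2 := by
    rw [hNdef, hAdef, hd1def, hd2def, hDdef, hT2def, hsqDdef, hq1def, hq2def]; ring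
  have hNnn : 0 ≤ N := by
    have h0 : 0 ≤ A*N := by rw [hK2]; positivity
    exact (mul_nonneg_iff_of_pos_left hApos).mp h0
  -- eigenvalue bound for an index (d,e,q)
  have heig : ∀ w0 w1 : ℝ, w0^2+w1^2 ≤ n^2 → 0 < w0*V0+w1*V1 →
      A*N = A^2*D^2 + ((w0*(-V1)+w1*V0)*D-(w0*V0+w1*V1)*T2)^2 →
      A*(w0*V0+w1*V1)^2*sqD ≤ N*(A+n^2) := by
    intro w0 w1 hq hd hK
    set d : ℝ := w0*V0+w1*V1 with hddef
    set e : ℝ := w0*(-V1)+w1*V0 with hedef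
    have hlag : d^2+e^2 = A*(w0^2+w1^2) := by rw [hddef, hedef, hAdef]; ring
    have hDT2 : D^2+T2^2 = A*sqD := by rw [hDdef, hT2def, hAdef, hsqDdef]; ring
    have hs := sos_ineq A D T2 d e hd
    have hq' : A^2+d^2+e^2 ≤ A*(A+n^2) := by
      have h1 : d^2+e^2 ≤ A*n^2 := by
        rw [hlag]; exact mul_le_mul_of_nonneg_left hq hApos.le
      have h2 : A*(A+n^2) = A^2+A*n^2 := by ring
      linarith
    have h5 : A^2*d^2*(A*sqD) ≤ (A*N)*(A*(A+n^2)) := by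
      calc A^2*d^2*(A*sqD) = A^2*d^2*(D^2+T2^2) := by rw [hDT2]
        _ ≤ (A^2*D^2+(e*D-d*T2)^2)*(A^2+d^2+e^2) := hs
        _ = (A*N)*(A^2+d^2+e^2) := by rw [hK]
        _ ≤ (A*N)*(A*(A+n^2)) := by
            apply mul_le_mul_of_nonneg_left hq' (by positivity)
    have h6 : A^2*(A*d^2*sqD) ≤ A^2*(N*(A+n^2)) := by linear_combination h5
    exact le_of_mul_le_mul_left h6 (by positivity)
  -- Cauchy-Schwarz bounds
  have hApos' : (0:ℝ) ≤ V0^2+V1^2 := by positivity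
  have hcs1 : d1^2 ≤ n^2*A := by
    rw [hd1def, hAdef]
    nlinarith [sq_nonneg (w10*V1-w11*V0), mul_le_mul_of_nonneg_right hq1 hApos']
  have hcs2 : d2^2 ≤ n^2*A := by
    rw [hd2def, hAdef]
    nlinarith [sq_nonneg (w20*V1-w21*V0), mul_le_mul_of_nonneg_right hq2 hApos']
  -- the (✱) inequality
  have hstar : 2*m^4*(d1*d2*dt)*sqD ≤ N*(n^2+S^2)^3 := by
    have hdprodnn : 0 ≤ d1*d2*dt := by positivity
    rcases le_total d1 d2 with hc|hc
    · refine star_ineq n m S A N sqD _ d2 hn hm0 hmS hA1 hA2 hNnn hsqDnn hd2pos hcs2 ?_ hdprodnn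
        (heig w20 w21 hq2 hd2pos hK2)
      have hdt : dt ≤ d2 := by
        have h := mul_le_mul_of_nonneg_left hc t0
        have e : τ*d2+(1-τ)*d2 = d2 := by ring
        rw [hdtdef]; linarith
      calc d1*d2*dt ≤ d2*d2*dt :=
            mul_le_mul_of_nonneg_right (mul_le_mul_of_nonneg_right hc hd2pos.le) hdtpos.le
        _ ≤ d2*d2*d2 := mul_le_mul_of_nonneg_left hdt (by positivity)
        _ = d2^3 := by ring
    · refine star_ineq n m S A N sqD _ d1 hn hm0 hmS hA1 hA2 hNnn hsqDnn hd1pos hcs1 ?_ hdprodnn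
        (heig w10 w11 hq1 hd1pos hK1')
      have hdt : dt ≤ d1 := by
        have h := mul_le_mul_of_nonneg_left hc (show (0:ℝ) ≤ 1-τ by linarith)
        have e : τ*d1+(1-τ)*d1 = d1 := by ring
        rw [hdtdef]; linarith
      calc d1*d2*dt ≤ d1*d1*dt :=
            mul_le_mul_of_nonneg_right (mul_le_mul_of_nonneg_left hc hd1pos.le) hdtpos.le
        _ ≤ d1*d1*d1 := mul_le_mul_of_nonneg_left hdt (by positivity)
        _ = d1^3 := by ring
  -- convert to fractions
  have hfrac : τ*((q1+A)/d1) + (1-τ)*((q2+A)/d2)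
      - ((τ*w10+(1-τ)*w20)^2+(τ*w11+(1-τ)*w21)^2+A)/dt
      = τ*(1-τ)*(N/(d1*d2*dt)) := by
    rw [hNdef, hdtdef, hsqDdef, hq1def, hq2def]
    have hdt' : τ*d1+(1-τ)*d2 ≠ 0 := hdtpos.ne'
    field_simp [hd1pos.ne', hd2pos.ne', hdt']
    ring
  rw [hfrac]
  have hdiv : 2*m^4/(n^2+S^2)^3*sqD ≤ N/(d1*d2*dt) := by
    rw [div_mul_eq_mul_div, div_le_div_iff₀ (by positivity) (by positivity)]
    calc 2*m^4*sqD*(d1*d2*dt) = 2*m^4*(d1*d2*dt)*sqD := by ring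
      _ ≤ N*(n^2+S^2)^3 := hstar
  calc τ*(1-τ)*(2*m^4/(n^2+S^2)^3)*sqD = τ*(1-τ)*(2*m^4/(n^2+S^2)^3*sqD) := by ring
    _ ≤ τ*(1-τ)*(N/(d1*d2*dt)) := by
        apply mul_le_mul_of_nonneg_left hdiv (mul_nonneg t0 (by linarith))

lemma rpow_gap (p x y : ℝ) (hp : 1 ≤ p) (hx : 1 ≤ x) (hxy : x ≤ y) :
    x^p + (y - x) ≤ y^p := by
  have hx0 : (0:ℝ) < x := by linarith
  have hy0 : (0:ℝ) < y := by linarith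
  set r : ℝ := y/x with hrdef
  have hr1 : 1 ≤ r := (one_le_div hx0).mpr hxy
  have hxr : x * r = y := by rw [hrdef]; field_simp
  have h1 : x ≤ x^p := by
    calc x = x^(1:ℝ) := (Real.rpow_one x).symm
      _ ≤ x^p := Real.rpow_le_rpow_of_exponent_le hx hp
  have h2 : r ≤ r^p := by
    calc r = r^(1:ℝ) := (Real.rpow_one r).symm
      _ ≤ r^p := Real.rpow_le_rpow_of_exponent_le hr1 hp
  have hyp : y^p = x^p * r^p := by
    rw [← Real.mul_rpow hx0.le (by linarith : (0:ℝ) ≤ r), hxr]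
  have hmul : x * (r - 1) ≤ x^p * (r^p - 1) :=
    mul_le_mul h1 (by linarith) (by linarith) (by positivity)
  have hxr1 : x * (r - 1) = y - x := by rw [mul_sub, hxr]; ring
  rw [hyp]; nlinarith [hmul]

lemma key_rpow (p n m S τ : ℝ) (hp : 1 ≤ p)
    (hn : 1 ≤ n) (hm0 : 0 < m) (hmS : m ≤ S)
    (t0 : 0 ≤ τ) (t1 : τ ≤ 1)
    (V0 V1 w10 w11 w20 w21 : ℝ)
    (hA1 : m^2 ≤ V0^2+V1^2) (hA2 : V0^2+V1^2 ≤ S^2)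
    (hd1 : 1/n ≤ w10*V0+w11*V1) (hq1 : w10^2+w11^2 ≤ n^2)
    (hd2 : 1/n ≤ w20*V0+w21*V1) (hq2 : w20^2+w21^2 ≤ n^2) :
    (((τ*w10+(1-τ)*w20)^2+(τ*w11+(1-τ)*w21)^2+(V0^2+V1^2))
        /((τ*w10+(1-τ)*w20)*V0+(τ*w11+(1-τ)*w21)*V1))^p
      ≤ τ*(((w10^2+w11^2+(V0^2+V1^2))/(w10*V0+w11*V1))^p)
        + (1-τ)*(((w20^2+w21^2+(V0^2+V1^2))/(w20*V0+w21*V1))^p)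
        - τ*(1-τ)*(2*m^4/(n^2+S^2)^3)*((w10-w20)^2+(w11-w21)^2) := by
  have hn0 : (0:ℝ) < n := by linarith
  have hcore := key_core n m S τ hn hm0 hmS t0 t1 V0 V1 w10 w11 w20 w21 hA1 hA2 hd1 hq1 hd2 hq2
  set φ1 : ℝ := (w10^2+w11^2+(V0^2+V1^2))/(w10*V0+w11*V1) with hφ1
  set φ2 : ℝ := (w20^2+w21^2+(V0^2+V1^2))/(w20*V0+w21*V1) with hφ2
  set φt : ℝ := ((τ*w10+(1-τ)*w20)^2+(τ*w11+(1-τ)*w21)^2+(V0^2+V1^2))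
      /((τ*w10+(1-τ)*w20)*V0+(τ*w11+(1-τ)*w21)*V1) with hφt
  set K : ℝ := 2*m^4/(n^2+S^2)^3 with hK
  set sqD : ℝ := (w10-w20)^2+(w11-w21)^2 with hsqD
  set δ : ℝ := τ*(1-τ)*K*sqD with hδ
  have hd1pos : 0 < w10*V0+w11*V1 := lt_of_lt_of_le (by positivity) hd1
  have hd2pos : 0 < w20*V0+w21*V1 := lt_of_lt_of_le (by positivity) hd2
  have hKnn : 0 ≤ K := by rw [hK]; positivity
  have hsqDnn : 0 ≤ sqD := by rw [hsqD]; positivity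
  have hδnn : 0 ≤ δ := by rw [hδ]; have : 0 ≤ τ*(1-τ) := mul_nonneg t0 (by linarith);
                          exact mul_nonneg (mul_nonneg this hKnn) hsqDnn
  -- φ1, φ2 ≥ 2
  have hφ1two : 2 ≤ φ1 := by
    rw [hφ1, le_div_iff₀ hd1pos]
    nlinarith [sq_nonneg (w10-V0), sq_nonneg (w11-V1)]
  have hφ2two : 2 ≤ φ2 := by
    rw [hφ2, le_div_iff₀ hd2pos]
    nlinarith [sq_nonneg (w20-V0), sq_nonneg (w21-V1)]
  -- δ ≤ 2/3
  have hδsmall : δ ≤ 2/3 := by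
    have hsqD4 : sqD ≤ 4*n^2 := by rw [hsqD]; nlinarith [sq_nonneg (w10+w20), sq_nonneg (w11+w21)]
    have ht4 : τ*(1-τ) ≤ 1/4 := by nlinarith [sq_nonneg (τ-1/2)]
    have hKn2 : K*(4*n^2) ≤ 8/3 := by
      have hm4 : m^4 ≤ S^4 := pow_le_pow_left₀ hm0.le hmS 4
      have h1 : 3*m^4*n^2 ≤ 3*S^4*n^2 := by
        have := mul_le_mul_of_nonneg_right hm4 (sq_nonneg n); linarith
      have h2 : 3*S^4*n^2 ≤ (n^2+S^2)^3 := by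
        have e : (n^2+S^2)^3 = n^6 + 3*n^4*S^2 + 3*n^2*S^4 + S^6 := by ring
        have p1 : (0:ℝ) ≤ n^6 := by positivity
        have p2 : (0:ℝ) ≤ n^4*S^2 := by positivity
        have p3 : (0:ℝ) ≤ S^6 := by positivity
        linarith
      rw [hK, div_mul_eq_mul_div, div_le_iff₀ (by positivity)]
      linarith
    have h1 : K*sqD ≤ K*(4*n^2) := mul_le_mul_of_nonneg_left hsqD4 hKnn
    have h2 : δ = (τ*(1-τ))*(K*sqD) := by rw [hδ]; ring
    have h3 : (τ*(1-τ))*(K*sqD) ≤ (1/4)*(8/3) := by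
      apply mul_le_mul ht4 (le_trans h1 hKn2) (mul_nonneg hKnn hsqDnn) (by norm_num)
    rw [h2]; linarith
  -- s := τφ1+(1-τ)φ2
  have hs2 : 2 ≤ τ*φ1+(1-τ)*φ2 := by
    have := mul_le_mul_of_nonneg_left hφ1two t0
    have := mul_le_mul_of_nonneg_left hφ2two (show (0:ℝ) ≤ 1-τ by linarith)
    linarith
  have hφtnn : 0 ≤ φt := by
    rw [hφt]
    apply div_nonneg (by positivity)
    have : (τ*w10+(1-τ)*w20)*V0+(τ*w11+(1-τ)*w21)*V1 = τ*(w10*V0+w11*V1)+(1-τ)*(w20*V0+w21*V1) := by ring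
    rw [this]
    exact add_nonneg (mul_nonneg t0 hd1pos.le) (mul_nonneg (by linarith) hd2pos.le)
  have hφtle : φt ≤ (τ*φ1+(1-τ)*φ2) - δ := by
    have : δ ≤ τ*φ1+(1-τ)*φ2 - φt := by rw [hδ]; exact hcore
    linarith
  have hp0 : 0 ≤ p := by linarith
  have step1 : φt^p ≤ ((τ*φ1+(1-τ)*φ2) - δ)^p := Real.rpow_le_rpow hφtnn hφtle hp0
  have step2 : ((τ*φ1+(1-τ)*φ2) - δ)^p + δ ≤ (τ*φ1+(1-τ)*φ2)^p := by
    have := rpow_gap p ((τ*φ1+(1-τ)*φ2) - δ) (τ*φ1+(1-τ)*φ2) hp (by linarith) (by linarith)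
    linarith
  have step3 : (τ*φ1+(1-τ)*φ2)^p ≤ τ*φ1^p+(1-τ)*φ2^p := by
    have hconv := convexOn_rpow hp
    have := hconv.2 (Set.mem_Ici.mpr (by linarith : (0:ℝ) ≤ φ1))
      (Set.mem_Ici.mpr (by linarith : (0:ℝ) ≤ φ2)) t0 (by linarith : (0:ℝ) ≤ 1-τ) (by ring)
    simpa [smul_eq_mul] using this
  have : δ = τ*(1-τ)*K*sqD := hδ
  linarith [step1, step2, step3]

lemma key_vec (p n m S τ : ℝ) (hp : 1 ≤ p)
    (hn : 1 ≤ n) (hm0 : 0 < m) (hmS : m ≤ S)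
    (t0 : 0 ≤ τ) (t1 : τ ≤ 1)
    (Vx w1 w2 : Fin 2 → ℝ)
    (hA1 : m^2 ≤ sqv Vx) (hA2 : sqv Vx ≤ S^2)
    (hd1 : 1/n ≤ dotv w1 Vx) (hq1 : sqv w1 ≤ n^2)
    (hd2 : 1/n ≤ dotv w2 Vx) (hq2 : sqv w2 ≤ n^2) :
    ((sqv (fun j => τ*w1 j+(1-τ)*w2 j) + sqv Vx)/dotv (fun j => τ*w1 j+(1-τ)*w2 j) Vx)^p
      ≤ τ*(((sqv w1 + sqv Vx)/dotv w1 Vx)^p)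
        + (1-τ)*(((sqv w2 + sqv Vx)/dotv w2 Vx)^p)
        - τ*(1-τ)*(2*m^4/(n^2+S^2)^3)*sqv (fun j => w1 j - w2 j) := by
  simp only [sqv, dotv] at *
  exact key_rpow p n m S τ hp hn hm0 hmS t0 t1 (Vx 0) (Vx 1) (w1 0) (w1 1) (w2 0) (w2 1)
    hA1 hA2 hd1 hq1 hd2 hq2


/-- strong convexity of the anisotropy energy `F_p` on the set of C¹
functions `u` on the closed annulus with `Du·V ≥ 1/n` and `|Du| ≤ n`: for two such
functions `u, v` and `τ ∈ [0,1]`,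
`F_p(τu + (1-τ)v) ≤ τ F_p(u) + (1-τ) F_p(v) - τ(1-τ) K ∫_A |D(u-v)|² dx`,
with `K = 2(inf|V|)⁴/(n² + (sup|V|)²)³ > 0`. -/
theorem statement16 (ε p n τ : ℝ) (hε : 0 < ε) (hε2 : ε < 1/2)
    (hp : 1 ≤ p) (hn : 1 ≤ n) (hτ : τ ∈ Set.Icc (0:ℝ) 1)
    (V : E2 → Fin 2 → ℝ) (u v : E2 → ℝ)
    (hVc : ContinuousOn V (annC ε))
    (m S : ℝ)
    (hm : m = sInf ((fun x => vnorm (V x)) '' annC ε))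
    (hS : S = sSup ((fun x => vnorm (V x)) '' annC ε))
    (hm0 : 0 < m)
    (hu : ∀ x ∈ annC ε, DifferentiableAt ℝ u x)
    (hv : ∀ x ∈ annC ε, DifferentiableAt ℝ v x)
    (huc : ContinuousOn (gradV u) (annC ε))
    (hvc : ContinuousOn (gradV v) (annC ε))
    (hucon : ∀ x ∈ annC ε, 1/n ≤ dotv (gradV u x) (V x) ∧ vnorm (gradV u x) ≤ n)
    (hvcon : ∀ x ∈ annC ε, 1/n ≤ dotv (gradV v x) (V x) ∧ vnorm (gradV v x) ≤ n) :
    0 < 2*m^4/(n^2 + S^2)^3 ∧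
    Fp ε p V (fun x => τ * u x + (1 - τ) * v x) ≤
      τ * Fp ε p V u + (1 - τ) * Fp ε p V v -
        τ * (1 - τ) * (2*m^4/(n^2 + S^2)^3) *
          ∫ x in annO ε, sqv (fun j => gradV u x j - gradV v x j) := by
  have hn0 : (0:ℝ) < n := lt_of_lt_of_le one_pos hn
  -- basic set facts
  have hsub : annO ε ⊆ annC ε := fun x hx => ⟨hx.1.le, hx.2.le⟩
  have hACclosed : IsClosed (annC ε) := by
    have h1 : IsClosed {x : E2 | ε ≤ ‖x‖} := isClosed_le continuous_const continuous_norm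
    have h2 : IsClosed {x : E2 | ‖x‖ ≤ 1} := isClosed_le continuous_norm continuous_const
    exact (h1.inter h2 : IsClosed ({x : E2 | ε ≤ ‖x‖} ∩ {x : E2 | ‖x‖ ≤ 1}))
  have hACcomp : IsCompact (annC ε) :=
    (isCompact_closedBall (0:E2) 1).of_isClosed_subset hACclosed
      (fun x hx => mem_closedBall_zero_iff.mpr hx.2)
  have hAOmeas : MeasurableSet (annO ε) := by
    have h1 : IsOpen {x : E2 | ε < ‖x‖} := isOpen_lt continuous_const continuous_norm
    have h2 : IsOpen {x : E2 | ‖x‖ < 1} := isOpen_lt continuous_norm continuous_const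
    exact (h1.inter h2).measurableSet
  -- nonempty
  have hx0mem : (EuclideanSpace.single (0 : Fin 2) (1:ℝ)) ∈ annC ε := by
    constructor <;> rw [EuclideanSpace.norm_single] <;> norm_num
    linarith
  -- vnorm ∘ V continuous on annC
  have hvnc : Continuous vnorm := by
    unfold vnorm
    exact Real.continuous_sqrt.comp (((continuous_apply 0).pow 2).add ((continuous_apply 1).pow 2))
  have hvVc : ContinuousOn (fun x => vnorm (V x)) (annC ε) := hvnc.comp_continuousOn hVc
  have himg : IsCompact ((fun x => vnorm (V x)) '' annC ε) := hACcomp.image_of_continuousOn hvVc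
  have hmle : ∀ x ∈ annC ε, m ≤ vnorm (V x) := by
    intro x hx
    rw [hm]
    exact csInf_le himg.bddBelow ⟨x, hx, rfl⟩
  have hSle : ∀ x ∈ annC ε, vnorm (V x) ≤ S := by
    intro x hx
    rw [hS]
    exact le_csSup himg.bddAbove ⟨x, hx, rfl⟩
  have hmS : m ≤ S := (hmle _ hx0mem).trans (hSle _ hx0mem)
  have hKpos : 0 < 2*m^4/(n^2 + S^2)^3 := by
    have h1 : (0:ℝ) < n^2 := pow_pos hn0 2
    have h2 : (0:ℝ) < n^2 + S^2 := by nlinarith [sq_nonneg S]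
    have h3 : (0:ℝ) < m^4 := pow_pos hm0 4
    exact div_pos (by linarith) (pow_pos h2 3)
  refine ⟨hKpos, ?_⟩
  -- sqv bounds from vnorm bounds
  have sqv_nonneg : ∀ w : Fin 2 → ℝ, 0 ≤ sqv w := fun w => by
    simp only [sqv]; positivity
  have hvnorm_sq : ∀ w : Fin 2 → ℝ, sqv w = (vnorm w)^2 := fun w => by
    simp only [vnorm]
    rw [Real.sq_sqrt (by positivity : (0:ℝ) ≤ w 0 ^ 2 + w 1 ^ 2)]
    rfl
  have hA1 : ∀ x ∈ annC ε, m^2 ≤ sqv (V x) := by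
    intro x hx
    rw [hvnorm_sq]
    exact pow_le_pow_left₀ hm0.le (hmle x hx) 2
  have hA2 : ∀ x ∈ annC ε, sqv (V x) ≤ S^2 := by
    intro x hx
    rw [hvnorm_sq]
    exact pow_le_pow_left₀ (Real.sqrt_nonneg _) (hSle x hx) 2
  have hq1 : ∀ x ∈ annC ε, sqv (gradV u x) ≤ n^2 := by
    intro x hx
    rw [hvnorm_sq]
    exact pow_le_pow_left₀ (Real.sqrt_nonneg _) ((hucon x hx).2) 2
  have hq2 : ∀ x ∈ annC ε, sqv (gradV v x) ≤ n^2 := by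
    intro x hx
    rw [hvnorm_sq]
    exact pow_le_pow_left₀ (Real.sqrt_nonneg _) ((hvcon x hx).2) 2
  -- gradient of convex combination
  have hgrad : ∀ x ∈ annC ε,
      gradV (fun y => τ * u y + (1 - τ) * v y) x = fun j => τ * gradV u x j + (1-τ) * gradV v x j := by
    intro x hx
    funext j
    have h1 : DifferentiableAt ℝ (fun y => τ * u y) x := (hu x hx).const_mul τ
    have h2 : DifferentiableAt ℝ (fun y => (1-τ) * v y) x := (hv x hx).const_mul (1-τ)
    simp only [gradV]
    rw [fderiv_fun_add h1 h2, fderiv_const_mul (hu x hx) τ, fderiv_const_mul (hv x hx) (1-τ)]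
    simp
  -- shorthand for integrands
  set K : ℝ := 2*m^4/(n^2 + S^2)^3 with hK
  set fu : E2 → ℝ := fun x => ((sqv (gradV u x) + sqv (V x)) / dotv (gradV u x) (V x)) ^ p with hfu
  set fv : E2 → ℝ := fun x => ((sqv (gradV v x) + sqv (V x)) / dotv (gradV v x) (V x)) ^ p with hfv
  set ft : E2 → ℝ := fun x => ((sqv (gradV (fun y => τ * u y + (1 - τ) * v y) x) + sqv (V x))
      / dotv (gradV (fun y => τ * u y + (1 - τ) * v y) x) (V x)) ^ p with hft
  set g : E2 → ℝ := fun x => sqv (fun j => gradV u x j - gradV v x j) with hg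
  -- pointwise inequality on annC
  have hpt : ∀ x ∈ annC ε, ft x ≤ τ * fu x + (1-τ) * fv x - τ*(1-τ)*K*g x := by
    intro x hx
    have hgx := hgrad x hx
    rw [hft, hfu, hfv, hg, hK]
    simp only [hgx]
    exact key_vec p n m S τ hp hn hm0 hmS hτ.1 hτ.2 (V x) (gradV u x) (gradV v x)
      (hA1 x hx) (hA2 x hx) ((hucon x hx).1) (hq1 x hx) ((hvcon x hx).1) (hq2 x hx)
  -- continuity of the integrands on annC
  have hcont_sqv : Continuous sqv :=
    ((continuous_apply (0 : Fin 2)).pow 2).add ((continuous_apply (1 : Fin 2)).pow 2)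
  have hdotc : ∀ (w : E2 → Fin 2 → ℝ), ContinuousOn w (annC ε) →
      ContinuousOn (fun x => dotv (w x) (V x)) (annC ε) := by
    intro w hw
    simp only [dotv]
    exact (((continuous_apply (0:Fin 2)).comp_continuousOn hw).mul
      ((continuous_apply (0:Fin 2)).comp_continuousOn hVc)).add
      (((continuous_apply (1:Fin 2)).comp_continuousOn hw).mul
      ((continuous_apply (1:Fin 2)).comp_continuousOn hVc))
  have hquotc : ∀ (w : E2 → Fin 2 → ℝ), ContinuousOn w (annC ε) →
      (∀ x ∈ annC ε, 1/n ≤ dotv (w x) (V x)) →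
      ContinuousOn (fun x => ((sqv (w x) + sqv (V x)) / dotv (w x) (V x)) ^ p) (annC ε) := by
    intro w hw hlow
    apply ContinuousOn.rpow_const
    · apply ContinuousOn.div
      · exact (hcont_sqv.comp_continuousOn hw).add (hcont_sqv.comp_continuousOn hVc)
      · exact hdotc w hw
      · intro x hx
        have : (0:ℝ) < 1/n := by positivity
        exact ne_of_gt (lt_of_lt_of_le this (hlow x hx))
    · intro x _
      right; linarith
  have hfuc : ContinuousOn fu (annC ε) := hquotc _ huc (fun x hx => (hucon x hx).1)
  have hfvc : ContinuousOn fv (annC ε) := hquotc _ hvc (fun x hx => (hvcon x hx).1)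
  have hcombc : ContinuousOn (fun x => fun j => τ * gradV u x j + (1-τ) * gradV v x j) (annC ε) := by
    apply continuousOn_pi.mpr
    intro j
    exact (((continuous_apply j).comp_continuousOn huc).const_smul τ).add
      (((continuous_apply j).comp_continuousOn hvc).const_smul (1-τ))
  have hftc : ContinuousOn ft (annC ε) := by
    have hcont' : ContinuousOn (fun x => ((sqv ((fun j => τ * gradV u x j + (1-τ) * gradV v x j)) + sqv (V x))
        / dotv (fun j => τ * gradV u x j + (1-τ) * gradV v x j) (V x)) ^ p) (annC ε) := by
      apply hquotc _ hcombc
      intro x hx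
      have : dotv (fun j => τ * gradV u x j + (1-τ) * gradV v x j) (V x)
          = τ * dotv (gradV u x) (V x) + (1-τ) * dotv (gradV v x) (V x) := by
        simp only [dotv]; ring
      rw [this]
      have h1 := (hucon x hx).1
      have h2 := (hvcon x hx).1
      have e : τ * (1/n) + (1-τ) * (1/n) = 1/n := by ring
      have := add_le_add (mul_le_mul_of_nonneg_left h1 hτ.1)
        (mul_le_mul_of_nonneg_left h2 (by linarith [hτ.2] : (0:ℝ) ≤ 1-τ))
      linarith
    apply hcont'.congr
    intro x hx
    rw [hft]
    simp only [hgrad x hx]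
  have hgc : ContinuousOn g (annC ε) := by
    rw [hg]
    have : ContinuousOn (fun x => fun j => gradV u x j - gradV v x j) (annC ε) := by
      apply continuousOn_pi.mpr
      intro j
      exact ((continuous_apply j).comp_continuousOn huc).sub
        ((continuous_apply j).comp_continuousOn hvc)
    exact hcont_sqv.comp_continuousOn this
  -- integrability on annO
  have int_fu : IntegrableOn fu (annO ε) := (hfuc.integrableOn_compact hACcomp).mono_set hsub
  have int_fv : IntegrableOn fv (annO ε) := (hfvc.integrableOn_compact hACcomp).mono_set hsub
  have int_ft : IntegrableOn ft (annO ε) := (hftc.integrableOn_compact hACcomp).mono_set hsub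
  have int_g : IntegrableOn g (annO ε) := (hgc.integrableOn_compact hACcomp).mono_set hsub
  -- assemble
  have int_rhs1 : IntegrableOn (fun x => τ * fu x + (1-τ) * fv x) (annO ε) :=
    (int_fu.const_mul τ).add (int_fv.const_mul (1-τ))
  have int_rhs2 : IntegrableOn (fun x => τ*(1-τ)*K * g x) (annO ε) := int_g.const_mul _
  have int_rhs : IntegrableOn (fun x => τ * fu x + (1-τ) * fv x - τ*(1-τ)*K * g x) (annO ε) :=
    int_rhs1.sub int_rhs2
  have hmono : ∫ x in annO ε, ft x ≤ ∫ x in annO ε, (τ * fu x + (1-τ) * fv x - τ*(1-τ)*K * g x) := by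
    apply setIntegral_mono_on int_ft int_rhs hAOmeas
    intro x hx
    have := hpt x (hsub hx)
    linarith
  have hsplit : ∫ x in annO ε, (τ * fu x + (1-τ) * fv x - τ*(1-τ)*K * g x)
      = τ * (∫ x in annO ε, fu x) + (1-τ) * (∫ x in annO ε, fv x)
        - τ*(1-τ)*K * (∫ x in annO ε, g x) := by
    rw [integral_sub int_rhs1 int_rhs2, integral_add (int_fu.const_mul τ) (int_fv.const_mul (1-τ)),
      integral_const_mul, integral_const_mul, integral_const_mul]
  have hFp : Fp ε p V (fun x => τ * u x + (1 - τ) * v x) = ∫ x in annO ε, ft x := rfl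
  have hFpu : Fp ε p V u = ∫ x in annO ε, fu x := rfl
  have hFpv : Fp ε p V v = ∫ x in annO ε, fv x := rfl
  rw [hFp, hFpu, hFpv]
  exact hmono.trans (le_of_eq hsplit)
end
end
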